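/- arXiv:math/0611030 — 5 statements merged into one kernel-verified Lean document; each statement's English description precedes it below -/
import Mathlib

section
/- Hook-content formula: For any partition λ and positive integer N, the number of semistandard Young tableaux of shape λ with entries in {1, …, N} equals the product over all boxes b of λ of (N + c(b)) / h_b, where for a box b in row i and column j, the content is c(b) = j − i and h_b is the hook-length of b. -/
/-- The hook-length of the box `c = (i, j)` of the Young diagram `μ`: the number of
boxes directly to the right of or directly below `c`, counting `c` itself once. -/
def hookLength (μ : YoungDiagram) (c : ℕ × ℕ) : ℕ :=
  (μ.rowLen c.1 - c.2) + (μ.colLen c.2 - c.1) - 1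

/-- A semistandard Young tableau of shape `μ` with entries in `{1, …, N}`:
entries weakly increase along each row and strictly increase down each column. -/
structure SSYTBounded (μ : YoungDiagram) (N : ℕ) where
  entry : ℕ → ℕ → ℕ
  zeros : ∀ {i j : ℕ}, (i, j) ∉ μ → entry i j = 0
  bounded : ∀ {i j : ℕ}, (i, j) ∈ μ → 1 ≤ entry i j ∧ entry i j ≤ N
  row_weak : ∀ {i j1 j2 : ℕ}, j1 ≤ j2 → (i, j2) ∈ μ → entry i j1 ≤ entry i j2
  col_strict : ∀ {i1 i2 j : ℕ}, i1 < i2 → (i2, j) ∈ μ → entry i1 j < entry i2 j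

namespace HCF

theorem ssyt_ext {μ : YoungDiagram} {N : ℕ} {T1 T2 : SSYTBounded μ N}
    (h : ∀ i j, T1.entry i j = T2.entry i j) : T1 = T2 := by
  cases T1; cases T2
  simp only [SSYTBounded.mk.injEq]
  funext i j; exact h i j

instance ssytFinite (μ : YoungDiagram) (N : ℕ) : Finite (SSYTBounded μ N) := by
  have : Function.Injective (fun (T : SSYTBounded μ N) => (fun c : μ.cells => T.entry c.1.1 c.1.2)) := by
    intro T1 T2 h
    apply ssyt_ext
    intro i j
    by_cases hm : (i, j) ∈ μ
    · exact congrFun h ⟨(i,j), (YoungDiagram.mem_cells _).2 hm⟩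
    · rw [T1.zeros hm, T2.zeros hm]
  have h2 : Function.Injective (fun (T : SSYTBounded μ N) => (fun c : μ.cells => (⟨T.entry c.1.1 c.1.2, Nat.lt_succ_of_le (T.bounded ((YoungDiagram.mem_cells _).1 c.2)).2⟩ : Fin (N+1)))) := by
    intro T1 T2 h
    apply this
    funext c
    exact congrArg Fin.val (congrFun h c)
  exact Finite.of_injective _ h2

theorem entry_lower_bound {μ : YoungDiagram} {N : ℕ} (T : SSYTBounded μ N) :
    ∀ i j, (i, j) ∈ μ → i + 1 ≤ T.entry i j := by
  intro i
  induction i with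
  | zero => intro j hm; exact (T.bounded hm).1
  | succ i ih =>
    intro j hm
    have hup : (i, j) ∈ μ := μ.up_left_mem (Nat.le_succ i) le_rfl hm
    have h1 : T.entry i j < T.entry (i+1) j := T.col_strict (Nat.lt_succ_self i) hm
    have h2 := ih j hup
    show i + 1 + 1 ≤ T.entry (i+1) j
    omega

theorem card_empty_of_many_rows {μ : YoungDiagram} {N : ℕ} (h : N < μ.colLen 0) :
    Nat.card (SSYTBounded μ N) = 0 := by
  have : IsEmpty (SSYTBounded μ N) := by
    constructor
    intro T
    have hm : (N, 0) ∈ μ := YoungDiagram.mem_iff_lt_colLen.2 h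
    have h1 := entry_lower_bound T N 0 hm
    have h2 := (T.bounded hm).2
    omega
  exact Nat.card_of_isEmpty

theorem card_N_zero {μ : YoungDiagram} (h : μ.colLen 0 = 0) :
    Nat.card (SSYTBounded μ 0) = 1 := by
  have hempty : ∀ c : ℕ × ℕ, c ∉ μ := by
    rintro ⟨i, j⟩ hm
    have : (i, 0) ∈ μ := μ.up_left_mem le_rfl (Nat.zero_le j) hm
    have := YoungDiagram.mem_iff_lt_colLen.1 this
    omega
  have : Unique (SSYTBounded μ 0) := by
    refine ⟨⟨⟨fun _ _ => 0, fun _ => rfl, ?_, ?_, ?_⟩⟩, ?_⟩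
    · intro i j hm; exact absurd hm (hempty _)
    · intro i j1 j2 _ hm; exact absurd hm (hempty _)
    · intro i1 i2 j _ hm; exact absurd hm (hempty _)
    · intro T; apply ssyt_ext; intro i j
      exact (T.zeros (hempty _)).symm ▸ rfl
  exact Nat.card_unique
end HCF

namespace HCF
open Polynomial Finset Matrix

/-- The Bernoulli sum polynomial, monic of degree `p+1`. -/
noncomputable def S (p : ℕ) : ℚ[X] :=
  ∑ i ∈ range (p + 1), C ((_root_.bernoulli i) * ((p + 1).choose i)) * X ^ (p + 1 - i)

/-- The Faulhaber polynomial: `(Q p).eval n = ∑ k < n, k^p`. -/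
noncomputable def Q (p : ℕ) : ℚ[X] := C (((p : ℚ) + 1)⁻¹) * S p

theorem natDegree_S_le (p : ℕ) : (S p).natDegree ≤ p + 1 := by
  rw [S]
  apply Polynomial.natDegree_sum_le_of_forall_le
  intro i hi
  apply le_trans (Polynomial.natDegree_C_mul_le _ _)
  simpa using Nat.sub_le _ _

theorem coeff_S (p : ℕ) : (S p).coeff (p + 1) = 1 := by
  rw [S, Polynomial.finset_sum_coeff]
  rw [Finset.sum_eq_single 0]
  · simp
  · intro i hi hne
    rw [Polynomial.coeff_C_mul, Polynomial.coeff_X_pow, if_neg, mul_zero]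
    simp only [mem_range] at hi
    omega
  · simp
theorem monic_S (p : ℕ) : (S p).Monic := by
  have h1 : (S p).coeff (p+1) = 1 := coeff_S p
  have h2 : (S p).natDegree ≤ p + 1 := natDegree_S_le p
  exact Polynomial.monic_of_natDegree_le_of_coeff_eq_one _ h2 h1

theorem natDegree_S (p : ℕ) : (S p).natDegree = p + 1 := by
  refine le_antisymm (natDegree_S_le p) ?_
  by_contra h
  have := Polynomial.coeff_eq_zero_of_natDegree_lt (by omega : (S p).natDegree < p + 1)
  rw [coeff_S p] at this
  norm_num at this

theorem eval_Q (p m : ℕ) : (Q p).eval (m : ℚ) = ∑ k ∈ range m, (k : ℚ) ^ p := by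
  rw [sum_range_pow]
  rw [Q, Polynomial.eval_mul, Polynomial.eval_C, S, Polynomial.eval_finset_sum]
  rw [Finset.mul_sum]
  apply Finset.sum_congr rfl
  intro i _
  rw [Polynomial.eval_mul, Polynomial.eval_C, Polynomial.eval_pow, Polynomial.eval_X]
  field_simp

theorem sum_Ico_pow (p a b : ℕ) (h : a ≤ b) :
    ∑ k ∈ Ico a b, (k : ℚ) ^ p = (Q p).eval (b : ℚ) - (Q p).eval (a : ℚ) := by
  rw [eval_Q, eval_Q, Finset.sum_Ico_eq_sub _ h]

/-- columns of the scaled matrix -/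
noncomputable def Qf (n : ℕ) : Fin (n + 1) → ℚ[X] := Fin.cases 1 (fun j : Fin n => Q j)

/-- monic columns -/
noncomputable def Pf (n : ℕ) : Fin (n + 1) → ℚ[X] := Fin.cases 1 (fun j : Fin n => S j)

theorem Pf_deg (n : ℕ) (i : Fin (n + 1)) : (Pf n i).natDegree = i := by
  induction i using Fin.cases with
  | zero => simp [Pf]
  | succ j => simp [Pf, natDegree_S]

theorem Pf_monic (n : ℕ) (i : Fin (n + 1)) : (Pf n i).Monic := by
  induction i using Fin.cases with
  | zero => simpa [Pf] using monic_one
  | succ j => simpa [Pf] using monic_S j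

/-- scaling factors -/
def cf (n : ℕ) : Fin (n + 1) → ℚ := Fin.cases 1 (fun j : Fin n => ((j : ℕ) : ℚ) + 1)

theorem prod_cf (n : ℕ) : ∏ j, cf n j = (Nat.factorial n : ℚ) := by
  rw [Fin.prod_univ_succ]
  simp only [cf, Fin.cases_zero, Fin.cases_succ, one_mul]
  rw [Fin.prod_univ_eq_prod_range (fun j => ((j:ℕ) : ℚ) + 1)]
  norm_cast
  exact Finset.prod_range_add_one_eq_factorial n

theorem Pf_eq_cf_mul_Qf (n : ℕ) (i : Fin (n + 1)) : Pf n i = C (cf n i) * Qf n i := by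
  induction i using Fin.cases with
  | zero => simp [Pf, Qf, cf]
  | succ j =>
    simp only [Pf, Qf, cf, Fin.cases_succ, Q, ← mul_assoc, ← Polynomial.C_mul]
    rw [mul_inv_cancel₀ (by positivity : (j : ℚ) + 1 ≠ 0), Polynomial.C_1, one_mul]

end HCF

namespace HCF
open Polynomial Finset Matrix

variable {n : ℕ}

noncomputable def Bmat (n : ℕ) (l : Fin (n+1) → ℕ) : Matrix (Fin (n+1)) (Fin (n+1)) ℚ :=
  of fun i j => (Qf n j).eval ((l i : ℚ))

theorem det_vandermonde_eq_Bmat (l : Fin (n+1) → ℕ) :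
    (Matrix.vandermonde fun i : Fin (n+1) => ((l i : ℕ) : ℚ)).det
      = (Nat.factorial n : ℚ) * (Bmat n l).det := by
  rw [Matrix.det_eval_matrixOfPolynomials_eq_det_vandermonde _ (Pf n) (Pf_deg n) (Pf_monic n)]
  have h1 : (Matrix.of fun i j => (Pf n j).eval ((l i : ℚ)))
      = Matrix.of fun i j => (cf n j) * (Bmat n l) i j := by
    ext i j
    rw [Matrix.of_apply, Matrix.of_apply, Pf_eq_cf_mul_Qf, Polynomial.eval_mul,
      Polynomial.eval_C, Bmat, Matrix.of_apply]
  rw [h1, Matrix.det_mul_row, prod_cf]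

def rsucc (n : ℕ) (i : Fin (n+1)) : Fin (n+1) :=
  if h : (i : ℕ) < n then ⟨i + 1, by omega⟩ else i

noncomputable def gmat (n : ℕ) (l : Fin (n+1) → ℕ) (k : ℕ) : Matrix (Fin (n+1)) (Fin (n+1)) ℚ :=
  of fun i j => if (i : ℕ) < k then Bmat n l i j - Bmat n l (rsucc n i) j else Bmat n l i j

theorem det_gmat (l : Fin (n+1) → ℕ) : ∀ k, k ≤ n → (gmat n l k).det = (Bmat n l).det := by
  intro k
  induction k with
  | zero =>
    intro _
    have h : gmat n l 0 = Bmat n l := by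
      ext i j
      simp [gmat]
    rw [h]
  | succ k ih =>
    intro hk
    have hkn : k < n := hk
    set ik : Fin (n+1) := ⟨k, by omega⟩ with hik
    have hne : ik ≠ rsucc n ik := by
      rw [rsucc, dif_pos (by simpa [hik] using hkn)]
      intro h
      have := congrArg Fin.val h
      simp [hik] at this
    have heq : gmat n l (k+1)
        = Matrix.updateRow (gmat n l k) ik ((gmat n l k) ik + (-1 : ℚ) • (gmat n l k) (rsucc n ik)) := by
      ext i j
      rw [Matrix.updateRow_apply]
      by_cases hi : i = ik
      · subst hi
        simp only [if_pos rfl, Pi.add_apply, Pi.smul_apply, smul_eq_mul, neg_one_mul]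
        have h1 : ¬ ((ik : ℕ) < k) := by simp [hik]
        have h2 : ¬ ((rsucc n ik : ℕ) < k) := by
          rw [rsucc, dif_pos (by simpa [hik] using hkn)]
          simp [hik]
        have h3 : ((ik : Fin (n+1)) : ℕ) < k + 1 := by simp [hik]
        simp only [gmat, Matrix.of_apply, if_neg h1, if_neg h2, h3, if_true, sub_eq_add_neg]
      · rw [if_neg hi]
        have hvne : (i : ℕ) ≠ k := by
          intro h; exact hi (Fin.ext (by simpa [hik] using h))
        simp only [gmat, Matrix.of_apply]
        by_cases hlt : (i : ℕ) < k
        · rw [if_pos hlt, if_pos (by omega)]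
        · rw [if_neg hlt, if_neg (by omega)]
    rw [heq, Matrix.det_updateRow_add_smul_self _ hne, ih (by omega)]

noncomputable def Mmat (n : ℕ) (l : Fin (n+1) → ℕ) : Matrix (Fin n) (Fin n) ℚ :=
  of fun i j => (Q j).eval ((l i.castSucc : ℚ)) - (Q j).eval ((l i.succ : ℚ))

theorem Bmat_col_zero (l : Fin (n+1) → ℕ) (i : Fin (n+1)) : Bmat n l i 0 = 1 := by
  rw [Bmat, Matrix.of_apply]
  have h : Qf n 0 = 1 := by simp [Qf]
  rw [h, Polynomial.eval_one]

theorem det_gn (l : Fin (n+1) → ℕ) : (gmat n l n).det = (-1)^n * (Mmat n l).det := by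
  have hsub : (gmat n l n).submatrix (Fin.last n).succAbove Fin.succ = Mmat n l := by
    ext i j
    rw [Matrix.submatrix_apply, Fin.succAbove_last_apply]
    have hcs : ((Fin.castSucc i : Fin (n+1)) : ℕ) < n := by simpa using i.isLt
    have hrs : rsucc n (Fin.castSucc i) = Fin.succ i := by
      rw [rsucc, dif_pos hcs]
      apply Fin.ext
      simp
    have hq : ∀ m : Fin (n+1), Bmat n l m (Fin.succ j) = (Q j).eval ((l m : ℚ)) := by
      intro m
      rw [Bmat, Matrix.of_apply]
      simp [Qf]
    simp only [gmat, Matrix.of_apply, if_pos hcs, hrs, hq, Mmat]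
  rw [Matrix.det_succ_column_zero]
  rw [Finset.sum_eq_single (Fin.last n)]
  · have hval : ¬ ((Fin.last n : Fin (n+1)) : ℕ) < n := by simp
    have h0 : (gmat n l n) (Fin.last n) 0 = 1 := by
      simp only [gmat, Matrix.of_apply, if_neg hval]
      exact Bmat_col_zero l _
    rw [h0, hsub, Fin.val_last, mul_one]
  · intro i _ hi
    have hval : (i : ℕ) < n := by
      rcases Fin.lt_or_eq_of_le (Fin.le_last i) with h | h
      · exact h
      · exact absurd h hi
    have h0 : (gmat n l n) i 0 = 0 := by
      simp only [gmat, Matrix.of_apply, if_pos hval]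
      rw [Bmat_col_zero, Bmat_col_zero, sub_self]
    rw [h0, mul_zero, zero_mul]
  · intro h
    exact absurd (Finset.mem_univ _) h

theorem det_Mmat (l : Fin (n+1) → ℕ) (hl : ∀ i : Fin n, l i.succ ≤ l i.castSucc) :
    (Mmat n l).det
      = ∑ r ∈ Fintype.piFinset (fun i : Fin n => Finset.Ico (l i.succ) (l i.castSucc)),
          (Matrix.vandermonde fun i : Fin n => ((r i : ℕ) : ℚ)).det := by
  set F := (Matrix.detRowAlternating :
      (Fin n → ℚ) [⋀^Fin n]→ₗ[ℚ] ℚ).toMultilinearMap with hF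
  have key := F.map_sum_finset
    (g := fun (i : Fin n) (x : ℕ) => fun j : Fin n => (x : ℚ) ^ (j : ℕ))
    (A := fun i => Finset.Ico (l i.succ) (l i.castSucc))
  have h1 : (Mmat n l) = fun i => ∑ x ∈ Finset.Ico (l i.succ) (l i.castSucc),
      (fun j : Fin n => (x : ℚ) ^ (j : ℕ)) := by
    funext i j
    rw [Finset.sum_apply]
    rw [show (Mmat n l) i j = (Q j).eval ((l i.castSucc : ℚ)) - (Q j).eval ((l i.succ : ℚ)) from rfl]
    rw [← sum_Ico_pow _ _ _ (hl i)]
  calc (Mmat n l).det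
      = F (Mmat n l) := rfl
    _ = F (fun i => ∑ x ∈ Finset.Ico (l i.succ) (l i.castSucc),
          (fun j : Fin n => (x : ℚ) ^ (j : ℕ))) := by rw [h1]
    _ = ∑ r ∈ Fintype.piFinset (fun i : Fin n => Finset.Ico (l i.succ) (l i.castSucc)),
          F (fun i => fun j : Fin n => ((r i : ℕ) : ℚ) ^ (j : ℕ)) := key
    _ = _ := by
        apply Finset.sum_congr rfl
        intro r _
        rfl

theorem vandermonde_sum (n : ℕ) (l : Fin (n+1) → ℕ) (hl : ∀ i : Fin n, l i.succ ≤ l i.castSucc) :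
    (Nat.factorial n : ℚ) *
        ∑ r ∈ Fintype.piFinset (fun i : Fin n => Finset.Ico (l i.succ) (l i.castSucc)),
          (Matrix.vandermonde fun i : Fin n => ((r i : ℕ) : ℚ)).det
      = (-1)^n * (Matrix.vandermonde fun i : Fin (n+1) => ((l i : ℕ) : ℚ)).det := by
  have h4 : ((-1 : ℚ))^n * (-1)^n = 1 := by
    rw [← pow_add]
    exact Even.neg_one_pow ⟨n, rfl⟩
  rw [← det_Mmat l hl, det_vandermonde_eq_Bmat l, ← det_gmat l n le_rfl, det_gn l,
    mul_left_comm ((-1 : ℚ)^n), ← mul_assoc ((-1 : ℚ)^n) ((-1 : ℚ)^n), h4, one_mul]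

end HCF

namespace HCF
open Finset

/-- The shifted row lengths `l_i = λ_i + (N - 1 - i)`. -/
def lv (μ : YoungDiagram) (N : ℕ) : Fin N → ℕ := fun i => μ.rowLen i + (N - 1 - i)

/-- `∏_{i<j} (l_i - l_j)` in `ℕ`. -/
def VdN (μ : YoungDiagram) (N : ℕ) : ℕ :=
  ∏ i : Fin N, ∏ t ∈ Finset.Ioi i, (lv μ N i - lv μ N t)

theorem lv_strict_anti {μ : YoungDiagram} {N : ℕ} {i t : Fin N} (h : i < t) :
    lv μ N t < lv μ N i := by
  have h1 : μ.rowLen t ≤ μ.rowLen i := μ.rowLen_anti _ _ (le_of_lt h)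
  have h2 : (t : ℕ) < N := t.isLt
  have h3 : (i : ℕ) < (t : ℕ) := h
  simp only [lv]
  omega

theorem prod_cells {M : Type*} [CommMonoid M] (μ : YoungDiagram) (n : ℕ)
    (hcol : μ.colLen 0 ≤ n) (f : ℕ × ℕ → M) :
    ∏ c ∈ μ.cells, f c = ∏ i ∈ Finset.range n, ∏ j ∈ Finset.range (μ.rowLen i), f (i, j) := by
  have hset : μ.cells
      = (Finset.range n).biUnion (fun i => (Finset.range (μ.rowLen i)).image (fun j => (i, j))) := by
    ext ⟨i, j⟩
    simp only [Finset.mem_biUnion, Finset.mem_range, Finset.mem_image, YoungDiagram.mem_cells]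
    constructor
    · intro hm
      have hi : i < μ.colLen 0 := YoungDiagram.mem_iff_lt_colLen.1 (μ.up_left_mem le_rfl (Nat.zero_le j) hm)
      exact ⟨i, by omega, j, YoungDiagram.mem_iff_lt_rowLen.1 hm, rfl⟩
    · rintro ⟨i', _, j', hj', heq⟩
      injection heq with e1 e2
      subst e1; subst e2
      exact YoungDiagram.mem_iff_lt_rowLen.2 hj'
  rw [hset, Finset.prod_biUnion]
  · apply Finset.prod_congr rfl
    intro i _
    rw [Finset.prod_image]
    intro a _ b _ hab
    injection hab with e1 e2
  · intro a _ b _ hab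
    apply Finset.disjoint_left.2
    rintro ⟨x, y⟩ hx hy
    simp only [Finset.mem_image, Finset.mem_range] at hx hy
    obtain ⟨_, _, h1⟩ := hx
    obtain ⟨_, _, h2⟩ := hy
    injection h1 with e1 _
    injection h2 with e3 _
    exact hab (e1.trans e3.symm)

theorem row_hook (μ : YoungDiagram) (N : ℕ) (hcol : μ.colLen 0 ≤ N) (i : Fin N) :
    (∏ j ∈ Finset.range (μ.rowLen i), hookLength μ (i, j))
        * (∏ t ∈ Finset.Ioi i, (lv μ N i - lv μ N t)) = Nat.factorial (lv μ N i) := by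
  set k := lv μ N i with hk
  set φ : ℕ → ℕ := fun j => j + (N - μ.colLen j) with hφ
  have hiN : (i : ℕ) < N := i.isLt
  have hf1 : ∀ j < μ.rowLen i, hookLength μ (i, j) = k - φ j ∧ φ j < k := by
    intro j hj
    have hm : ((i : ℕ), j) ∈ μ := YoungDiagram.mem_iff_lt_rowLen.2 hj
    have h2 : (i : ℕ) < μ.colLen j := YoungDiagram.mem_iff_lt_colLen.1 hm
    have h3 : μ.colLen j ≤ μ.colLen 0 := μ.colLen_anti _ _ (Nat.zero_le j)
    simp only [hookLength, hk, lv, hφ]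
    omega
  have hf4 : ∀ j < μ.rowLen i, ∀ t : Fin N, i < t → φ j ≠ lv μ N t := by
    intro j hj t hit
    have htN : (t : ℕ) < N := t.isLt
    by_cases hcase : j < μ.rowLen t
    · have h2 : (t : ℕ) < μ.colLen j := YoungDiagram.mem_iff_lt_colLen.1 (YoungDiagram.mem_iff_lt_rowLen.2 hcase)
      have h3 : μ.colLen j ≤ N := le_trans (μ.colLen_anti _ _ (Nat.zero_le j)) hcol
      simp only [hφ, lv]
      omega
    · have h2 : μ.colLen j ≤ (t : ℕ) := by
        by_contra hcon
        exact hcase (YoungDiagram.mem_iff_lt_rowLen.1 (YoungDiagram.mem_iff_lt_colLen.2 (by omega)))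
      simp only [hφ, lv]
      omega
  have hφmono : ∀ a b, a < b → b < μ.rowLen i → φ a < φ b := by
    intro a b hab hb
    have h1 : μ.colLen b ≤ μ.colLen a := μ.colLen_anti _ _ (le_of_lt hab)
    have h2 : μ.colLen a ≤ N := le_trans (μ.colLen_anti _ _ (Nat.zero_le a)) hcol
    simp only [hφ]
    omega
  set A := (Finset.range (μ.rowLen i)).image φ with hA
  set B := (Finset.Ioi i).image (fun t => lv μ N t) with hB
  have hAcard : A.card = μ.rowLen i := by
    rw [hA, Finset.card_image_of_injOn, Finset.card_range]
    intro a ha b hb hab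
    simp only [Finset.mem_coe, Finset.mem_range] at ha hb
    rcases lt_trichotomy a b with h | h | h
    · exact absurd hab (ne_of_lt (hφmono a b h hb))
    · exact h
    · exact absurd hab.symm (ne_of_lt (hφmono b a h ha))
  have hBcard : B.card = N - 1 - i := by
    rw [hB, Finset.card_image_of_injOn, Fin.card_Ioi]
    intro a ha b hb hab
    rcases lt_trichotomy a b with h | h | h
    · exact absurd hab (ne_of_lt (lv_strict_anti h)).symm
    · exact h
    · exact absurd hab (ne_of_gt (lv_strict_anti h)).symm
  have hdisj : Disjoint A B := by
    rw [Finset.disjoint_left]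
    rintro x hx hxB
    simp only [hA, Finset.mem_image, Finset.mem_range] at hx
    simp only [hB, Finset.mem_image, Finset.mem_Ioi] at hxB
    obtain ⟨j, hj, rfl⟩ := hx
    obtain ⟨t, ht, heq⟩ := hxB
    exact hf4 j hj t ht heq.symm
  have hsub : A ∪ B ⊆ Finset.range k := by
    intro x hx
    rw [Finset.mem_union] at hx
    rw [Finset.mem_range]
    rcases hx with hx | hx
    · simp only [hA, Finset.mem_image, Finset.mem_range] at hx
      obtain ⟨j, hj, rfl⟩ := hx
      exact (hf1 j hj).2
    · simp only [hB, Finset.mem_image, Finset.mem_Ioi] at hx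
      obtain ⟨t, ht, rfl⟩ := hx
      exact lv_strict_anti ht
  have hk_eq : k = μ.rowLen i + (N - 1 - i) := rfl
  have hunion : A ∪ B = Finset.range k := by
    apply Finset.eq_of_subset_of_card_le hsub
    rw [Finset.card_range, Finset.card_union_of_disjoint hdisj, hAcard, hBcard]
    omega
  have hsplit : ∏ x ∈ Finset.range k, (k - x) = (∏ x ∈ A, (k - x)) * ∏ x ∈ B, (k - x) := by
    rw [← hunion, Finset.prod_union hdisj]
  have hfact : ∏ x ∈ Finset.range k, (k - x) = Nat.factorial k := by
    rw [← Nat.descFactorial_eq_prod_range]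
    exact Nat.descFactorial_self k
  have hprodA : ∏ x ∈ A, (k - x) = ∏ j ∈ Finset.range (μ.rowLen i), hookLength μ (i, j) := by
    rw [hA, Finset.prod_image]
    · exact Finset.prod_congr rfl (fun j hj => ((hf1 j (Finset.mem_range.1 hj)).1).symm)
    · intro a ha b hb hab
      simp only [Finset.mem_coe, Finset.mem_range] at ha hb
      rcases lt_trichotomy a b with h | h | h
      · exact absurd hab (ne_of_lt (hφmono a b h hb))
      · exact h
      · exact absurd hab.symm (ne_of_lt (hφmono b a h ha))
  have hprodB : ∏ x ∈ B, (k - x) = ∏ t ∈ Finset.Ioi i, (lv μ N i - lv μ N t) := by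
    rw [hB, Finset.prod_image]
    intro a ha b hb hab
    rcases lt_trichotomy a b with h | h | h
    · exact absurd hab (ne_of_lt (lv_strict_anti h)).symm
    · exact h
    · exact absurd hab (ne_of_gt (lv_strict_anti h)).symm
  rw [← hfact, hsplit, hprodA, hprodB]

end HCF

namespace HCF
open Finset

def sfq (N : ℕ) : ℚ := ∏ i ∈ Finset.range N, (Nat.factorial i : ℚ)

theorem sfq_ne_zero (N : ℕ) : sfq N ≠ 0 := by
  apply Finset.prod_ne_zero_iff.2
  intro i _
  exact_mod_cast Nat.factorial_ne_zero i

theorem sfq_succ (N : ℕ) : sfq (N + 1) = sfq N * (Nat.factorial N : ℚ) := by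
  rw [sfq, Finset.prod_range_succ, sfq]

theorem sfq_eq_fin (N : ℕ) : sfq N = ∏ i : Fin N, (Nat.factorial (N - 1 - i) : ℚ) := by
  rw [Fin.prod_univ_eq_prod_range (fun i => (Nat.factorial (N - 1 - i) : ℚ)), sfq]
  exact (Finset.prod_range_reflect (fun i => (Nat.factorial i : ℚ)) N).symm

theorem hooks_prod (μ : YoungDiagram) (N : ℕ) (hcol : μ.colLen 0 ≤ N) :
    (∏ c ∈ μ.cells, hookLength μ c) * VdN μ N = ∏ i : Fin N, Nat.factorial (lv μ N i) := by
  rw [prod_cells μ N hcol, ← Fin.prod_univ_eq_prod_range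
    (fun i => ∏ j ∈ Finset.range (μ.rowLen i), hookLength μ (i, j)), VdN, ← Finset.prod_mul_distrib]
  exact Finset.prod_congr rfl (fun i _ => row_hook μ N hcol i)

theorem asc_prod (a m : ℕ) :
    ∏ j ∈ Finset.range m, ((a : ℚ) + 1 + j) = (Nat.factorial (a + m) : ℚ) / (Nat.factorial a : ℚ) := by
  induction m with
  | zero =>
    rw [Finset.range_zero, Finset.prod_empty, Nat.add_zero,
      div_self (by exact_mod_cast Nat.factorial_ne_zero a)]
  | succ m ih =>
    rw [Finset.prod_range_succ, ih]
    have h1 : (Nat.factorial (a + (m + 1)) : ℚ) = (Nat.factorial (a + m) : ℚ) * ((a : ℚ) + m + 1) := by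
      rw [show a + (m + 1) = (a + m) + 1 by omega, Nat.factorial_succ]
      push_cast
      ring
    rw [h1, div_mul_eq_mul_div]
    congr 1
    ring

theorem content_row (μ : YoungDiagram) (N : ℕ) (i : Fin N) :
    ∏ j ∈ Finset.range (μ.rowLen i), ((N : ℚ) + j - i)
      = (Nat.factorial (lv μ N i) : ℚ) / (Nat.factorial (N - 1 - i) : ℚ) := by
  have hiN : (i : ℕ) < N := i.isLt
  have hc : ((N - 1 - (i : ℕ) : ℕ) : ℚ) = (N : ℚ) - 1 - (i : ℕ) := by
    have h1 : (N - 1 - (i : ℕ)) + ((i : ℕ) + 1) = N := by omega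
    have h2 := congrArg (fun t : ℕ => (t : ℚ)) h1
    push_cast at h2
    linarith
  have h3 : ∀ j ∈ Finset.range (μ.rowLen i), ((N : ℚ) + j - i)
      = ((N - 1 - (i : ℕ) : ℕ) : ℚ) + 1 + j := by
    intro j _
    rw [hc]
    ring
  rw [Finset.prod_congr rfl h3, asc_prod]
  rw [show (N - 1 - (i : ℕ)) + μ.rowLen i = lv μ N i by rw [lv]; omega]

theorem content_prod (μ : YoungDiagram) (N : ℕ) (hcol : μ.colLen 0 ≤ N) :
    ∏ c ∈ μ.cells, ((N : ℚ) + c.2 - c.1)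
      = (∏ i : Fin N, (Nat.factorial (lv μ N i) : ℚ)) / sfq N := by
  rw [prod_cells μ N hcol, ← Fin.prod_univ_eq_prod_range
    (fun i => ∏ j ∈ Finset.range (μ.rowLen i), ((N : ℚ) + j - i)), sfq_eq_fin,
    ← Finset.prod_div_distrib]
  exact Finset.prod_congr rfl (fun i _ => content_row μ N i)

theorem hook_pos (μ : YoungDiagram) {c : ℕ × ℕ} (hc : c ∈ μ.cells) : 0 < hookLength μ c := by
  obtain ⟨i, j⟩ := c
  have hm : (i, j) ∈ μ := (YoungDiagram.mem_cells _).1 hc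
  have h1 : j < μ.rowLen i := YoungDiagram.mem_iff_lt_rowLen.1 hm
  have h2 : i < μ.colLen j := YoungDiagram.mem_iff_lt_colLen.1 hm
  simp only [hookLength]
  omega

theorem VdN_pos (μ : YoungDiagram) (N : ℕ) : 0 < VdN μ N := by
  apply Finset.prod_pos
  intro i _
  apply Finset.prod_pos
  intro t ht
  have := lv_strict_anti (μ := μ) (N := N) (Finset.mem_Ioi.1 ht)
  omega

theorem main2 (μ : YoungDiagram) (N : ℕ) (hcol : μ.colLen 0 ≤ N) :
    ∏ c ∈ μ.cells, (((N : ℚ) + c.2 - c.1) / (hookLength μ c : ℚ))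
      = (VdN μ N : ℚ) / sfq N := by
  rw [Finset.prod_div_distrib, content_prod μ N hcol]
  have hQ : (∏ c ∈ μ.cells, (hookLength μ c : ℚ)) * (VdN μ N : ℚ)
      = ∏ i : Fin N, (Nat.factorial (lv μ N i) : ℚ) := by
    have := hooks_prod μ N hcol
    exact_mod_cast congrArg (fun t : ℕ => (t : ℚ)) this
  have hH : (∏ c ∈ μ.cells, (hookLength μ c : ℚ)) ≠ 0 := by
    apply Finset.prod_ne_zero_iff.2
    intro c hc
    exact ne_of_gt (by exact_mod_cast hook_pos μ hc)
  have hV : (VdN μ N : ℚ) ≠ 0 := ne_of_gt (by exact_mod_cast VdN_pos μ N)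
  rw [div_div, mul_comm (sfq N), ← div_div]
  congr 1
  rw [div_eq_iff hH]
  linarith [hQ]

/-- `∏_{i<j} (l_i - l_j)` over `ℚ`. -/
def Wd {k : ℕ} (l : Fin k → ℕ) : ℚ :=
  ∏ i : Fin k, ∏ j ∈ Finset.Ioi i, ((l i : ℚ) - (l j : ℚ))

theorem VdN_cast (μ : YoungDiagram) (N : ℕ) : (VdN μ N : ℚ) = Wd (lv μ N) := by
  rw [VdN, Wd, Nat.cast_prod]
  apply Finset.prod_congr rfl
  intro i _
  rw [Nat.cast_prod]
  apply Finset.prod_congr rfl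
  intro t ht
  rw [Nat.cast_sub (le_of_lt (lv_strict_anti (Finset.mem_Ioi.1 ht)))]

def esgn (k : ℕ) : ℕ := ∑ i : Fin k, (Finset.Ioi i).card

theorem wd_eq_det {k : ℕ} (l : Fin k → ℕ) :
    Wd l = (-1 : ℚ)^(esgn k) * (Matrix.vandermonde fun i : Fin k => ((l i : ℕ) : ℚ)).det := by
  rw [Matrix.det_vandermonde, esgn, ← Finset.prod_pow_eq_pow_sum, ← Finset.prod_mul_distrib, Wd]
  apply Finset.prod_congr rfl
  intro i _
  rw [← Finset.prod_const, ← Finset.prod_mul_distrib]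
  apply Finset.prod_congr rfl
  intro t _
  ring

theorem esgn_succ (n : ℕ) : esgn (n + 1) = esgn n + n := by
  simp only [esgn, Fin.card_Ioi]
  rw [Fin.sum_univ_eq_sum_range (fun i => n + 1 - 1 - i), Fin.sum_univ_eq_sum_range (fun i => n - 1 - i)]
  rw [Finset.sum_range_succ]
  have h1 : ∀ i ∈ Finset.range n, n + 1 - 1 - i = (n - 1 - i) + 1 := by
    intro i hi
    rw [Finset.mem_range] at hi
    omega
  rw [Finset.sum_congr rfl h1, Finset.sum_add_distrib, Finset.sum_const, Finset.card_range]
  simp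

theorem wd_sum (n : ℕ) (l : Fin (n+1) → ℕ) (hl : ∀ i : Fin n, l i.succ ≤ l i.castSucc) :
    (Nat.factorial n : ℚ) *
        ∑ r ∈ Fintype.piFinset (fun i : Fin n => Finset.Ico (l i.succ) (l i.castSucc)),
          Wd (fun i => r i)
      = Wd l := by
  have h1 : ∀ r : Fin n → ℕ, Wd (fun i => r i)
      = (-1 : ℚ)^(esgn n) * (Matrix.vandermonde fun i : Fin n => ((r i : ℕ) : ℚ)).det :=
    fun r => wd_eq_det r
  have h2 : ∑ r ∈ Fintype.piFinset (fun i : Fin n => Finset.Ico (l i.succ) (l i.castSucc)),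
        Wd (fun i => r i)
      = (-1 : ℚ)^(esgn n) * ∑ r ∈ Fintype.piFinset (fun i : Fin n => Finset.Ico (l i.succ) (l i.castSucc)),
          (Matrix.vandermonde fun i : Fin n => ((r i : ℕ) : ℚ)).det := by
    rw [Finset.mul_sum]
    exact Finset.sum_congr rfl (fun r _ => h1 r)
  rw [h2, mul_left_comm, vandermonde_sum n l hl, wd_eq_det l, esgn_succ, pow_add]
  ring

end HCF

namespace HCF
open Finset

theorem lower_set_mem_iff (S : Finset ℕ) (hdc : ∀ j ∈ S, ∀ k < j, k ∈ S) :
    ∀ x, x ∈ S ↔ x < S.card := by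
  intro x
  constructor
  · intro hx
    have hsub : Finset.range (x + 1) ⊆ S := by
      intro t ht
      rw [Finset.mem_range] at ht
      rcases Nat.lt_succ_iff_lt_or_eq.1 ht with h | h
      · exact hdc x hx t h
      · rwa [h]
    have := Finset.card_le_card hsub
    rwa [Finset.card_range] at this
  · intro hx
    by_contra hxs
    have hsub : S ⊆ Finset.range x := by
      intro t ht
      rw [Finset.mem_range]
      rcases lt_trichotomy t x with h | h | h
      · exact h
      · exact absurd (h ▸ ht) hxs
      · exact absurd (hdc t ht x h) hxs
    have := Finset.card_le_card hsub
    rw [Finset.card_range] at this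
    omega

def Dia (f : ℕ → ℕ) (n : ℕ) (hf : ∀ a b, a ≤ b → f b ≤ f a) (h0 : ∀ i, n ≤ i → f i = 0) :
    YoungDiagram where
  cells := ((Finset.range n) ×ˢ (Finset.range (f 0))).filter fun c => c.2 < f c.1
  isLowerSet := by
    rintro ⟨a1, a2⟩ ⟨b1, b2⟩ hle hm
    obtain ⟨h1, h2⟩ := hle
    simp only [Finset.coe_filter, Finset.mem_product, Finset.mem_range, Set.mem_setOf_eq] at hm ⊢
    refine ⟨⟨by omega, by omega⟩, ?_⟩
    have : f a1 ≤ f b1 := hf b1 a1 h1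
    omega

theorem mem_Dia {f : ℕ → ℕ} {n : ℕ} {hf : ∀ a b, a ≤ b → f b ≤ f a} {h0 : ∀ i, n ≤ i → f i = 0}
    {i j : ℕ} : (i, j) ∈ Dia f n hf h0 ↔ i < n ∧ j < f i := by
  rw [← YoungDiagram.mem_cells]
  show (i, j) ∈ ((Finset.range n) ×ˢ (Finset.range (f 0))).filter (fun c => c.2 < f c.1) ↔ _
  simp only [Finset.mem_filter, Finset.mem_product, Finset.mem_range]
  constructor
  · rintro ⟨⟨ha, _⟩, hb⟩
    exact ⟨ha, hb⟩
  · rintro ⟨ha, hb⟩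
    have h1 : f i ≤ f 0 := hf 0 i (Nat.zero_le i)
    refine ⟨⟨ha, by omega⟩, hb⟩

theorem rowLen_Dia (f : ℕ → ℕ) (n : ℕ) (hf : ∀ a b, a ≤ b → f b ≤ f a)
    (h0 : ∀ i, n ≤ i → f i = 0) (i : ℕ) : (Dia f n hf h0).rowLen i = f i := by
  have key : ∀ j, j < (Dia f n hf h0).rowLen i ↔ (i < n ∧ j < f i) := by
    intro j
    rw [← YoungDiagram.mem_iff_lt_rowLen]
    exact mem_Dia
  have k0 := key 0
  have kf := key (f i)
  have kr := key ((Dia f n hf h0).rowLen i)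
  have hcase : i < n ∨ f i = 0 := by
    rcases Nat.lt_or_ge i n with h | h
    · exact Or.inl h
    · exact Or.inr (h0 i h)
  omega

def box (μ : YoungDiagram) (N : ℕ) : Finset (Fin N → ℕ) :=
  Fintype.piFinset (fun i : Fin N => Finset.Icc (μ.rowLen ((i : ℕ) + 1)) (μ.rowLen (i : ℕ)))

def fext (μ : YoungDiagram) (N : ℕ) (r : Fin N → ℕ) : ℕ → ℕ := fun i =>
  if h : i < N then max (min (r ⟨i, h⟩) (μ.rowLen i)) (μ.rowLen (i + 1)) else 0

theorem fext_anti (μ : YoungDiagram) (N : ℕ) (r : Fin N → ℕ) :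
    ∀ a b, a ≤ b → fext μ N r b ≤ fext μ N r a := by
  intro a b hab
  by_cases hb : b < N
  · have ha : a < N := by omega
    rw [fext, dif_pos hb, fext, dif_pos ha]
    rcases Nat.eq_or_lt_of_le hab with rfl | hlt
    · exact le_rfl
    · have h1 : min (r ⟨b, hb⟩) (μ.rowLen b) ≤ μ.rowLen b := min_le_right _ _
      have h1' : μ.rowLen (b+1) ≤ μ.rowLen b := μ.rowLen_anti _ _ (by omega)
      have h2 : μ.rowLen b ≤ μ.rowLen (a+1) := μ.rowLen_anti _ _ (by omega)
      have h3 : μ.rowLen (a+1) ≤ max (min (r ⟨a, ha⟩) (μ.rowLen a)) (μ.rowLen (a+1)) :=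
        le_max_right _ _
      omega
  · rw [fext, dif_neg hb]
    exact Nat.zero_le _

theorem fext_zero (μ : YoungDiagram) (N : ℕ) (r : Fin N → ℕ) :
    ∀ i, N ≤ i → fext μ N r i = 0 := by
  intro i hi
  rw [fext, dif_neg (by omega)]

def Dfull (μ : YoungDiagram) (N : ℕ) (r : Fin N → ℕ) : YoungDiagram :=
  Dia (fext μ N r) N (fext_anti μ N r) (fext_zero μ N r)

theorem mem_box_iff {μ : YoungDiagram} {N : ℕ} {r : Fin N → ℕ} :
    r ∈ box μ N ↔ ∀ i : Fin N, μ.rowLen ((i : ℕ) + 1) ≤ r i ∧ r i ≤ μ.rowLen (i : ℕ) := by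
  rw [box, Fintype.mem_piFinset]
  constructor
  · intro h i
    exact Finset.mem_Icc.1 (h i)
  · intro h i
    exact Finset.mem_Icc.2 (h i)

theorem fext_box {μ : YoungDiagram} {N : ℕ} {r : Fin N → ℕ} (hr : r ∈ box μ N) (i : Fin N) :
    fext μ N r (i : ℕ) = r i := by
  have h := (mem_box_iff.1 hr) i
  rw [fext, dif_pos i.isLt]
  have he : (⟨(i : ℕ), i.isLt⟩ : Fin N) = i := by
    apply Fin.ext
    rfl
  rw [he]
  omega

theorem mem_Dfull {μ : YoungDiagram} {N : ℕ} {r : Fin N → ℕ} {i j : ℕ} :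
    (i, j) ∈ Dfull μ N r ↔ i < N ∧ j < fext μ N r i :=
  mem_Dia

theorem rowLen_Dfull {μ : YoungDiagram} {N : ℕ} {r : Fin N → ℕ} (hr : r ∈ box μ N) (i : Fin N) :
    (Dfull μ N r).rowLen (i : ℕ) = r i := by
  rw [Dfull, rowLen_Dia, fext_box hr]

theorem colLen_Dfull (μ : YoungDiagram) (N : ℕ) (r : Fin N → ℕ) :
    (Dfull μ N r).colLen 0 ≤ N := by
  by_contra h
  have h2 : ((N : ℕ), 0) ∈ Dfull μ N r := YoungDiagram.mem_iff_lt_colLen.2 (by omega)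
  have := mem_Dfull.1 h2
  omega

theorem Dfull_subset {μ : YoungDiagram} {N : ℕ} {r : Fin N → ℕ} (hr : r ∈ box μ N) {i j : ℕ}
    (h : (i, j) ∈ Dfull μ N r) : (i, j) ∈ μ := by
  obtain ⟨h1, h2⟩ := mem_Dfull.1 h
  rw [fext_box hr ⟨i, h1⟩] at h2
  have h3 := ((mem_box_iff.1 hr) ⟨i, h1⟩).2
  exact YoungDiagram.mem_iff_lt_rowLen.2 (by simp at h3 ⊢; omega)

def prof (μ : YoungDiagram) (N : ℕ) (T : SSYTBounded μ (N + 1)) : Fin N → ℕ :=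
  fun i => ((Finset.range (μ.rowLen (i : ℕ))).filter (fun j => T.entry (i : ℕ) j ≤ N)).card

theorem prof_lt_iff (μ : YoungDiagram) (N : ℕ) (T : SSYTBounded μ (N + 1)) (i : Fin N) (j : ℕ) :
    j < prof μ N T i ↔ (((i : ℕ), j) ∈ μ ∧ T.entry (i : ℕ) j ≤ N) := by
  set S := (Finset.range (μ.rowLen (i : ℕ))).filter (fun j => T.entry (i : ℕ) j ≤ N) with hS
  have hdc : ∀ a ∈ S, ∀ k < a, k ∈ S := by
    intro a ha k hk
    simp only [hS, Finset.mem_filter, Finset.mem_range] at ha ⊢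
    obtain ⟨h1, h2⟩ := ha
    refine ⟨by omega, le_trans (T.row_weak (le_of_lt hk) (YoungDiagram.mem_iff_lt_rowLen.2 h1)) h2⟩
  have hmem := lower_set_mem_iff S hdc j
  rw [show prof μ N T i = S.card from rfl]
  constructor
  · intro h
    have h2 := hmem.2 h
    simp only [hS, Finset.mem_filter, Finset.mem_range] at h2
    exact ⟨YoungDiagram.mem_iff_lt_rowLen.2 h2.1, h2.2⟩
  · rintro ⟨hm, hle⟩
    apply hmem.1
    simp only [hS, Finset.mem_filter, Finset.mem_range]
    exact ⟨YoungDiagram.mem_iff_lt_rowLen.1 hm, hle⟩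

theorem prof_mem_box (μ : YoungDiagram) (N : ℕ) (T : SSYTBounded μ (N + 1)) :
    prof μ N T ∈ box μ N := by
  rw [mem_box_iff]
  intro i
  constructor
  · rcases Nat.eq_zero_or_pos (μ.rowLen ((i : ℕ) + 1)) with h | h
    · omega
    · set j := μ.rowLen ((i : ℕ) + 1) - 1 with hj
      have hjm : ((i : ℕ) + 1, j) ∈ μ := YoungDiagram.mem_iff_lt_rowLen.2 (by omega)
      have h1 : ((i : ℕ), j) ∈ μ := μ.up_left_mem (by omega) le_rfl hjm
      have h2 : T.entry (i : ℕ) j < T.entry ((i : ℕ) + 1) j := T.col_strict (by omega) hjm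
      have h3 := (T.bounded hjm).2
      have h4 := (prof_lt_iff μ N T i j).2 ⟨h1, by omega⟩
      omega
  · calc prof μ N T i ≤ (Finset.range (μ.rowLen (i : ℕ))).card := Finset.card_filter_le _ _
      _ = μ.rowLen (i : ℕ) := Finset.card_range _

theorem mem_Dfull_prof (μ : YoungDiagram) (N : ℕ) (hcol : μ.colLen 0 ≤ N + 1)
    (T : SSYTBounded μ (N + 1)) (i j : ℕ) :
    (i, j) ∈ Dfull μ N (prof μ N T) ↔ ((i, j) ∈ μ ∧ T.entry i j ≤ N) := by
  rw [mem_Dfull]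
  by_cases hi : i < N
  · rw [show fext μ N (prof μ N T) i = prof μ N T ⟨i, hi⟩ from fext_box (prof_mem_box μ N T) ⟨i, hi⟩]
    rw [show (j < prof μ N T ⟨i, hi⟩ ↔ ((i, j) ∈ μ ∧ T.entry i j ≤ N)) from prof_lt_iff μ N T ⟨i, hi⟩ j]
    constructor
    · rintro ⟨_, h⟩; exact h
    · intro h; exact ⟨hi, h⟩
  · constructor
    · rintro ⟨h, _⟩; omega
    · rintro ⟨hm, hle⟩
      exfalso
      have h1 := entry_lower_bound T i j hm
      have h2 : i < μ.colLen 0 :=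
        YoungDiagram.mem_iff_lt_colLen.1 (μ.up_left_mem le_rfl (Nat.zero_le j) hm)
      omega

def restr (μ : YoungDiagram) (N : ℕ) (hcol : μ.colLen 0 ≤ N + 1) (T : SSYTBounded μ (N + 1)) :
    SSYTBounded (Dfull μ N (prof μ N T)) N where
  entry i j := if (i, j) ∈ Dfull μ N (prof μ N T) then T.entry i j else 0
  zeros := fun {i j} h => if_neg h
  bounded := fun {i j} h => by
    beta_reduce
    rw [if_pos h]
    have h2 := (mem_Dfull_prof μ N hcol T i j).1 h
    exact ⟨(T.bounded h2.1).1, h2.2⟩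
  row_weak := fun {i j1 j2} h12 hm => by
    have hm1 := (Dfull μ N (prof μ N T)).up_left_mem le_rfl h12 hm
    beta_reduce
    rw [if_pos hm, if_pos hm1]
    exact T.row_weak h12 ((mem_Dfull_prof μ N hcol T i j2).1 hm).1
  col_strict := fun {i1 i2 j} h12 hm => by
    have hm1 := (Dfull μ N (prof μ N T)).up_left_mem (le_of_lt h12) le_rfl hm
    beta_reduce
    rw [if_pos hm, if_pos hm1]
    exact T.col_strict h12 ((mem_Dfull_prof μ N hcol T i2 j).1 hm).1

def exten (μ : YoungDiagram) (N : ℕ) (hcol : μ.colLen 0 ≤ N + 1) (r : Fin N → ℕ) (hr : r ∈ box μ N)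
    (T' : SSYTBounded (Dfull μ N r) N) : SSYTBounded μ (N + 1) where
  entry i j := if (i, j) ∈ Dfull μ N r then T'.entry i j else if (i, j) ∈ μ then N + 1 else 0
  zeros := fun {i j} h => by
    beta_reduce
    rw [if_neg (fun hc => h (Dfull_subset hr hc)), if_neg h]
  bounded := fun {i j} hm => by
    beta_reduce
    by_cases hd : (i, j) ∈ Dfull μ N r
    · rw [if_pos hd]
      have := T'.bounded hd
      omega
    · rw [if_neg hd, if_pos hm]
      omega
  row_weak := fun {i j1 j2} h12 hm => by
    beta_reduce
    by_cases hd2 : (i, j2) ∈ Dfull μ N r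
    · have hd1 := (Dfull μ N r).up_left_mem le_rfl h12 hd2
      rw [if_pos hd2, if_pos hd1]
      exact T'.row_weak h12 hd2
    · rw [if_neg hd2, if_pos hm]
      by_cases hd1 : (i, j1) ∈ Dfull μ N r
      · rw [if_pos hd1]
        have := (T'.bounded hd1).2
        omega
      · rw [if_neg hd1]
        split <;> omega
  col_strict := fun {i1 i2 j} h12 hm => by
    beta_reduce
    by_cases hd2 : (i2, j) ∈ Dfull μ N r
    · have hd1 := (Dfull μ N r).up_left_mem (le_of_lt h12) le_rfl hd2
      rw [if_pos hd2, if_pos hd1]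
      exact T'.col_strict h12 hd2
    · rw [if_neg hd2, if_pos hm]
      have hi2N : i2 ≤ N := by
        have h2 : i2 < μ.colLen 0 :=
          YoungDiagram.mem_iff_lt_colLen.1 (μ.up_left_mem le_rfl (Nat.zero_le j) hm)
        omega
      have hi1N : i1 < N := by omega
      have hbox := (mem_box_iff.1 hr) ⟨i1, hi1N⟩
      have hj : j < μ.rowLen i2 := YoungDiagram.mem_iff_lt_rowLen.1 hm
      have hmono : μ.rowLen i2 ≤ μ.rowLen (i1 + 1) := μ.rowLen_anti _ _ (by omega)
      have hd1 : (i1, j) ∈ Dfull μ N r := by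
        rw [mem_Dfull]
        refine ⟨hi1N, ?_⟩
        rw [fext_box hr ⟨i1, hi1N⟩]
        simp only at hbox
        omega
      rw [if_pos hd1]
      have := (T'.bounded hd1).2
      omega

end HCF

namespace HCF
open Finset

theorem restr_entry (μ : YoungDiagram) (N : ℕ) (hcol : μ.colLen 0 ≤ N + 1)
    (T : SSYTBounded μ (N + 1)) (i j : ℕ) :
    (restr μ N hcol T).entry i j
      = if (i, j) ∈ Dfull μ N (prof μ N T) then T.entry i j else 0 := rfl

theorem exten_entry (μ : YoungDiagram) (N : ℕ) (hcol : μ.colLen 0 ≤ N + 1) (r : Fin N → ℕ)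
    (hr : r ∈ box μ N) (T' : SSYTBounded (Dfull μ N r) N) (i j : ℕ) :
    (exten μ N hcol r hr T').entry i j
      = if (i, j) ∈ Dfull μ N r then T'.entry i j else if (i, j) ∈ μ then N + 1 else 0 := rfl

theorem heq_helper {μ1 μ2 : YoungDiagram} {N : ℕ} (h : μ1 = μ2) (T1 : SSYTBounded μ1 N)
    (T2 : SSYTBounded μ2 N) (he : ∀ i j, T1.entry i j = T2.entry i j) : HEq T1 T2 := by
  subst h
  exact heq_of_eq (ssyt_ext he)

theorem nat_card_sigma {ι : Type*} [Fintype ι] (β : ι → Type*) [∀ i, Finite (β i)] :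
    Nat.card ((i : ι) × β i) = ∑ i, Nat.card (β i) := by
  classical
  letI : ∀ i, Fintype (β i) := fun i => Fintype.ofFinite _
  rw [Nat.card_eq_fintype_card, Fintype.card_sigma]
  exact Finset.sum_congr rfl (fun i _ => (Nat.card_eq_fintype_card).symm)

theorem prof_exten (μ : YoungDiagram) (N : ℕ) (hcol : μ.colLen 0 ≤ N + 1) (r : Fin N → ℕ)
    (hr : r ∈ box μ N) (T' : SSYTBounded (Dfull μ N r) N) :
    prof μ N (exten μ N hcol r hr T') = r := by
  funext i
  have hch : ∀ j, j < prof μ N (exten μ N hcol r hr T') i ↔ j < r i := by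
    intro j
    rw [prof_lt_iff]
    constructor
    · rintro ⟨hm, hle⟩
      by_cases hd : ((i : ℕ), j) ∈ Dfull μ N r
      · obtain ⟨hiN, hj⟩ := mem_Dfull.1 hd
        rwa [fext_box hr i] at hj
      · exfalso
        rw [exten_entry, if_neg hd, if_pos hm] at hle
        omega
    · intro hj
      have hd : ((i : ℕ), j) ∈ Dfull μ N r := by
        rw [mem_Dfull]
        exact ⟨i.isLt, by rw [fext_box hr i]; exact hj⟩
      refine ⟨Dfull_subset hr hd, ?_⟩
      rw [exten_entry, if_pos hd]
      exact (T'.bounded hd).2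
  have h1 := hch (r i)
  have h2 := hch (prof μ N (exten μ N hcol r hr T') i)
  omega

theorem branching (μ : YoungDiagram) (N : ℕ) (hcol : μ.colLen 0 ≤ N + 1) :
    Nat.card (SSYTBounded μ (N + 1))
      = ∑ r ∈ box μ N, Nat.card (SSYTBounded (Dfull μ N r) N) := by
  classical
  have E : SSYTBounded μ (N + 1) ≃ Σ r : ↥(box μ N), SSYTBounded (Dfull μ N (r : Fin N → ℕ)) N := by
    refine ⟨fun T => ⟨⟨prof μ N T, prof_mem_box μ N T⟩, restr μ N hcol T⟩,
            fun p => exten μ N hcol p.1.val p.1.2 p.2, ?_, ?_⟩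
    · intro T
      apply ssyt_ext
      intro i j
      rw [exten_entry]
      by_cases hd : (i, j) ∈ Dfull μ N (prof μ N T)
      · rw [if_pos hd, restr_entry, if_pos hd]
      · rw [if_neg hd]
        by_cases hm : (i, j) ∈ μ
        · rw [if_pos hm]
          have h1 : ¬ ((i, j) ∈ μ ∧ T.entry i j ≤ N) :=
            fun hc => hd ((mem_Dfull_prof μ N hcol T i j).2 hc)
          have h4 : ¬ (T.entry i j ≤ N) := fun hc => h1 ⟨hm, hc⟩
          have h2 := (T.bounded hm).2
          omega
        · rw [if_neg hm, T.zeros hm]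
    · rintro ⟨⟨r, hr⟩, T'⟩
      have hprof : prof μ N (exten μ N hcol r hr T') = r := prof_exten μ N hcol r hr T'
      refine Sigma.ext (Subtype.ext hprof) ?_
      apply heq_helper (congrArg (fun t => Dfull μ N t) hprof)
      intro i j
      rw [restr_entry]
      by_cases hd : (i, j) ∈ Dfull μ N (prof μ N (exten μ N hcol r hr T'))
      · rw [if_pos hd]
        have hd' : (i, j) ∈ Dfull μ N r := by rwa [hprof] at hd
        rw [exten_entry, if_pos hd']
      · rw [if_neg hd]
        have hd' : (i, j) ∉ Dfull μ N r := by rwa [hprof] at hd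
        exact (T'.zeros hd').symm
  rw [Nat.card_congr E, nat_card_sigma]
  exact Finset.sum_coe_sort (box μ N) (fun r => Nat.card (SSYTBounded (Dfull μ N r) N))

end HCF

namespace HCF
open Finset

theorem main1 : ∀ (N : ℕ) (μ : YoungDiagram), μ.colLen 0 ≤ N →
    (Nat.card (SSYTBounded μ N) : ℚ) * sfq N = Wd (lv μ N) := by
  intro N
  induction N with
  | zero =>
    intro μ hcol
    rw [card_N_zero (Nat.le_zero.1 hcol)]
    simp [Wd, sfq]
  | succ N ih =>
    intro μ hcol
    have key : ∀ r ∈ box μ N,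
        (Nat.card (SSYTBounded (Dfull μ N r) N) : ℚ) * sfq N
          = Wd (fun i : Fin N => r i + (N - 1 - (i : ℕ))) := by
      intro r hr
      rw [ih (Dfull μ N r) (colLen_Dfull μ N r)]
      congr 1
      funext i
      rw [lv, rowLen_Dfull hr i]
    have hl : ∀ i : Fin N, lv μ (N + 1) i.succ ≤ lv μ (N + 1) i.castSucc := by
      intro i
      have h1 : μ.rowLen ((i : ℕ) + 1) ≤ μ.rowLen (i : ℕ) := μ.rowLen_anti _ _ (by omega)
      have h2 : (i : ℕ) < N := i.isLt
      simp only [lv, Fin.val_succ, Fin.coe_castSucc]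
      omega
    calc (Nat.card (SSYTBounded μ (N + 1)) : ℚ) * sfq (N + 1)
        = (∑ r ∈ box μ N, (Nat.card (SSYTBounded (Dfull μ N r) N) : ℚ))
            * (sfq N * (Nat.factorial N : ℚ)) := by
          rw [branching μ N hcol, sfq_succ]
          push_cast
          ring
      _ = (Nat.factorial N : ℚ) * ∑ r ∈ box μ N,
            ((Nat.card (SSYTBounded (Dfull μ N r) N) : ℚ) * sfq N) := by
          rw [Finset.mul_sum, Finset.sum_mul]
          exact Finset.sum_congr rfl (fun r _ => by ring)
      _ = (Nat.factorial N : ℚ) * ∑ r ∈ box μ N,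
            Wd (fun i : Fin N => r i + (N - 1 - (i : ℕ))) := by
          rw [Finset.sum_congr rfl key]
      _ = (Nat.factorial N : ℚ) * ∑ m ∈ Fintype.piFinset
            (fun i : Fin N => Finset.Ico (lv μ (N + 1) i.succ) (lv μ (N + 1) i.castSucc)),
            Wd (fun i => m i) := by
          congr 1
          apply Finset.sum_nbij' (i := fun r (i : Fin N) => r i + (N - 1 - (i : ℕ)))
            (j := fun m (i : Fin N) => m i - (N - 1 - (i : ℕ)))
          · intro r hr
            rw [Fintype.mem_piFinset]
            intro i
            have hb := (mem_box_iff.1 hr) i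
            have h2 : (i : ℕ) < N := i.isLt
            rw [Finset.mem_Ico]
            simp only [lv, Fin.val_succ, Fin.coe_castSucc]
            omega
          · intro m hm
            rw [mem_box_iff]
            intro i
            have hb := Finset.mem_Ico.1 (Fintype.mem_piFinset.1 hm i)
            have h2 : (i : ℕ) < N := i.isLt
            simp only [lv, Fin.val_succ, Fin.coe_castSucc] at hb
            omega
          · intro r hr
            funext i
            simp only
            omega
          · intro m hm
            funext i
            have hb := Finset.mem_Ico.1 (Fintype.mem_piFinset.1 hm i)
            have h2 : (i : ℕ) < N := i.isLt
            simp only [lv, Fin.val_succ, Fin.coe_castSucc] at hb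
            simp only
            omega
          · intro r hr
            rfl
      _ = Wd (lv μ (N + 1)) := wd_sum N (lv μ (N + 1)) hl

end HCF


/-- **Hook-content formula**: the number of semistandard Young tableaux of shape `μ`
with entries in `{1, …, N}` equals the product over the boxes `b = (i, j)` of `μ` of
`(N + c(b)) / h_b`, where `c(b) = j - i` is the content and `h_b` the hook-length. -/
theorem hook_content_formula (μ : YoungDiagram) (N : ℕ) (hN : 0 < N) :
    (Nat.card (SSYTBounded μ N) : ℚ) =
      ∏ c ∈ μ.cells, (((N : ℚ) + (c.2 : ℚ) - (c.1 : ℚ)) / (hookLength μ c : ℚ)) := by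

  by_cases hcol : μ.colLen 0 ≤ N
  · rw [HCF.main2 μ N hcol, HCF.VdN_cast, eq_div_iff (HCF.sfq_ne_zero N)]
    exact HCF.main1 N μ hcol
  · push_neg at hcol
    rw [HCF.card_empty_of_many_rows hcol, eq_comm]
    have hmem : ((N : ℕ), 0) ∈ μ.cells :=
      (YoungDiagram.mem_cells _).2 (YoungDiagram.mem_iff_lt_colLen.2 hcol)
    apply Finset.prod_eq_zero hmem
    norm_num
end

section
/- If the Schensted correspondence associates to σ ∈ 𝔖_n the pair (T, U) of standard Young tableaux of shape λ, then λ₁, the length of the first row of λ, equals the length of the longest increasing subsequence of σ; that is, the largest m for which there exist indices i₁ < i₂ < … < i_m with σ(i₁) < σ(i₂) < … < σ(i_m). -/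
/-- Insert `x` into a row `r`: if some entry of `r` exceeds `x`, replace the
leftmost such entry `y` by `x` and return `(new row, some y)` (the bumped entry);
otherwise append `x` at the end of the row and return `(new row, none)`. -/
def insertRow (r : List ℕ) (x : ℕ) : List ℕ × Option ℕ :=
  match r.findIdx? (fun y => x < y) with
  | none => (r ++ [x], none)
  | some j => (r.set j x, r[j]?)

/-- Schensted insertion of `x` into the insertion tableau `P` (a list of rows):
returns the new tableau together with the index of the row in which a new box
was created. -/
def insertTab : List (List ℕ) → ℕ → List (List ℕ) × ℕ
  | [], x => ([[x]], 0)
  | r :: rest, x =>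
    match insertRow r x with
    | (r', none) => (r' :: rest, 0)
    | (r', some y) =>
      let p := insertTab rest y
      (r' :: p.1, p.2 + 1)

/-- Add a new box containing `k` at the end of row `i` of the recording tableau. -/
def addBox (U : List (List ℕ)) (i k : ℕ) : List (List ℕ) :=
  if h : i < U.length then U.set i (U[i] ++ [k]) else U ++ [[k]]

/-- Run the Schensted correspondence on the remaining word, `k` being the label of
the current step, starting from the pair (insertion tableau, recording tableau). -/
def schenstedAux : List (List ℕ) × List (List ℕ) → ℕ → List ℕ →
    List (List ℕ) × List (List ℕ)
  | PQ, _, [] => PQ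
  | (P, Q), k, x :: xs =>
    let p := insertTab P x
    schenstedAux (p.1, addBox Q p.2 k) (k + 1) xs

/-- The Schensted correspondence: the pair `(T, U)` of the insertion and recording
tableaux obtained by inserting the letters of the word `w` one at a time. -/
def schensted (w : List ℕ) : List (List ℕ) × List (List ℕ) :=
  schenstedAux ([], []) 1 w

/-- The one-line word `σ(1), …, σ(n)` (with values in `{1, …, n}`) of a
permutation `σ ∈ 𝔖_n`. -/
def permWord {n : ℕ} (σ : Equiv.Perm (Fin n)) : List ℕ :=
  List.ofFn fun i => (σ i : ℕ) + 1

/-- The shape of a tableau given as a list of rows: the list of row lengths. -/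
def shape (L : List (List ℕ)) : List ℕ := L.map List.length

/-- The entry of `L` in row `i` and column `j` (rows and columns indexed from 0),
defaulting to `0` outside the tableau. -/
def ent (L : List (List ℕ)) (i j : ℕ) : ℕ := (L.getD i []).getD j 0

/-- `L` is a standard Young tableau, presented as its list of rows: row lengths
weakly decrease (so the shape is a Young diagram), rows are nonempty, entries
strictly increase along rows and down columns, and the multiset of entries is
exactly `{1, …, n}` where `n` is the number of boxes. -/
def IsSYTList (L : List (List ℕ)) : Prop :=
  (∀ r ∈ L, r ≠ []) ∧
  (∀ i : ℕ, (L.getD (i + 1) []).length ≤ (L.getD i []).length) ∧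
  (∀ r ∈ L, r.Chain' (· < ·)) ∧
  (∀ i j : ℕ, j < (L.getD (i + 1) []).length → ent L i j < ent L (i + 1) j) ∧
  List.Perm L.flatten (List.range' 1 L.flatten.length)



namespace SchenstedFirstRow

/-- One step of first-row (patience) insertion. -/
def step (r : List ℕ) (x : ℕ) : List ℕ := (insertRow r x).1

/-- The first row of the insertion tableau, computed directly. -/
def row1 (w : List ℕ) : List ℕ := w.foldl step []

lemma insertTab_row0 (P : List (List ℕ)) (x : ℕ) :
    (insertTab P x).1.getD 0 [] = step (P.getD 0 []) x := by
  cases P with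
  | nil => simp [insertTab, step, insertRow]
  | cons r rest =>
    simp only [insertTab, step]
    rcases h : insertRow r x with ⟨r', o⟩
    cases o <;> simp [h]

lemma schenstedAux_row0 (w : List ℕ) : ∀ P Q k,
    (schenstedAux (P, Q) k w).1.getD 0 [] = w.foldl step (P.getD 0 []) := by
  induction w with
  | nil => intro P Q k; simp [schenstedAux]
  | cons x xs ih =>
    intro P Q k
    simp only [schenstedAux, List.foldl_cons]
    rw [ih, insertTab_row0]

lemma schensted_row0 (w : List ℕ) : (schensted w).1.getD 0 [] = row1 w := by
  have := schenstedAux_row0 w [] [] 1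
  simpa [schensted, row1] using this

lemma getD_last {l : List ℕ} {k : ℕ} (h : l.length = k + 1) :
    l.getLast? = some (l.getD k 0) := by
  have hk : k < l.length := by omega
  rw [List.getLast?_eq_getElem?, h, Nat.add_sub_cancel, List.getElem?_eq_getElem hk,
    List.getD_eq_getElem l 0 hk]

lemma getD_concat (l : List ℕ) (x : ℕ) : (l ++ [x]).getD l.length 0 = x := by
  have : l.length < (l ++ [x]).length := by simp
  rw [List.getD_eq_getElem _ _ this, List.getElem_append_right (le_refl _)]
  simp

lemma getD_append_left {l : List ℕ} (l' : List ℕ) {j : ℕ} (h : j < l.length) :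
    (l ++ l').getD j 0 = l.getD j 0 := by
  have h2 : j < (l ++ l').length := by simp; omega
  rw [List.getD_eq_getElem _ _ h2, List.getD_eq_getElem _ _ h, List.getElem_append_left]

/-- Monotone along a `<`-pairwise list. -/
lemma pairwise_getD_le {R : List ℕ} (hR : R.Pairwise (· < ·)) {i k : ℕ}
    (hik : i ≤ k) (hk : k < R.length) : R.getD i 0 ≤ R.getD k 0 := by
  rcases eq_or_lt_of_le hik with rfl | hik
  · exact le_refl _
  · have hi : i < R.length := lt_trans hik hk
    rw [List.getD_eq_getElem _ _ hi, List.getD_eq_getElem _ _ hk]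
    exact le_of_lt (List.pairwise_iff_get.mp hR ⟨i, hi⟩ ⟨k, hk⟩ hik)

/-- The key invariants of patience sorting's first row. -/
lemma row1_spec : ∀ (w : List ℕ), w.Nodup →
    (∀ a ∈ row1 w, a ∈ w) ∧
    (row1 w).Pairwise (· < ·) ∧
    (∀ j, j < (row1 w).length → ∃ l : List ℕ, l.Sublist w ∧ l.Chain' (· < ·) ∧
        l.length = j + 1 ∧ l.getD j 0 = (row1 w).getD j 0) ∧
    (∀ l : List ℕ, l.Sublist w → l.Chain' (· < ·) → ∀ j, l.length = j + 1 →
        j < (row1 w).length ∧ (row1 w).getD j 0 ≤ l.getD j 0) := by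
  intro w
  induction w using List.reverseRecOn with
  | nil =>
    intro _
    refine ⟨by simp [row1, step], by simp [row1, step], by simp [row1, step], ?_⟩
    intro l hl _ j hj
    rw [List.sublist_nil.mp hl] at hj
    simp at hj
  | append_singleton ws x ih =>
    intro hw
    have hws : ws.Nodup := (List.nodup_append.mp hw).1
    have hx : x ∉ ws := fun hmem => (List.nodup_append'.mp hw).2.2 hmem (by simp)
    obtain ⟨ih0, ih1, ih2, ih3⟩ := ih hws
    set R := row1 ws with hR
    have hrow : row1 (ws ++ [x]) = step R x := by
      rw [row1, List.foldl_append]; rfl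
    -- entries of R are in ws, hence ≠ x
    have hne : ∀ a ∈ R, a ≠ x := fun a ha h => hx (h ▸ ih0 a ha)
    rcases hfind : R.findIdx? (fun y => x < y) with _ | j0
    · -- append case
      have hstep : step R x = R ++ [x] := by
        simp only [step, insertRow, hfind]
      rw [hrow, hstep]
      have hall : ∀ y ∈ R, y < x := by
        intro y hy
        have := List.findIdx?_eq_none_iff.mp hfind y hy
        have hle : ¬ x < y := by simpa using this
        exact lt_of_le_of_ne (not_lt.mp hle) (hne y hy)
      refine ⟨?_, ?_, ?_, ?_⟩
      · intro a ha
        rcases List.mem_append.mp ha with h | h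
        · exact List.mem_append.mpr (Or.inl (ih0 a h))
        · exact List.mem_append.mpr (Or.inr h)
      · rw [List.pairwise_append]
        exact ⟨ih1, List.pairwise_singleton _ _, fun a ha b hb => by
          rw [List.mem_singleton.mp hb]; exact hall a ha⟩
      · intro j hj
        rw [List.length_append, List.length_singleton] at hj
        rcases lt_or_eq_of_le (Nat.lt_succ_iff.mp hj) with hj' | hj'
        · obtain ⟨l, hl1, hl2, hl3, hl4⟩ := ih2 j hj'
          exact ⟨l, hl1.trans (List.sublist_append_left _ _), hl2, hl3,
            by rw [hl4, getD_append_left _ hj']⟩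
        · subst hj'
          rcases Nat.eq_zero_or_pos R.length with h0 | h0
          · refine ⟨[x], ?_, List.isChain_singleton x, by simp [h0], ?_⟩
            · exact (List.sublist_append_right ws [x])
            · rw [h0]
              have : R = [] := List.length_eq_zero_iff.mp h0
              simp [this]
          · obtain ⟨j1, hj1⟩ : ∃ j1, R.length = j1 + 1 :=
              ⟨R.length - 1, by omega⟩
            obtain ⟨l, hl1, hl2, hl3, hl4⟩ := ih2 j1 (by omega)
            refine ⟨l ++ [x], hl1.append (List.Sublist.refl _), ?_, by simp [hl3, hj1], ?_⟩
            · show List.IsChain _ _; rw [List.isChain_append]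
              refine ⟨hl2, List.isChain_singleton x, ?_⟩
              intro a ha b hb
              rw [getD_last hl3] at ha
              rw [Option.mem_def, Option.some_inj] at ha
              simp only [List.head?_cons, Option.mem_def, Option.some_inj] at hb
              subst ha; subst hb
              rw [hl4]
              have hmem : R.getD j1 0 ∈ R := by
                rw [List.getD_eq_getElem _ _ (show j1 < R.length by omega)]
                exact List.getElem_mem _
              exact hall _ hmem
            · have h1 : (l ++ [x]).getD R.length 0 = x := by
                rw [show R.length = l.length by omega, getD_concat]
              have h2 : (R ++ [x]).getD R.length 0 = x := getD_concat R x
              rw [h1, h2]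
      · intro l hl hc j hlen
        rw [List.length_append, List.length_singleton]
        obtain ⟨l1, l2, rfl, h1, h2⟩ := List.sublist_append_iff.mp hl
        rcases List.sublist_singleton.mp h2 with rfl | rfl
        · rw [List.append_nil] at *
          obtain ⟨ha, hb⟩ := ih3 l1 h1 hc j hlen
          exact ⟨by omega, by rw [getD_append_left _ ha]; exact hb⟩
        · have hl1 : l1.length = j := by
            simpa using hlen
          have hlast : (l1 ++ [x]).getD j 0 = x := by rw [← hl1, getD_concat]
          rw [hlast]
          rcases Nat.eq_zero_or_pos j with rfl | hjpos
          · refine ⟨by omega, ?_⟩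
            rcases Nat.eq_zero_or_pos R.length with h0 | h0
            · have : R = [] := List.length_eq_zero_iff.mp h0
              simp [this]
            · rw [getD_append_left _ h0]
              exact le_of_lt (hall _ (by
                rw [List.getD_eq_getElem _ _ h0]; exact List.getElem_mem _))
          · have hc1 : l1.Chain' (· < ·) := (List.isChain_append.mp hc).1
            obtain ⟨ha, hb⟩ := ih3 l1 h1 hc1 (j - 1) (by omega)
            refine ⟨by omega, ?_⟩
            rcases lt_or_eq_of_le (Nat.succ_le_of_lt ha) with h' | h'
            · rw [getD_append_left _ (by omega : j < R.length)]
              exact le_of_lt (hall _ (by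
                rw [List.getD_eq_getElem _ _ (by omega : j < R.length)]
                exact List.getElem_mem _))
            · have : j = R.length := by omega
              rw [this, getD_concat]
    · -- bump case
      have hstep : step R x = R.set j0 x := by
        simp only [step, insertRow, hfind]
      rw [hrow, hstep]
      obtain ⟨hj0, hidx⟩ := List.findIdx?_eq_some_iff_findIdx_eq.mp hfind
      have hxlt : x < R.getD j0 0 := by
        have hlt : List.findIdx (fun y => decide (x < y)) R < R.length := by
          rw [hidx]; exact hj0
        have h := List.findIdx_getElem (p := fun y => decide (x < y)) (xs := R) (w := hlt)
        simp only [hidx, decide_eq_true_eq] at h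
        rw [List.getD_eq_getElem _ _ hj0]
        exact h
      have hmin : ∀ i, i < j0 → R.getD i 0 < x := by
        intro i hi
        have hiR : i < R.length := lt_trans hi hj0
        have := List.not_of_lt_findIdx (xs := R) (p := fun y => x < y) (i := i)
          (by rw [hidx]; exact hi)
        rw [List.getD_eq_getElem _ _ hiR]
        have hle : ¬ x < R[i] := by simpa using this
        exact lt_of_le_of_ne (not_lt.mp hle) (hne _ (List.getElem_mem _))
      have hlen' : (R.set j0 x).length = R.length := List.length_set
      have hget : ∀ i, i < R.length →
          (R.set j0 x).getD i 0 = if j0 = i then x else R.getD i 0 := by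
        intro i hi
        rw [List.getD_eq_getElem _ _ (by omega), List.getElem_set,
          List.getD_eq_getElem _ _ hi]
      refine ⟨?_, ?_, ?_, ?_⟩
      · intro a ha
        rcases List.mem_or_eq_of_mem_set ha with h | rfl
        · exact List.mem_append.mpr (Or.inl (ih0 a h))
        · simp
      · rw [List.pairwise_iff_get]
        intro i k hik
        have hi : (i : ℕ) < R.length := by omega
        have hk : (k : ℕ) < R.length := by omega
        have hgi : (R.set j0 x).get i = (R.set j0 x).getD i 0 := by
          rw [List.getD_eq_getElem _ _ (by omega)]; simp [List.get_eq_getElem]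
        have hgk : (R.set j0 x).get k = (R.set j0 x).getD k 0 := by
          rw [List.getD_eq_getElem _ _ (by omega)]; simp [List.get_eq_getElem]
        rw [hgi, hgk, hget _ hi, hget _ hk]
        have hRik : R.getD i 0 < R.getD k 0 := by
          rw [List.getD_eq_getElem _ _ hi, List.getD_eq_getElem _ _ hk]
          exact List.pairwise_iff_get.mp ih1 ⟨i, hi⟩ ⟨k, hk⟩ hik
        by_cases h1 : j0 = (i : ℕ)
        · have h2 : ¬ j0 = (k : ℕ) := by omega
          rw [if_pos h1, if_neg h2]
          calc x < R.getD j0 0 := hxlt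
            _ ≤ R.getD k 0 := pairwise_getD_le ih1 (by omega) hk
        · by_cases h2 : j0 = (k : ℕ)
          · rw [if_neg h1, if_pos h2]
            exact hmin _ (by omega)
          · rw [if_neg h1, if_neg h2]; exact hRik
      · intro j hj
        rw [hlen'] at hj
        by_cases hjj : j = j0
        · subst hjj
          rcases Nat.eq_zero_or_pos j with rfl | hjpos
          · refine ⟨[x], List.sublist_append_right ws [x], List.isChain_singleton x,
              rfl, ?_⟩
            rw [hget 0 hj, if_pos rfl]
            rfl
          · obtain ⟨l, hl1, hl2, hl3, hl4⟩ := ih2 (j - 1) (by omega)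
            refine ⟨l ++ [x], hl1.append (List.Sublist.refl _), ?_, by simp [hl3]; omega, ?_⟩
            · show List.IsChain _ _; rw [List.isChain_append]
              refine ⟨hl2, List.isChain_singleton x, ?_⟩
              intro a ha b hb
              rw [getD_last hl3, Option.mem_def, Option.some_inj] at ha
              simp only [List.head?_cons, Option.mem_def, Option.some_inj] at hb
              subst ha; subst hb
              rw [hl4]
              exact hmin _ (by omega)
            · have hll : l.length = j := by omega
              have h1 : (l ++ [x]).getD j 0 = x := by rw [← hll, getD_concat]
              rw [h1, hget j hj, if_pos rfl]
        · obtain ⟨l, hl1, hl2, hl3, hl4⟩ := ih2 j hj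
          exact ⟨l, hl1.trans (List.sublist_append_left _ _), hl2, hl3,
            by rw [hl4, hget j hj, if_neg (fun h => hjj h.symm)]⟩
      · intro l hl hc j hlen
        rw [hlen']
        obtain ⟨l1, l2, rfl, h1, h2⟩ := List.sublist_append_iff.mp hl
        rcases List.sublist_singleton.mp h2 with rfl | rfl
        · rw [List.append_nil] at *
          obtain ⟨ha, hb⟩ := ih3 l1 h1 hc j hlen
          refine ⟨ha, ?_⟩
          rw [hget j ha]
          by_cases hjj : j0 = j
          · rw [if_pos hjj]
            subst hjj
            exact le_of_lt (lt_of_lt_of_le hxlt hb)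
          · rw [if_neg hjj]; exact hb
        · have hl1 : l1.length = j := by simpa using hlen
          have hlast : (l1 ++ [x]).getD j 0 = x := by rw [← hl1, getD_concat]
          rw [hlast]
          rcases Nat.eq_zero_or_pos j with rfl | hjpos
          · refine ⟨by omega, ?_⟩
            rw [hget 0 (by omega)]
            by_cases h00 : j0 = 0
            · rw [if_pos h00]
            · rw [if_neg h00]
              exact le_of_lt (hmin 0 (by omega))
          · have hc1 : l1.Chain' (· < ·) := (List.isChain_append.mp hc).1
            obtain ⟨ha, hb⟩ := ih3 l1 h1 hc1 (j - 1) (by omega)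
            -- last of l1 < x
            have hlx : l1.getD (j - 1) 0 < x := by
              have := (List.isChain_append.mp hc).2.2
              have h' := this (l1.getD (j - 1) 0) (by
                rw [getD_last (by omega : l1.length = (j-1) + 1)]; rfl) x (by rfl)
              exact h'
            have hRlt : R.getD (j - 1) 0 < x := lt_of_le_of_lt hb hlx
            have hj1lt : j - 1 < j0 := by
              by_contra hcon
              have : j0 ≤ j - 1 := by omega
              have := pairwise_getD_le ih1 this ha
              omega
            have hjle : j ≤ j0 := by omega
            refine ⟨by omega, ?_⟩
            rw [hget j (by omega)]
            by_cases hjj : j0 = j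
            · rw [if_pos hjj]
            · rw [if_neg hjj]
              exact le_of_lt (hmin j (by omega))

end SchenstedFirstRow

namespace SchenstedFirstRow

lemma mem_S {n : ℕ} (σ : Equiv.Perm (Fin n)) {m : ℕ} {l : List ℕ}
    (hl : l.Sublist (permWord σ)) (hc : l.Chain' (· < ·)) (hm : l.length = m) :
    ∃ s : Fin m → Fin n, StrictMono s ∧ StrictMono fun k => σ (s k) := by
  subst hm
  obtain ⟨f, hf⟩ := List.sublist_iff_exists_fin_orderEmbedding_get_eq.mp hl
  have hn : (permWord σ).length = n := by simp [permWord]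
  refine ⟨fun k => Fin.cast hn (f k), ?_, ?_⟩
  · intro a b hab
    exact f.strictMono hab
  · intro a b hab
    have hget : ∀ k, l.get k = (σ (Fin.cast hn (f k)) : ℕ) + 1 := by
      intro k
      rw [hf k]
      simp only [permWord, List.get_ofFn]
    have hlt : l.get a < l.get b :=
      List.pairwise_iff_get.mp (List.isChain_iff_pairwise.mp hc) a b hab
    rw [hget a, hget b] at hlt
    show (σ (Fin.cast hn (f a)) : ℕ) < (σ (Fin.cast hn (f b)) : ℕ)
    omega

lemma list_of_S {n m : ℕ} (σ : Equiv.Perm (Fin n)) (s : Fin m → Fin n)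
    (hs : StrictMono s) (hσs : StrictMono fun k => σ (s k)) :
    ∃ l : List ℕ, l.Sublist (permWord σ) ∧ l.Chain' (· < ·) ∧ l.length = m := by
  have h1 : (List.ofFn (fun k : Fin m => (σ (s k) : ℕ) + 1)).length = m :=
    List.length_ofFn
  have hn : (permWord σ).length = n := by simp [permWord]
  refine ⟨List.ofFn (fun k : Fin m => (σ (s k) : ℕ) + 1), ?_, ?_, h1⟩
  · rw [List.sublist_iff_exists_fin_orderEmbedding_get_eq]
    refine ⟨OrderEmbedding.ofStrictMono
      (fun i => Fin.cast hn.symm (s (Fin.cast h1 i))) ?_, ?_⟩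
    · intro a b hab
      exact hs hab
    · intro ix
      simp only [permWord, List.get_ofFn]
      rfl
  · show List.IsChain _ _; rw [List.isChain_iff_pairwise, List.pairwise_iff_get]
    intro i j hij
    simp only [List.get_ofFn]
    have h2 := hσs (show Fin.cast h1 i < Fin.cast h1 j from hij)
    exact Nat.succ_lt_succ h2

end SchenstedFirstRow



/-- **First row of the Schensted shape**: if the Schensted correspondence associates
to `σ ∈ 𝔖_n` the pair `(T, U)` of shape `λ`, then `λ₁` (the length of the first row)
is the largest `m` for which there exist indices `i₁ < … < i_m` with
`σ(i₁) < … < σ(i_m)`. -/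
theorem schensted_first_row (n : ℕ) (σ : Equiv.Perm (Fin n)) :
    IsGreatest
      {m : ℕ | ∃ s : Fin m → Fin n, StrictMono s ∧ StrictMono fun k => σ (s k)}
      ((schensted (permWord σ)).1.getD 0 []).length := by
  have hw : (permWord σ).Nodup := by
    rw [permWord, List.nodup_ofFn]
    intro a b hab
    have : σ a = σ b := by
      apply Fin.ext
      simpa using hab
    exact σ.injective this
  obtain ⟨h0, h1, h2, h3⟩ := SchenstedFirstRow.row1_spec (permWord σ) hw
  rw [SchenstedFirstRow.schensted_row0]
  constructor
  · cases hL : (SchenstedFirstRow.row1 (permWord σ)).length with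
    | zero => exact ⟨Fin.elim0, fun a => a.elim0, fun a => a.elim0⟩
    | succ k =>
      obtain ⟨l, hl1, hl2, hl3, _⟩ := h2 k (by omega)
      exact SchenstedFirstRow.mem_S σ hl1 hl2 (by omega)
  · intro m hm
    obtain ⟨s, hs1, hs2⟩ := hm
    obtain ⟨l, hl, hc, hlen⟩ := SchenstedFirstRow.list_of_S σ s hs1 hs2
    cases m with
    | zero => exact Nat.zero_le _
    | succ j =>
      have := (h3 l hl hc j hlen).1
      omega
end

section
/- Symmetry of the Schensted correspondence: If the Schensted correspondence associates to σ ∈ 𝔖_n the pair (T, U) of standard Young tableaux, then it associates to the inverse permutation σ⁻¹ the pair (U, T). -/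
abbrev Pt := ℕ × ℕ

def schB : List (List ℕ) × List (List ℕ) → List Pt → List (List ℕ) × List (List ℕ)
  | PQ, [] => PQ
  | (P, Q), p :: w => schB ((insertTab P p.2).1, addBox Q (insertTab P p.2).2 p.1) w

def rowRun : List ℕ → List Pt → List ℕ × List ℕ × List Pt
  | r, [] => (r, [], [])
  | r, p :: w =>
    match insertRow r p.2 with
    | (r', none) => let z := rowRun r' w; (z.1, p.1 :: z.2.1, z.2.2)
    | (r', some y) => let z := rowRun r' w; (z.1, z.2.1, (p.1, y) :: z.2.2)

lemma schenstedAux_eq_schB : ∀ (xs : List ℕ) (P Q : List (List ℕ)) (k : ℕ),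
    schenstedAux (P, Q) k xs = schB (P, Q) ((List.range' k xs.length).zip xs) := by
  intro xs
  induction xs with
  | nil => intro P Q k; rfl
  | cons x xs ih =>
      intro P Q k
      simp only [List.length_cons, List.range'_succ, List.zip_cons_cons, schenstedAux, schB]
      exact ih _ _ _

lemma addBox_zero (q : List ℕ) (Q : List (List ℕ)) (i : ℕ) :
    addBox (q :: Q) 0 i = (q ++ [i]) :: Q := by
  simp [addBox]

lemma addBox_succ (q : List ℕ) (Q : List (List ℕ)) (j i : ℕ) :
    addBox (q :: Q) (j + 1) i = q :: addBox Q j i := by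
  unfold addBox
  by_cases h : j < Q.length
  · rw [dif_pos (by simpa using Nat.succ_lt_succ h), dif_pos h]
    simp
  · rw [dif_neg (by simpa using fun hh => h (Nat.lt_of_succ_lt_succ hh)), dif_neg h]
    simp

lemma peel : ∀ (w : List Pt) (r : List ℕ) (q : List ℕ) (P Q : List (List ℕ)),
    schB (r :: P, q :: Q) w =
      ((rowRun r w).1 :: (schB (P, Q) (rowRun r w).2.2).1,
       (q ++ (rowRun r w).2.1) :: (schB (P, Q) (rowRun r w).2.2).2) := by
  intro w
  induction w with
  | nil => intro r q P Q; simp [schB, rowRun]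
  | cons p w ih =>
      intro r q P Q
      rcases p with ⟨i, x⟩
      rcases h : insertRow r x with ⟨r', o⟩
      cases o with
      | none =>
          have h1 : insertTab (r :: P) x = (r' :: P, 0) := by
            simp [insertTab, h]
          simp only [schB, rowRun, h, h1, addBox_zero]
          rw [ih]
          simp
      | some y =>
          have h1 : insertTab (r :: P) x =
              (r' :: (insertTab P y).1, (insertTab P y).2 + 1) := by
            simp [insertTab, h]
          simp only [schB, rowRun, h, h1, addBox_succ]
          rw [ih]

def sch0 (w : List Pt) : List (List ℕ) × List (List ℕ) := schB ([], []) w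

lemma sch0_cons (i x : ℕ) (w : List Pt) :
    sch0 ((i, x) :: w) =
      ((rowRun [] ((i,x) :: w)).1 :: (sch0 (rowRun [] ((i,x) :: w)).2.2).1,
       (rowRun [] ((i,x) :: w)).2.1 :: (sch0 (rowRun [] ((i,x) :: w)).2.2).2) := by
  have h0 : insertRow [] x = ([x], none) := by simp [insertRow]
  have h1 : insertTab [] x = ([[x]], 0) := rfl
  show schB ([],[]) _ = _
  simp only [schB, h1, rowRun, h0]
  have : addBox [] 0 i = [[i]] := by simp [addBox]
  rw [this, peel]
  simp [sch0]

/-! ## Piles -/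

def tops (B : List (List Pt)) : List ℕ := B.map fun pl => (pl.headD (0,0)).2
def lasts (B : List (List Pt)) : List ℕ := B.map fun pl => (pl.getLastD (0,0)).1

def corners : List Pt → List Pt
  | a :: b :: l => (a.1, b.2) :: corners (b :: l)
  | _ => []

def cornersAll (B : List (List Pt)) : List Pt := B.flatMap corners

def addPt (B : List (List Pt)) (p : Pt) : List (List Pt) :=
  match B.findIdx? (fun pl => decide (p.2 < (pl.headD (0,0)).2)) with
  | none => B ++ [[p]]
  | some j => B.set j (p :: B.getD j [])

def PRel (p q : Pt) : Prop := p.1 < q.1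
def PileRel (p q : Pt) : Prop := q.1 < p.1 ∧ p.2 < q.2

def GoodPiles (w : List Pt) (B : List (List Pt)) : Prop :=
  B.flatten.Perm w ∧ (∀ pl ∈ B, pl ≠ []) ∧ (∀ pl ∈ B, pl.Chain' PileRel) ∧
  ∀ j : ℕ, ∀ p ∈ B.getD (j+1) [], ∃ q ∈ B.getD j [], q.1 < p.1 ∧ q.2 < p.2

lemma getD_set_self {α : Type*} (l : List α) (j : ℕ) (v d : α) (h : j < l.length) :
    (l.set j v).getD j d = v := by
  rw [List.getD_eq_getElem _ _ (by simpa using h)]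
  simp [List.getElem_set_self]

lemma getD_set_ne {α : Type*} (l : List α) (j k : ℕ) (v d : α) (h : k ≠ j) :
    (l.set j v).getD k d = l.getD k d := by
  by_cases hk : k < l.length
  · rw [List.getD_eq_getElem _ _ (by simpa using hk), List.getD_eq_getElem _ _ hk]
    exact List.getElem_set_ne (fun hh => h hh.symm) _
  · rw [List.getD_eq_default _ _ (by simpa using Nat.le_of_not_lt hk),
      List.getD_eq_default _ _ (Nat.le_of_not_lt hk)]

lemma getD_append_lt {α : Type*} (B C : List α) (k : ℕ) (d : α) (h : k < B.length) :
    (B ++ C).getD k d = B.getD k d := by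
  rw [List.getD_eq_getElem _ _ (by simp; omega), List.getD_eq_getElem _ _ h,
    List.getElem_append_left h]

lemma mem_getD_mem (B : List (List Pt)) (k : ℕ) (p : Pt) (h : p ∈ B.getD k []) :
    ∃ pl ∈ B, p ∈ pl := by
  by_cases hk : k < B.length
  · exact ⟨B[k], List.getElem_mem hk, by rwa [List.getD_eq_getElem _ _ hk] at h⟩
  · rw [List.getD_eq_default _ _ (Nat.le_of_not_lt hk)] at h; cases h

lemma flatMap_set_cons_perm (f : List Pt → List Pt) :
    ∀ (B : List (List Pt)) (j : ℕ) (v : List Pt) (c : Pt), j < B.length →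
      f v = c :: f (B.getD j []) →
      ((B.set j v).flatMap f).Perm (c :: B.flatMap f) := by
  intro B
  induction B with
  | nil => intro j v c h; simp at h
  | cons pl B ih =>
      intro j v c hj hf
      cases j with
      | zero =>
          simp only [List.set_cons_zero, List.flatMap_cons]
          rw [hf]
          simp [List.getD_cons_zero]
      | succ j =>
          simp only [List.set_cons_succ, List.flatMap_cons]
          have := ih j v c (by simpa using hj) (by simpa [List.getD_cons_succ] using hf)
          exact (List.Perm.append_left _ this).trans List.perm_middle

lemma flatten_set_cons_perm (B : List (List Pt)) (j : ℕ) (p : Pt) (hj : j < B.length) :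
    ((B.set j (p :: B.getD j [])).flatten).Perm (p :: B.flatten) := by
  have h := flatMap_set_cons_perm id B j (p :: B.getD j []) p hj rfl
  simpa [List.flatMap_id] using h

lemma headD_of_ne_nil (pl : List Pt) (h : pl ≠ []) (d : Pt) :
    pl.headD d = pl.head h := by
  cases pl with
  | nil => exact absurd rfl h
  | cons a l => rfl

/-! ## Step lemmas -/

lemma tops_eq_map (B : List (List Pt)) :
    tops B = B.map fun pl => (pl.headD (0,0)).2 := rfl

lemma findIdx?_tops (B : List (List Pt)) (x : ℕ) :
    (tops B).findIdx? (fun y => decide (x < y)) =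
      B.findIdx? (fun pl => decide (x < (pl.headD (0,0)).2)) := by
  rw [tops_eq_map, List.findIdx?_map]
  rfl

lemma head_mem_proc {proc : List Pt} {B : List (List Pt)} (hG : GoodPiles proc B)
    {pl : List Pt} (hpl : pl ∈ B) (h : pl ≠ []) : pl.head h ∈ proc := by
  have : pl.head h ∈ B.flatten := by
    rw [List.mem_flatten]
    exact ⟨pl, hpl, List.head_mem h⟩
  exact hG.1.subset this

lemma addPt_mk (B : List (List Pt)) (i x : ℕ) :
    addPt B (i,x) = match B.findIdx? (fun pl => decide (x < (pl.headD (0,0)).2)) with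
      | none => B ++ [[(i,x)]]
      | some j => B.set j ((i,x) :: B.getD j []) := rfl

lemma insertRow_mk (r : List ℕ) (x : ℕ) :
    insertRow r x = match r.findIdx? (fun y => decide (x < y)) with
      | none => (r ++ [x], none)
      | some j => (r.set j x, r[j]?) := rfl

lemma perm_append_single (l : List Pt) (a : Pt) : (a :: l).Perm (l ++ [a]) := by
  simpa using (List.perm_middle (l₁ := l) (l₂ := []) (a := a)).symm

lemma step_none (B : List (List Pt)) (proc : List Pt) (i x : ℕ)
    (hG : GoodPiles proc B)
    (hi : ∀ p ∈ proc, p.1 < i)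
    (hx : x ∉ proc.map Prod.snd)
    (hnone : B.findIdx? (fun pl => decide (x < (pl.headD (0,0)).2)) = none) :
    insertRow (tops B) x = (tops B ++ [x], none) ∧
    addPt B (i, x) = B ++ [[(i,x)]] ∧
    GoodPiles (proc ++ [(i,x)]) (B ++ [[(i,x)]]) := by
  have hfi : (tops B).findIdx? (fun y => decide (x < y)) = none := by
    rw [findIdx?_tops]; exact hnone
  refine ⟨by rw [insertRow_mk, hfi], by rw [addPt_mk, hnone], ?_, ?_, ?_, ?_⟩
  · rw [List.flatten_append]
    simpa using hG.1.append (List.Perm.refl [(i,x)])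
  · intro pl hpl
    rcases List.mem_append.1 hpl with h | h
    · exact hG.2.1 pl h
    · simp at h; subst h; simp
  · intro pl hpl
    rcases List.mem_append.1 hpl with h | h
    · exact hG.2.2.1 pl h
    · simp at h; subst h; exact List.isChain_singleton _
  · -- dominance
    intro j p hp
    rcases Nat.lt_trichotomy (j+1) B.length with hlt | heq | hgt
    · rw [getD_append_lt _ _ _ _ hlt] at hp
      obtain ⟨q, hq, hq2⟩ := hG.2.2.2 j p hp
      exact ⟨q, by rw [getD_append_lt _ _ _ _ (by omega)]; exact hq, hq2⟩
    · -- new pile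
      have hjB : j < B.length := by omega
      have hget : (B ++ [[(i,x)]]).getD (j+1) [] = [(i,x)] := by
        rw [List.getD_eq_getElem _ _ (by simp; omega)]
        rw [List.getElem_append_right (by omega)]
        simp [heq]
      rw [hget] at hp
      simp at hp
      subst hp
      -- witness: head of pile j of B
      set pile := B.getD j [] with hpile
      have hmem : pile ∈ B := by
        rw [hpile, List.getD_eq_getElem _ _ hjB]; exact List.getElem_mem hjB
      have hne : pile ≠ [] := hG.2.1 _ hmem
      have hhm : pile.head hne ∈ proc := head_mem_proc hG hmem hne
      have hle : ¬ (x < (pile.headD (0,0)).2) := by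
        have := List.findIdx?_eq_none_iff.1 hnone _ hmem
        simpa using this
      rw [headD_of_ne_nil _ hne] at hle
      have hne2 : (pile.head hne).2 ≠ x := by
        intro hc
        exact hx (by rw [← hc]; exact List.mem_map_of_mem (f := Prod.snd) hhm)
      refine ⟨pile.head hne, ?_, hi _ hhm, by omega⟩
      rw [getD_append_lt _ _ _ _ hjB]
      exact List.head_mem hne
    · have hget : (B ++ [[(i,x)]]).getD (j+1) [] = [] := by
        apply List.getD_eq_default
        simp; omega
      rw [hget] at hp; cases hp

lemma step_some (B : List (List Pt)) (proc : List Pt) (i x j : ℕ)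
    (hG : GoodPiles proc B)
    (hi : ∀ p ∈ proc, p.1 < i)
    (hx : x ∉ proc.map Prod.snd)
    (hj : B.findIdx? (fun pl => decide (x < (pl.headD (0,0)).2)) = some j) :
    j < B.length ∧
    insertRow (tops B) x =
      ((tops B).set j x, some (((B.getD j []).headD (0,0)).2)) ∧
    addPt B (i, x) = B.set j ((i,x) :: B.getD j []) ∧
    GoodPiles (proc ++ [(i,x)]) (B.set j ((i,x) :: B.getD j [])) := by
  obtain ⟨hjB, hpj, hprev⟩ := List.findIdx?_eq_some_iff_getElem.1 hj
  have hfi : (tops B).findIdx? (fun y => decide (x < y)) = some j := by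
    rw [findIdx?_tops]; exact hj
  set pile := B.getD j [] with hpile
  have hpileB : pile = B[j] := by rw [hpile, List.getD_eq_getElem _ _ hjB]
  have hmem : pile ∈ B := by rw [hpileB]; exact List.getElem_mem hjB
  have hne : pile ≠ [] := hG.2.1 _ hmem
  have hhm : pile.head hne ∈ proc := head_mem_proc hG hmem hne
  have hxlt : x < (pile.headD (0,0)).2 := by
    rw [hpileB]; simpa using hpj
  have htopsj : (tops B)[j]? = some ((pile.headD (0,0)).2) := by
    rw [tops_eq_map, List.getElem?_map, List.getElem?_eq_getElem hjB]
    simp [hpileB]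
  refine ⟨hjB, ?_, by rw [addPt_mk, hj], ?_, ?_, ?_, ?_⟩
  · rw [insertRow_mk, hfi]
    show ((tops B).set j x, (tops B)[j]?) = _
    rw [htopsj]
  · exact (flatten_set_cons_perm B j (i,x) hjB).trans
      ((hG.1.cons (i,x)).trans (perm_append_single proc (i,x)))
  · intro pl hpl
    rcases List.mem_or_eq_of_mem_set hpl with h | h
    · exact hG.2.1 pl h
    · subst h; simp
  · intro pl hpl
    rcases List.mem_or_eq_of_mem_set hpl with h | h
    · exact hG.2.2.1 pl h
    · subst h
      have hch : pile.Chain' PileRel := hG.2.2.1 _ hmem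
      refine List.isChain_cons.2 ⟨?_, hch⟩
      intro q hq
      have hq' : q = pile.head hne := by
        rw [List.head?_eq_head hne] at hq
        exact (Option.some_inj.1 hq).symm
      subst hq'
      constructor
      · exact hi _ hhm
      · rw [headD_of_ne_nil _ hne] at hxlt; exact hxlt
  · -- dominance
    intro k p hp
    by_cases hk1 : k + 1 = j
    · -- p in new pile j
      rw [show (k+1) = j from hk1, getD_set_self _ _ _ _ hjB] at hp
      rcases List.mem_cons.1 hp with rfl | hp'
      · -- p = (i,x); witness head of pile k of B
        set pk := B.getD k [] with hpk
        have hkB : k < B.length := by omega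
        have hpkB : pk = B[k] := by rw [hpk, List.getD_eq_getElem _ _ hkB]
        have hmemk : pk ∈ B := by rw [hpkB]; exact List.getElem_mem hkB
        have hnek : pk ≠ [] := hG.2.1 _ hmemk
        have hhmk : pk.head hnek ∈ proc := head_mem_proc hG hmemk hnek
        have hle : ¬ (x < (pk.headD (0,0)).2) := by
          have := hprev k (by omega)
          rw [← hpkB] at this
          simpa using this
        rw [headD_of_ne_nil _ hnek] at hle
        have hne2 : (pk.head hnek).2 ≠ x := by
          intro hc
          exact hx (by rw [← hc]; exact List.mem_map_of_mem (f := Prod.snd) hhmk)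
        refine ⟨pk.head hnek, ?_, hi _ hhmk, by omega⟩
        rw [getD_set_ne _ _ _ _ _ (by omega)]
        exact List.head_mem hnek
      · -- p old in pile j = k+1 : old witness
        have hp'' : p ∈ B.getD (k+1) [] := by rw [hk1]; exact hp'
        obtain ⟨q, hq, hq2⟩ := hG.2.2.2 k p hp''
        exact ⟨q, by rw [getD_set_ne _ _ _ _ _ (by omega)]; exact hq, hq2⟩
    · rw [getD_set_ne _ _ _ _ _ hk1] at hp
      obtain ⟨q, hq, hq2⟩ := hG.2.2.2 k p hp
      by_cases hkj : k = j
      · subst hkj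
        refine ⟨q, ?_, hq2⟩
        rw [getD_set_self _ _ _ _ hjB]
        exact List.mem_cons_of_mem _ hq
      · exact ⟨q, by rw [getD_set_ne _ _ _ _ _ hkj]; exact hq, hq2⟩

/-! ## tops/lasts/corners update lemmas -/

lemma getLastD_of_ne_nil (pl : List Pt) (h : pl ≠ []) (d : Pt) :
    pl.getLastD d = pl.getLast h := by
  rw [List.getLastD_eq_getLast?, List.getLast?_eq_getLast h]
  rfl

lemma set_eq_self_of_getElem {α : Type*} (l : List α) (j : ℕ) (v : α)
    (h : j < l.length) (hv : l[j] = v) : l.set j v = l := by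
  subst hv
  apply List.ext_getElem (by simp)
  intro n h1 h2
  rw [List.getElem_set]
  split
  · subst ‹j = n›; rfl
  · rfl

lemma tops_append_single (B : List (List Pt)) (i x : ℕ) :
    tops (B ++ [[(i,x)]]) = tops B ++ [x] := by simp [tops]

lemma lasts_append_single (B : List (List Pt)) (i x : ℕ) :
    lasts (B ++ [[(i,x)]]) = lasts B ++ [i] := by simp [lasts]

lemma tops_set (B : List (List Pt)) (j : ℕ) (pl : List Pt) :
    tops (B.set j pl) = (tops B).set j ((pl.headD (0,0)).2) := by
  simp [tops, List.map_set]

lemma getLastD_congr (pl : List Pt) (h : pl ≠ []) (d1 d2 : Pt) :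
    pl.getLastD d1 = pl.getLastD d2 := by
  rw [List.getLastD_eq_getLast?, List.getLastD_eq_getLast?, List.getLast?_eq_getLast h]
  rfl

lemma lasts_set_cons (B : List (List Pt)) (j : ℕ) (i x : ℕ)
    (hj : j < B.length) (hne : B.getD j [] ≠ []) :
    lasts (B.set j ((i,x) :: B.getD j [])) = lasts B := by
  have hBj : B.getD j [] = B[j] := List.getD_eq_getElem _ _ hj
  rw [lasts, List.map_set]
  show (lasts B).set j ((((i,x) :: B.getD j []).getLastD (0,0)).1) = lasts B
  rw [List.getLastD_cons]
  have hlen : j < (lasts B).length := by simp [lasts, hj]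
  apply set_eq_self_of_getElem _ _ _ hlen
  simp only [lasts, List.getElem_map]
  rw [hBj] at hne ⊢
  exact (congrArg Prod.fst (getLastD_congr _ hne _ _)).symm

lemma cornersAll_append_single (B : List (List Pt)) (i x : ℕ) :
    cornersAll (B ++ [[(i,x)]]) = cornersAll B := by
  simp [cornersAll, corners]

lemma corners_cons (i x : ℕ) (pile : List Pt) (hne : pile ≠ []) :
    corners ((i,x) :: pile) = (i, (pile.headD (0,0)).2) :: corners pile := by
  cases pile with
  | nil => exact absurd rfl hne
  | cons b t => rfl

lemma cornersAll_set_perm (B : List (List Pt)) (j : ℕ) (i x : ℕ)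
    (hj : j < B.length) (hne : B.getD j [] ≠ []) :
    (cornersAll (B.set j ((i,x) :: B.getD j []))).Perm
      ((i, ((B.getD j []).headD (0,0)).2) :: cornersAll B) :=
  flatMap_set_cons_perm corners B j _ _ hj (corners_cons i x _ hne)

lemma rowRun_cons (r : List ℕ) (i x : ℕ) (w : List Pt) :
    rowRun r ((i,x) :: w) = (match insertRow r x with
      | (r', none) => ((rowRun r' w).1, i :: (rowRun r' w).2.1, (rowRun r' w).2.2)
      | (r', some y) => ((rowRun r' w).1, (rowRun r' w).2.1, (i, y) :: (rowRun r' w).2.2)) := rfl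

/-! ## The run lemma -/

lemma run : ∀ (w : List Pt) (B : List (List Pt)) (proc : List Pt),
    GoodPiles proc B →
    (∀ p ∈ proc, ∀ q ∈ w, p.1 < q.1) →
    w.Pairwise PRel →
    ((proc ++ w).map Prod.snd).Nodup →
    GoodPiles (proc ++ w) (w.foldl addPt B) ∧
    (rowRun (tops B) w).1 = tops (w.foldl addPt B) ∧
    lasts (w.foldl addPt B) = lasts B ++ (rowRun (tops B) w).2.1 ∧
    (rowRun (tops B) w).2.2.Pairwise PRel ∧
    (cornersAll (w.foldl addPt B)).Perm (cornersAll B ++ (rowRun (tops B) w).2.2) ∧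
    (∀ p ∈ (rowRun (tops B) w).2.2, p.1 ∈ w.map Prod.fst) ∧
    (rowRun (tops B) w).1.length + (rowRun (tops B) w).2.2.length
      = (tops B).length + w.length := by
  intro w
  induction w with
  | nil =>
      intro B proc hG hsep hpw hnd
      exact ⟨by simpa using hG, rfl, by simp [rowRun], by simp [rowRun],
        by simp [rowRun], by simp [rowRun], by simp [rowRun]⟩
  | cons p w ih =>
      rcases p with ⟨i, x⟩
      intro B proc hG hsep hpw hnd
      have hi : ∀ q ∈ proc, q.1 < i :=
        fun q hq => hsep q hq (i,x) (List.mem_cons_self)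
      have hnd2 : (proc.map Prod.snd ++ x :: w.map Prod.snd).Nodup := by
        simpa using hnd
      have hx : x ∉ proc.map Prod.snd :=
        fun hc => (List.nodup_append.1 hnd2).2.2 x hc x List.mem_cons_self rfl
      have hpw' : w.Pairwise PRel := (List.pairwise_cons.1 hpw).2
      have hhead : ∀ q ∈ w, i < q.1 := fun q hq => (List.pairwise_cons.1 hpw).1 q hq
      have hsep' : ∀ p ∈ proc ++ [(i,x)], ∀ q ∈ w, p.1 < q.1 := by
        intro p hp q hq
        rcases List.mem_append.1 hp with h | h
        · exact hsep p h q (List.mem_cons_of_mem _ hq)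
        · simp at h; subst h; exact hhead q hq
      have hnd' : (((proc ++ [(i,x)]) ++ w).map Prod.snd).Nodup := by
        rw [← List.append_cons]; exact hnd
      have hfold : ((i,x) :: w).foldl addPt B = w.foldl addPt (addPt B (i,x)) := rfl
      cases hfind : B.findIdx? (fun pl => decide (x < (pl.headD (0,0)).2)) with
      | none =>
          obtain ⟨hins, haddpt, hG'⟩ := step_none B proc i x hG hi hx hfind
          have hz : rowRun (tops B) ((i,x) :: w) =
              ((rowRun (tops B ++ [x]) w).1,
               i :: (rowRun (tops B ++ [x]) w).2.1,
               (rowRun (tops B ++ [x]) w).2.2) := by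
            rw [rowRun_cons, hins]
          have htB : tops (addPt B (i,x)) = tops B ++ [x] := by
            rw [haddpt, tops_append_single]
          obtain ⟨ih1, ih2, ih3, ih4, ih5, ih6, ih7⟩ :=
            ih (addPt B (i,x)) (proc ++ [(i,x)]) (by rwa [haddpt]) hsep' hpw' hnd'
          rw [htB] at ih2 ih3 ih4 ih5 ih6 ih7
          refine ⟨?_, ?_, ?_, ?_, ?_, ?_, ?_⟩
          · rw [List.append_cons, hfold]; exact ih1
          · rw [hz, hfold]; exact ih2
          · rw [hz, hfold, ih3, haddpt, lasts_append_single]; simp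
          · rw [hz]; exact ih4
          · rw [hz, hfold]
            refine ih5.trans ?_
            rw [haddpt, cornersAll_append_single]
          · rw [hz]
            intro p hp
            exact List.mem_cons_of_mem _ (ih6 p hp)
          · rw [hz]
            simp only [List.length_cons, List.map_cons]
            rw [ih7]
            simp; omega
      | some j =>
          obtain ⟨hjB, hins, haddpt, hG'⟩ := step_some B proc i x j hG hi hx hfind
          set pile := B.getD j [] with hpile
          have hne : pile ≠ [] := by
            apply hG.2.1
            rw [hpile, List.getD_eq_getElem _ _ hjB]
            exact List.getElem_mem hjB
          set y := (pile.headD (0,0)).2 with hy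
          have hz : rowRun (tops B) ((i,x) :: w) =
              ((rowRun ((tops B).set j x) w).1,
               (rowRun ((tops B).set j x) w).2.1,
               (i, y) :: (rowRun ((tops B).set j x) w).2.2) := by
            rw [rowRun_cons, hins]
          have htB : tops (addPt B (i,x)) = (tops B).set j x := by
            rw [haddpt, tops_set]; rfl
          obtain ⟨ih1, ih2, ih3, ih4, ih5, ih6, ih7⟩ :=
            ih (addPt B (i,x)) (proc ++ [(i,x)]) (by rwa [haddpt]) hsep' hpw' hnd'
          rw [htB] at ih2 ih3 ih4 ih5 ih6 ih7
          refine ⟨?_, ?_, ?_, ?_, ?_, ?_, ?_⟩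
          · rw [List.append_cons, hfold]; exact ih1
          · rw [hz, hfold]; exact ih2
          · rw [hz, hfold, ih3, haddpt, lasts_set_cons _ _ _ _ hjB hne]
          · rw [hz]
            refine List.pairwise_cons.2 ⟨?_, ih4⟩
            intro p hp
            obtain ⟨q, hq, hq1⟩ := List.mem_map.1 (ih6 p hp)
            show i < p.1
            rw [← hq1]
            exact hhead q hq
          · rw [hz, hfold]
            refine ih5.trans ?_
            rw [haddpt]
            refine ((cornersAll_set_perm B j i x hjB hne).append_right _).trans ?_
            rw [List.cons_append]
            exact List.perm_middle.symm
          · rw [hz]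
            intro p hp
            rcases List.mem_cons.1 hp with rfl | hp'
            · exact List.mem_cons_self
            · exact List.mem_cons_of_mem _ (ih6 p hp')
          · rw [hz]
            simp only [List.length_set] at ih7
            simp only [List.length_cons]
            omega

/-! ## Uniqueness of good piles -/

lemma chainDown {w : List Pt} {B : List (List Pt)} (hG : GoodPiles w B) :
    ∀ (d b : ℕ) (p : Pt), p ∈ B.getD (b + d) [] →
      ∃ q ∈ B.getD b [], q = p ∨ (q.1 < p.1 ∧ q.2 < p.2) := by
  intro d
  induction d with
  | zero => intro b p hp; exact ⟨p, hp, Or.inl rfl⟩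
  | succ d ihd =>
      intro b p hp
      obtain ⟨q', hq', hlt⟩ := hG.2.2.2 (b + d) p hp
      obtain ⟨q, hq, hqor⟩ := ihd b q' hq'
      refine ⟨q, hq, Or.inr ?_⟩
      rcases hqor with rfl | ⟨h1, h2⟩
      · exact hlt
      · exact ⟨h1.trans hlt.1, h2.trans hlt.2⟩

instance : IsTrans Pt PileRel :=
  ⟨fun a b c hab hbc => ⟨hbc.1.trans hab.1, hab.2.trans hbc.2⟩⟩

lemma pile_antichain {w : List Pt} {B : List (List Pt)} (hG : GoodPiles w B)
    {pl : List Pt} (hpl : pl ∈ B) :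
    ∀ p ∈ pl, ∀ q ∈ pl, p.1 < q.1 → p.2 < q.2 → False := by
  have hpair : pl.Pairwise PileRel := List.isChain_iff_pairwise.1 (hG.2.2.1 pl hpl)
  have hpair' : pl.Pairwise (fun p q => PileRel p q ∨ PileRel q p) :=
    hpair.imp Or.inl
  have hsym : Symmetric (fun p q : Pt => PileRel p q ∨ PileRel q p) :=
    fun p q h => h.symm
  intro p hp q hq h1 h2
  by_cases hpq : p = q
  · subst hpq; exact Nat.lt_irrefl _ h1
  · rcases (haveI : Std.Symm (fun p q : Pt => PileRel p q ∨ PileRel q p) := ⟨fun a b h => hsym h⟩; hpair'.forall hp hq hpq) with ⟨ha, hb⟩ | ⟨ha, hb⟩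
    · omega
    · omega

lemma mem_getD_lt_length (B : List (List Pt)) (a : ℕ) (p : Pt)
    (h : p ∈ B.getD a []) : a < B.length := by
  by_contra hc
  rw [List.getD_eq_default _ _ (Nat.le_of_not_lt hc)] at h
  cases h

lemma pile_lt {w : List Pt} {B : List (List Pt)} (hG : GoodPiles w B) :
    ∀ (a b : ℕ) (q p : Pt), q ∈ B.getD a [] → p ∈ B.getD b [] →
      q.1 < p.1 → q.2 < p.2 → a < b := by
  intro a b q p hq hp h1 h2
  by_contra hab
  push_neg at hab
  obtain ⟨q0, hq0, hor⟩ := chainDown hG (a - b) b q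
    (by rwa [Nat.add_sub_cancel' hab])
  have hbB : b < B.length := mem_getD_lt_length B b p hp
  have hmem : B.getD b [] ∈ B := by
    rw [List.getD_eq_getElem _ _ hbB]; exact List.getElem_mem hbB
  have hlt : q0.1 < p.1 ∧ q0.2 < p.2 := by
    rcases hor with rfl | ⟨ha, hb⟩
    · exact ⟨h1, h2⟩
    · exact ⟨ha.trans h1, hb.trans h2⟩
  exact pile_antichain hG hmem q0 hq0 p hp hlt.1 hlt.2

lemma mem_flatten_getD (B : List (List Pt)) (p : Pt) (h : p ∈ B.flatten) :
    ∃ c, p ∈ B.getD c [] := by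
  rw [List.mem_flatten] at h
  obtain ⟨pl, hpl, hp⟩ := h
  obtain ⟨c, hc, hcpl⟩ := List.getElem_of_mem hpl
  exact ⟨c, by rw [List.getD_eq_getElem _ _ hc, hcpl]; exact hp⟩

lemma good_le {w : List Pt} {B B' : List (List Pt)} (hG : GoodPiles w B)
    (hG' : GoodPiles w B') :
    ∀ (a : ℕ) (p : Pt), p ∈ B.getD a [] → ∃ c, a ≤ c ∧ p ∈ B'.getD c [] := by
  intro a
  induction a with
  | zero =>
      intro p hp
      have hpw : p ∈ B'.flatten := by
        refine hG'.1.symm.subset (hG.1.subset ?_)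
        rw [List.mem_flatten]
        obtain ⟨pl, hpl, hppl⟩ := mem_getD_mem B 0 p hp
        exact ⟨pl, hpl, hppl⟩
      obtain ⟨c, hc⟩ := mem_flatten_getD B' p hpw
      exact ⟨c, Nat.zero_le c, hc⟩
  | succ a iha =>
      intro p hp
      obtain ⟨q, hq, hlt⟩ := hG.2.2.2 a p hp
      obtain ⟨c', hc', hqc'⟩ := iha q hq
      have hpw : p ∈ B'.flatten := by
        refine hG'.1.symm.subset (hG.1.subset ?_)
        rw [List.mem_flatten]
        obtain ⟨pl, hpl, hppl⟩ := mem_getD_mem B (a+1) p hp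
        exact ⟨pl, hpl, hppl⟩
      obtain ⟨c, hc⟩ := mem_flatten_getD B' p hpw
      have : c' < c := pile_lt hG' c' c q p hqc' hc hlt.1 hlt.2
      exact ⟨c, by omega, hc⟩

lemma index_unique {w : List Pt} {B : List (List Pt)} (hG : GoodPiles w B)
    (hnd : B.flatten.Nodup) {a a' : ℕ} {p : Pt}
    (h : p ∈ B.getD a []) (h' : p ∈ B.getD a' []) : a = a' := by
  have haB : a < B.length := mem_getD_lt_length B a p h
  have haB' : a' < B.length := mem_getD_lt_length B a' p h'
  rw [List.getD_eq_getElem _ _ haB] at h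
  rw [List.getD_eq_getElem _ _ haB'] at h'
  have hdisj := (List.nodup_flatten.1 hnd).2
  rw [List.pairwise_iff_getElem] at hdisj
  rcases Nat.lt_trichotomy a a' with hlt | heq | hgt
  · exact absurd (hdisj a a' haB haB' hlt h h') (by simp)
  · exact heq
  · exact absurd (hdisj a' a haB' haB hgt h' h) (by simp)

instance : IsAntisymm Pt (fun p q : Pt => q.1 < p.1) :=
  ⟨fun a b h1 h2 => absurd h1 (by omega)⟩

lemma good_unique {w : List Pt} {B B' : List (List Pt)} (hG : GoodPiles w B)
    (hG' : GoodPiles w B') (hnd : w.Nodup) : B = B' := by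
  have hndB : B.flatten.Nodup := (hG.1.nodup_iff).2 hnd
  have hndB' : B'.flatten.Nodup := (hG'.1.nodup_iff).2 hnd
  have hmem : ∀ (a : ℕ) (p : Pt), p ∈ B.getD a [] ↔ p ∈ B'.getD a [] := by
    intro a p
    constructor
    · intro h
      obtain ⟨c, hac, hc⟩ := good_le hG hG' a p h
      obtain ⟨a', hca', ha'⟩ := good_le hG' hG c p hc
      have : a = a' := index_unique hG hndB h ha'
      have : a = c := by omega
      rwa [this]
    · intro h
      obtain ⟨c, hac, hc⟩ := good_le hG' hG a p h
      obtain ⟨a', hca', ha'⟩ := good_le hG hG' c p hc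
      have : a = a' := index_unique hG' hndB' h ha'
      have : a = c := by omega
      rwa [this]
  have hlen : B.length = B'.length := by
    by_contra hne
    rcases Nat.lt_or_ge B.length B'.length with hlt | hge
    · have h1 : B'.getD B.length [] ≠ [] := by
        apply hG'.2.1
        rw [List.getD_eq_getElem _ _ hlt]
        exact List.getElem_mem hlt
      obtain ⟨p, hp⟩ := List.exists_mem_of_ne_nil _ h1
      have := (hmem B.length p).2 hp
      have := mem_getD_lt_length B _ p this
      omega
    · have hlt : B'.length < B.length := by omega
      have h1 : B.getD B'.length [] ≠ [] := by
        apply hG.2.1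
        rw [List.getD_eq_getElem _ _ hlt]
        exact List.getElem_mem hlt
      obtain ⟨p, hp⟩ := List.exists_mem_of_ne_nil _ h1
      have := (hmem B'.length p).1 hp
      have := mem_getD_lt_length B' _ p this
      omega
  apply List.ext_getElem hlen
  intro a h1 h2
  have hmem' : ∀ p : Pt, p ∈ B[a] ↔ p ∈ B'[a] := by
    intro p
    rw [← List.getD_eq_getElem B [] h1, ← List.getD_eq_getElem B' [] h2]
    exact hmem a p
  have hnd1 : B[a].Nodup := (List.nodup_flatten.1 hndB).1 _ (List.getElem_mem h1)
  have hnd2 : B'[a].Nodup := (List.nodup_flatten.1 hndB').1 _ (List.getElem_mem h2)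
  have hperm : B[a].Perm B'[a] := (List.perm_ext_iff_of_nodup hnd1 hnd2).2 hmem'
  have hs1 : B[a].Pairwise (fun p q : Pt => q.1 < p.1) := by
    have := List.isChain_iff_pairwise.1 (hG.2.2.1 _ (List.getElem_mem h1))
    exact this.imp fun h => h.1
  have hs2 : B'[a].Pairwise (fun p q : Pt => q.1 < p.1) := by
    have := List.isChain_iff_pairwise.1 (hG'.2.2.1 _ (List.getElem_mem h2))
    exact this.imp fun h => h.1
  exact List.Perm.eq_of_pairwise' hs1 hs2 hperm

/-! ## Transpose -/

def transP (pl : List Pt) : List Pt := (pl.map Prod.swap).reverse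
def transB (B : List (List Pt)) : List (List Pt) := B.map transP

lemma transP_nil : transP [] = [] := rfl

lemma transP_ne_nil {pl : List Pt} (h : pl ≠ []) : transP pl ≠ [] := by
  simp [transP, h]

lemma mem_transP {p : Pt} {pl : List Pt} : p ∈ transP pl ↔ Prod.swap p ∈ pl := by
  simp only [transP, List.mem_reverse, List.mem_map]
  constructor
  · rintro ⟨q, hq, rfl⟩; simpa using hq
  · intro h; exact ⟨Prod.swap p, h, by simp⟩

lemma getD_transB (B : List (List Pt)) (j : ℕ) :
    (transB B).getD j [] = transP (B.getD j []) := by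
  by_cases hj : j < B.length
  · rw [List.getD_eq_getElem _ _ (by simpa [transB] using hj),
      List.getD_eq_getElem _ _ hj]
    simp [transB]
  · rw [List.getD_eq_default _ _ (by simpa [transB] using Nat.le_of_not_lt hj),
      List.getD_eq_default _ _ (Nat.le_of_not_lt hj)]
    rfl

lemma transP_headD {pl : List Pt} (h : pl ≠ []) :
    (transP pl).headD (0,0) = Prod.swap (pl.getLastD (0,0)) := by
  rw [List.headD_eq_head?, transP, List.head?_reverse, List.getLast?_map,
    List.getLastD_eq_getLast?, List.getLast?_eq_getLast h]
  rfl

lemma transP_getLastD {pl : List Pt} (h : pl ≠ []) :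
    (transP pl).getLastD (0,0) = Prod.swap (pl.headD (0,0)) := by
  rw [List.getLastD_eq_getLast?, transP, List.getLast?_reverse, List.head?_map,
    List.headD_eq_head?, List.head?_eq_head h]
  simp [List.head?_eq_head, h]

lemma flatten_transB_perm (B : List (List Pt)) :
    (transB B).flatten.Perm (B.flatten.map Prod.swap) := by
  induction B with
  | nil => rfl
  | cons pl B ih =>
      simp only [transB, List.map_cons, List.flatten_cons, List.map_append]
      exact (List.reverse_perm _).append ih

lemma goodPiles_transB {w w' : List Pt} {B : List (List Pt)}
    (hG : GoodPiles w B) (hw' : w'.Perm (w.map Prod.swap)) :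
    GoodPiles w' (transB B) := by
  refine ⟨?_, ?_, ?_, ?_⟩
  · exact (flatten_transB_perm B).trans ((hG.1.map Prod.swap).trans hw'.symm)
  · intro pl hpl
    obtain ⟨pl0, hpl0, rfl⟩ := List.mem_map.1 hpl
    exact transP_ne_nil (hG.2.1 pl0 hpl0)
  · intro pl hpl
    obtain ⟨pl0, hpl0, rfl⟩ := List.mem_map.1 hpl
    have hch := hG.2.2.1 pl0 hpl0
    rw [transP]; show List.IsChain _ _; rw [List.isChain_reverse, List.isChain_map]
    exact hch.imp fun a b h => ⟨h.2, h.1⟩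
  · intro j p hp
    rw [getD_transB, mem_transP] at hp
    obtain ⟨q, hq, hlt⟩ := hG.2.2.2 j (Prod.swap p) hp
    refine ⟨Prod.swap q, ?_, ?_, ?_⟩
    · rw [getD_transB, mem_transP]; simpa using hq
    · exact hlt.2
    · exact hlt.1

lemma corners_concat : ∀ (l : List Pt) (p : Pt), l ≠ [] →
    corners (l ++ [p]) = corners l ++ [((l.getLastD (0,0)).1, p.2)] := by
  intro l
  induction l with
  | nil => intro p h; exact absurd rfl h
  | cons a l ih =>
      intro p _
      cases l with
      | nil => simp [corners]
      | cons b t =>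
          have : (a :: b :: t) ++ [p] = a :: ((b :: t) ++ [p]) := rfl
          rw [this]
          have hbt : (b :: t) ++ [p] = b :: (t ++ [p]) := rfl
          rw [show corners (a :: (b :: t ++ [p])) = (a.1, b.2) :: corners (b :: (t ++ [p])) from rfl]
          rw [show (b : Pt) :: (t ++ [p]) = (b :: t) ++ [p] from rfl]
          rw [ih p (by simp)]
          simp [corners, List.getLastD_cons]

lemma transP_cons (a : Pt) (l : List Pt) :
    transP (a :: l) = transP l ++ [Prod.swap a] := by
  simp [transP]

lemma corners_transP : ∀ (pl : List Pt), corners (transP pl) = transP (corners pl) := by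
  intro pl
  induction pl with
  | nil => rfl
  | cons a l ih =>
      cases l with
      | nil => rfl
      | cons b t =>
          rw [transP_cons, corners_concat _ _ (transP_ne_nil (by simp)), ih,
            show corners ((a : Pt) :: b :: t) = (a.1, b.2) :: corners (b :: t) from rfl,
            show transP ((a.1,b.2) :: corners (b::t)) =
              transP (corners (b::t)) ++ [Prod.swap (a.1,b.2)] from transP_cons _ _]
          congr 1
          rw [transP_getLastD (by simp : (b :: t : List Pt) ≠ [])]
          rfl

lemma flatMap_perm_congr {B : List (List Pt)} {f g : List Pt → List Pt}
    (h : ∀ pl ∈ B, (f pl).Perm (g pl)) : (B.flatMap f).Perm (B.flatMap g) := by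
  induction B with
  | nil => rfl
  | cons pl B ih =>
      simp only [List.flatMap_cons]
      exact (h pl (List.mem_cons_self)).append
        (ih fun q hq => h q (List.mem_cons_of_mem _ hq))

lemma cornersAll_transB_perm (B : List (List Pt)) :
    (cornersAll (transB B)).Perm ((cornersAll B).map Prod.swap) := by
  rw [cornersAll, transB, List.flatMap_map]
  have h1 : (B.flatMap fun pl => corners (transP pl)).Perm
      (B.flatMap fun pl => (corners pl).map Prod.swap) := by
    apply flatMap_perm_congr
    intro pl _
    rw [corners_transP, transP]
    exact List.reverse_perm _
  refine h1.trans ?_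
  rw [← List.map_flatMap]
  exact List.Perm.refl _

lemma tops_transB {w : List Pt} {B : List (List Pt)} (hG : GoodPiles w B) :
    tops (transB B) = lasts B := by
  rw [tops, transB, List.map_map, lasts]
  apply List.map_congr_left
  intro pl hpl
  show ((transP pl).headD (0,0)).2 = (pl.getLastD (0,0)).1
  rw [transP_headD (hG.2.1 pl hpl)]
  rfl

lemma lasts_transB {w : List Pt} {B : List (List Pt)} (hG : GoodPiles w B) :
    lasts (transB B) = tops B := by
  rw [lasts, transB, List.map_map, tops]
  apply List.map_congr_left
  intro pl hpl
  show ((transP pl).getLastD (0,0)).1 = (pl.headD (0,0)).2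
  rw [transP_getLastD (hG.2.1 pl hpl)]
  rfl

/-! ## Biwords and row symmetry -/

def Biword (w : List Pt) : Prop := w.Pairwise PRel ∧ (w.map Prod.snd).Nodup
def TransTo (w w' : List Pt) : Prop := w'.Perm (w.map Prod.swap) ∧ w'.Pairwise PRel

lemma nodup_of_pairwise_PRel {w : List Pt} (h : w.Pairwise PRel) : w.Nodup :=
  h.imp fun hpq => fun hc => absurd (congrArg Prod.fst hc) (Nat.ne_of_lt hpq)

lemma nodup_fst_of_pairwise_PRel {w : List Pt} (h : w.Pairwise PRel) :
    (w.map Prod.fst).Nodup := by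
  rw [List.Nodup, List.pairwise_map]
  exact h.imp fun hpq => Nat.ne_of_lt hpq

lemma run0 (w : List Pt) (hw : Biword w) :
    ∃ B : List (List Pt),
      GoodPiles w B ∧
      (rowRun [] w).1 = tops B ∧
      (rowRun [] w).2.1 = lasts B ∧
      (rowRun [] w).2.2.Pairwise PRel ∧
      ((rowRun [] w).2.2).Perm (cornersAll B) ∧
      (rowRun [] w).1.length + (rowRun [] w).2.2.length = w.length := by
  have hG0 : GoodPiles [] ([] : List (List Pt)) := by
    refine ⟨by simp, by simp, by simp, ?_⟩
    intro j p hp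
    simp at hp
  obtain ⟨h1, h2, h3, h4, h5, h6, h7⟩ :=
    run w [] [] hG0 (by simp) hw.1 (by simpa using hw.2)
  refine ⟨w.foldl addPt [], h1, ?_, ?_, h4, ?_, ?_⟩
  · simpa [tops] using h2
  · simpa [lasts, tops] using h3.symm
  · simpa [cornersAll, tops] using h5.symm
  · simpa [tops] using h7

lemma corners_snd : ∀ pl : List Pt, (corners pl).map Prod.snd = pl.tail.map Prod.snd := by
  intro pl
  induction pl with
  | nil => rfl
  | cons a l ih =>
      cases l with
      | nil => rfl
      | cons b t =>
          show Prod.snd (a.1, b.2) :: (corners (b :: t)).map Prod.snd = _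
          rw [ih]
          rfl

lemma flatMap_tail_sublist : ∀ B : List (List Pt),
    (B.flatMap (fun pl => pl.tail)).Sublist B.flatten := by
  intro B
  induction B with
  | nil => simp
  | cons pl B ih =>
      simp only [List.flatMap_cons, List.flatten_cons]
      exact List.Sublist.append (List.tail_sublist pl) ih

lemma cornersAll_snd_nodup {w : List Pt} {B : List (List Pt)}
    (hG : GoodPiles w B) (hnd : (w.map Prod.snd).Nodup) :
    ((cornersAll B).map Prod.snd).Nodup := by
  rw [cornersAll, List.map_flatMap]
  simp only [corners_snd]
  have hsub : (B.flatMap fun pl => pl.tail.map Prod.snd).Sublist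
      (B.flatten.map Prod.snd) := by
    have h1 := (flatMap_tail_sublist B).map Prod.snd
    rw [List.map_flatMap] at h1
    exact h1
  exact ((hG.1.map Prod.snd).nodup_iff.2 hnd).sublist hsub

lemma snd_swap_eq_fst (w : List Pt) :
    (w.map Prod.swap).map Prod.snd = w.map Prod.fst := by
  rw [List.map_map]; rfl

lemma rowSym {w w' : List Pt} (hw : Biword w) (ht : TransTo w w') :
    Biword w' ∧
    (rowRun [] w').1 = (rowRun [] w).2.1 ∧
    (rowRun [] w').2.1 = (rowRun [] w).1 ∧
    TransTo (rowRun [] w).2.2 (rowRun [] w').2.2 ∧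
    Biword (rowRun [] w).2.2 ∧
    (w ≠ [] → (rowRun [] w).2.2.length < w.length) := by
  have hbw' : Biword w' := by
    refine ⟨ht.2, ?_⟩
    have h1 : (w'.map Prod.snd).Perm (w.map Prod.fst) := by
      rw [← snd_swap_eq_fst w]
      exact ht.1.map Prod.snd
    exact h1.nodup_iff.2 (nodup_fst_of_pairwise_PRel hw.1)
  obtain ⟨B, hG, hr, hq, hdpw, hdc, hlen⟩ := run0 w hw
  obtain ⟨B', hG', hr', hq', hdpw', hdc', hlen'⟩ := run0 w' hbw'
  have hB' : B' = transB B :=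
    good_unique hG' (goodPiles_transB hG ht.1) (nodup_of_pairwise_PRel ht.2)
  refine ⟨hbw', ?_, ?_, ?_, ?_, ?_⟩
  · rw [hr', hq, hB', tops_transB hG]
  · rw [hq', hr, hB', lasts_transB hG]
  · refine ⟨?_, hdpw'⟩
    refine hdc'.trans ?_
    rw [hB']
    refine (cornersAll_transB_perm _).trans ?_
    exact (hdc.map Prod.swap).symm
  · exact ⟨hdpw, (hdc.map Prod.snd).nodup_iff.2 (cornersAll_snd_nodup hG hw.2)⟩
  · intro hne
    have hBne : B ≠ [] := by
      intro hc
      rw [hc] at hG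
      have h0 := hG.1
      simp at h0
      exact hne h0.symm.symm
    have h1 : 0 < (rowRun [] w).1.length := by
      rw [hr, tops]
      simpa using List.length_pos_of_ne_nil hBne
    omega

/-! ## Main symmetry -/

lemma schSym : ∀ (N : ℕ) (w w' : List Pt), w.length < N → Biword w → TransTo w w' →
    sch0 w' = ((sch0 w).2, (sch0 w).1) := by
  intro N
  induction N with
  | zero => intro w w' h; omega
  | succ N ih =>
      intro w w' hlen hw ht
      obtain ⟨hbw', hr, hq, htd, hbd, hdlen⟩ := rowSym hw ht
      cases hww : w with
      | nil =>
          subst hww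
          have hw' : w' = [] := by
            have := ht.1
            simp at this
            exact this
          subst hw'; rfl
      | cons p w0 =>
          rcases p with ⟨i, x⟩
          subst hww
          have hw'ne : w' ≠ [] := by
            intro hc
            subst hc
            have := ht.1.symm
            simp at this
          obtain ⟨⟨i', x'⟩, w0', hw'⟩ : ∃ p' w0', w' = p' :: w0' := by
            cases w' with
            | nil => exact absurd rfl hw'ne
            | cons a b => exact ⟨a, b, rfl⟩
          have hrec : sch0 (rowRun [] w').2.2 =
              ((sch0 (rowRun [] ((i,x) :: w0)).2.2).2,
               (sch0 (rowRun [] ((i,x) :: w0)).2.2).1) := by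
            apply ih _ _ ?_ hbd htd
            have := hdlen (by simp)
            simp only [List.length_cons] at this hlen
            omega
          rw [hw'] at hrec hr hq ⊢
          rw [sch0_cons, sch0_cons]
          rw [hrec, hr, hq]

def graphOf {n : ℕ} (σ : Equiv.Perm (Fin n)) : List Pt :=
  (List.range' 1 n).zip (permWord σ)

lemma length_permWord {n : ℕ} (σ : Equiv.Perm (Fin n)) : (permWord σ).length = n := by
  simp [permWord]

lemma length_graphOf {n : ℕ} (σ : Equiv.Perm (Fin n)) : (graphOf σ).length = n := by
  simp [graphOf, length_permWord]

lemma schensted_eq_sch0 (w : List ℕ) :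
    schensted w = sch0 ((List.range' 1 w.length).zip w) := by
  rw [schensted, schenstedAux_eq_schB]
  rfl

lemma fst_graphOf {n : ℕ} (σ : Equiv.Perm (Fin n)) :
    (graphOf σ).map Prod.fst = List.range' 1 n := by
  rw [graphOf, List.map_fst_zip]
  simp [length_permWord]

lemma snd_graphOf {n : ℕ} (σ : Equiv.Perm (Fin n)) :
    (graphOf σ).map Prod.snd = permWord σ := by
  rw [graphOf, List.map_snd_zip]
  simp [length_permWord]

lemma pairwise_graphOf {n : ℕ} (σ : Equiv.Perm (Fin n)) :
    (graphOf σ).Pairwise PRel := by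
  have h : ((graphOf σ).map Prod.fst).Pairwise (· < ·) := by
    rw [fst_graphOf]
    exact List.pairwise_lt_range' (s := 1) (n := n)
  rw [List.pairwise_map] at h
  exact h

lemma biword_graphOf {n : ℕ} (σ : Equiv.Perm (Fin n)) : Biword (graphOf σ) := by
  refine ⟨pairwise_graphOf σ, ?_⟩
  rw [snd_graphOf, permWord, List.nodup_ofFn]
  intro a b hab
  simp only [Nat.add_right_cancel_iff] at hab
  exact σ.injective (Fin.val_injective hab)

lemma mem_graphOf {n : ℕ} (σ : Equiv.Perm (Fin n)) (a b : ℕ) :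
    (a, b) ∈ graphOf σ ↔ ∃ i : Fin n, a = 1 + (i : ℕ) ∧ b = (σ i : ℕ) + 1 := by
  constructor
  · intro h
    obtain ⟨k, hk, hget⟩ := List.getElem_of_mem h
    have hkn : k < n := by
      have := hk
      rw [length_graphOf] at this
      exact this
    simp only [graphOf] at hget
    rw [List.getElem_zip, Prod.ext_iff] at hget
    simp only at hget
    refine ⟨⟨k, hkn⟩, ?_, ?_⟩
    · rw [← hget.1, List.getElem_range']
      simp
    · rw [← hget.2]
      simp [permWord]
  · rintro ⟨i, rfl, rfl⟩
    have hi : (i : ℕ) < (graphOf σ).length := by rw [length_graphOf]; exact i.2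
    have hv : (graphOf σ)[(i : ℕ)] = (1 + (i : ℕ), (σ i : ℕ) + 1) := by
      simp only [graphOf]
      rw [List.getElem_zip, Prod.ext_iff]
      constructor
      · rw [List.getElem_range']; simp
      · simp [permWord]
    rw [← hv]
    exact List.getElem_mem hi

lemma transTo_graphOf {n : ℕ} (σ : Equiv.Perm (Fin n)) :
    TransTo (graphOf σ) (graphOf σ⁻¹) := by
  refine ⟨?_, pairwise_graphOf σ⁻¹⟩
  have hnd1 : (graphOf σ⁻¹).Nodup := nodup_of_pairwise_PRel (pairwise_graphOf σ⁻¹)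
  have hnd2 : ((graphOf σ).map Prod.swap).Nodup :=
    (nodup_of_pairwise_PRel (pairwise_graphOf σ)).map
      (fun p q h => by simpa using congrArg Prod.swap h)
  rw [List.perm_ext_iff_of_nodup hnd1 hnd2]
  rintro ⟨a, b⟩
  rw [mem_graphOf]
  constructor
  · rintro ⟨i, rfl, rfl⟩
    rw [List.mem_map]
    refine ⟨((σ⁻¹ i : ℕ) + 1, 1 + (i : ℕ)), ?_, rfl⟩
    rw [mem_graphOf]
    exact ⟨σ⁻¹ i, by omega, by rw [← Equiv.Perm.mul_apply, mul_inv_cancel, Equiv.Perm.one_apply]; omega⟩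
  · intro h
    rw [List.mem_map] at h
    obtain ⟨⟨c, d⟩, hm, hswap⟩ := h
    rw [mem_graphOf] at hm
    obtain ⟨j, rfl, rfl⟩ := hm
    have hab : a = (σ j : ℕ) + 1 ∧ b = 1 + (j : ℕ) := by
      have h1 := congrArg Prod.fst hswap
      have h2 := congrArg Prod.snd hswap
      simp at h1 h2
      exact ⟨h1.symm, h2.symm⟩
    obtain ⟨rfl, rfl⟩ := hab
    exact ⟨σ j, by omega, by rw [← Equiv.Perm.mul_apply, inv_mul_cancel, Equiv.Perm.one_apply]; omega⟩

/-- **Symmetry of the Schensted correspondence**: if `σ ∈ 𝔖_n` corresponds to the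
pair `(T, U)`, then `σ⁻¹` corresponds to `(U, T)`. -/
theorem schensted_inverse (n : ℕ) (σ : Equiv.Perm (Fin n)) :
    schensted (permWord σ⁻¹) =
      ((schensted (permWord σ)).2, (schensted (permWord σ)).1) := by
  have h1 : schensted (permWord σ⁻¹) = sch0 (graphOf σ⁻¹) := by
    rw [schensted_eq_sch0, length_permWord]
    rfl
  have h2 : schensted (permWord σ) = sch0 (graphOf σ) := by
    rw [schensted_eq_sch0, length_permWord]
    rfl
  rw [h1, h2]
  exact schSym (n + 1) (graphOf σ) (graphOf σ⁻¹)
    (by rw [length_graphOf]; omega) (biword_graphOf σ) (transTo_graphOf σ)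
end

section
/- Bender-Knuth symmetry: For any partition λ, any positive integer N, and any index 1 ≤ i < N, there is an involution on the set of semistandard Young tableaux of shape λ with entries in {1, …, N} that interchanges the number of i's and the number of (i+1)'s in a tableau while fixing the number of every other entry; consequently the Schur polynomial s_λ(x₁, …, x_N) is invariant under transposing the variables x_i and x_{i+1}. -/
open MvPolynomial

def IsSSYT (μ : YoungDiagram) {N : ℕ} (T : μ.cells → Fin N) : Prop :=
  (∀ c d : μ.cells, (c : ℕ × ℕ).1 = (d : ℕ × ℕ).1 → (c : ℕ × ℕ).2 ≤ (d : ℕ × ℕ).2 →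
      T c ≤ T d) ∧
  (∀ c d : μ.cells, (c : ℕ × ℕ).2 = (d : ℕ × ℕ).2 → (c : ℕ × ℕ).1 < (d : ℕ × ℕ).1 →
      T c < T d)

def wt (μ : YoungDiagram) {N : ℕ} (T : μ.cells → Fin N) (i : Fin N) : ℕ :=
  (Finset.univ.filter fun c => T c = i).card

open Classical in
noncomputable def schur (μ : YoungDiagram) (N : ℕ) : MvPolynomial (Fin N) ℚ :=
  ∑ T ∈ Finset.univ.filter (fun T : μ.cells → Fin N => IsSSYT μ T),
    ∏ i : Fin N, X i ^ wt μ T i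

namespace BK

open Classical Finset

variable {N : ℕ} {μ : YoungDiagram}

abbrev row (c : μ.cells) : ℕ := (c : ℕ × ℕ).1
abbrev col (c : μ.cells) : ℕ := (c : ℕ × ℕ).2

def cell (μ : YoungDiagram) (p : ℕ × ℕ) (h : p ∈ μ) : μ.cells :=
  ⟨p, (YoungDiagram.mem_cells p).2 h⟩

lemma cmem (c : μ.cells) : (c : ℕ × ℕ) ∈ μ := (YoungDiagram.mem_cells _).1 c.2

lemma cell_ext {c d : μ.cells} (h1 : row c = row d) (h2 : col c = col d) : c = d := by
  apply Subtype.ext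
  exact Prod.ext h1 h2

@[simp] lemma row_cell (p : ℕ × ℕ) (h : p ∈ μ) : row (cell μ p h) = p.1 := rfl
@[simp] lemma col_cell (p : ℕ × ℕ) (h : p ∈ μ) : col (cell μ p h) = p.2 := rfl

/-- A free `i`-cell: value `i` and the cell below (if any) does not hold `j`. -/
def FreeI (i j : Fin N) (T : μ.cells → Fin N) (c : μ.cells) : Prop :=
  T c = i ∧ ∀ h : (row c + 1, col c) ∈ μ, T (cell μ _ h) ≠ j

/-- A free `j`-cell: value `j` and the cell above (if any) does not hold `i`. -/
def FreeJ (i j : Fin N) (T : μ.cells → Fin N) (c : μ.cells) : Prop :=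
  T c = j ∧ ∀ h : (row c - 1, col c) ∈ μ, T (cell μ _ h) ≠ i

def Fr (i j : Fin N) (T : μ.cells → Fin N) (c : μ.cells) : Prop :=
  FreeI i j T c ∨ FreeJ i j T c

open Classical in
noncomputable def rk (i j : Fin N) (T : μ.cells → Fin N) (c : μ.cells) : ℕ :=
  (Finset.univ.filter fun d : μ.cells =>
    row d = row c ∧ Fr i j T d ∧ col d < col c).card

open Classical in
noncomputable def acount (i j : Fin N) (T : μ.cells → Fin N) (r : ℕ) : ℕ :=
  (Finset.univ.filter fun d : μ.cells => row d = r ∧ FreeI i j T d).card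

open Classical in
noncomputable def bcount (i j : Fin N) (T : μ.cells → Fin N) (r : ℕ) : ℕ :=
  (Finset.univ.filter fun d : μ.cells => row d = r ∧ FreeJ i j T d).card

open Classical in
noncomputable def bk (i j : Fin N) (T : μ.cells → Fin N) (c : μ.cells) : Fin N :=
  if Fr i j T c then (if rk i j T c < bcount i j T (row c) then i else j) else T c

section Basic

variable {i j : Fin N} {T : μ.cells → Fin N}

lemma ne_ij (hij : (j : ℕ) = (i : ℕ) + 1) : i ≠ j := by
  intro h; rw [h] at hij; omega

lemma i_lt_j (hij : (j : ℕ) = (i : ℕ) + 1) : i < j := by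
  rw [Fin.lt_def]; omega

lemma lt_j_iff (hij : (j : ℕ) = (i : ℕ) + 1) {v : Fin N} : v < j ↔ v ≤ i := by
  rw [Fin.lt_def, Fin.le_def]; omega

lemma i_lt_iff (hij : (j : ℕ) = (i : ℕ) + 1) {v : Fin N} : i < v ↔ j ≤ v := by
  rw [Fin.lt_def, Fin.le_def]; omega

lemma fr_val {c : μ.cells} (h : Fr i j T c) : T c = i ∨ T c = j := by
  rcases h with h | h
  · exact Or.inl h.1
  · exact Or.inr h.1

lemma freeI_iff (hij : (j : ℕ) = (i : ℕ) + 1) {c : μ.cells} :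
    FreeI i j T c ↔ Fr i j T c ∧ T c = i := by
  constructor
  · exact fun h => ⟨Or.inl h, h.1⟩
  · rintro ⟨h | h, hv⟩
    · exact h
    · exact absurd (hv ▸ h.1 : (i:Fin N) = j) (ne_ij hij)

lemma freeJ_iff (hij : (j : ℕ) = (i : ℕ) + 1) {c : μ.cells} :
    FreeJ i j T c ↔ Fr i j T c ∧ T c = j := by
  constructor
  · exact fun h => ⟨Or.inr h, h.1⟩
  · rintro ⟨h | h, hv⟩
    · exact absurd (hv ▸ h.1 : (j:Fin N) = i) (ne_ij hij).symm
    · exact h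

lemma bk_of_not_free {c : μ.cells} (h : ¬ Fr i j T c) : bk i j T c = T c := if_neg h

lemma bk_val {c : μ.cells} (h : Fr i j T c) :
    bk i j T c = i ∨ bk i j T c = j := by
  rw [bk, if_pos h]
  split <;> simp

lemma bk_eq_i_iff (hij : (j : ℕ) = (i : ℕ) + 1) {c : μ.cells} (h : Fr i j T c) :
    bk i j T c = i ↔ rk i j T c < bcount i j T (row c) := by
  rw [bk, if_pos h]
  split
  · simpa
  · simp only [iff_false_intro ‹¬ _›, iff_false]
    exact (ne_ij hij).symm

lemma bk_eq_j_iff (hij : (j : ℕ) = (i : ℕ) + 1) {c : μ.cells} (h : Fr i j T c) :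
    bk i j T c = j ↔ ¬ rk i j T c < bcount i j T (row c) := by
  rcases bk_val h with hv | hv
  · rw [hv]
    simp only [iff_true_intro ((bk_eq_i_iff hij h).1 hv)]
    simp [ne_ij hij]
  · rw [hv]
    have := (bk_eq_i_iff hij h)
    rw [hv] at this
    simp only [iff_true_intro rfl, true_iff]
    intro hlt
    exact (ne_ij hij) ((this.2 hlt).symm)

end Basic

section Struct

variable {i j : Fin N} {T : μ.cells → Fin N}

/-- In a row, `i`-cells come strictly before `j`-cells. -/
lemma col_lt_col (hij : (j : ℕ) = (i : ℕ) + 1) (hT : IsSSYT μ T) {c d : μ.cells}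
    (hc : T c = i) (hd : T d = j) (hrow : row c = row d) : col c < col d := by
  by_contra h
  push_neg at h
  have := hT.1 d c hrow.symm h
  rw [hd, hc] at this
  rw [Fin.le_def] at this
  omega

/-- A locked `i`-cell locks every `i`-cell to its left in the same row. -/
lemma lockedI_left (hij : (j : ℕ) = (i : ℕ) + 1) (hT : IsSSYT μ T) {c d : μ.cells}
    (hrow : row c = row d) (hcol : col c ≤ col d) (hc : T c = i) (hd : T d = i)
    (hld : ¬ FreeI i j T d) : ¬ FreeI i j T c := by
  rw [FreeI, not_and] at hld
  have hex := hld hd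
  push_neg at hex
  obtain ⟨hmem, hval⟩ := hex
  have hmc : (row c + 1, col c) ∈ μ := μ.up_left_mem (by omega) hcol hmem
  intro hfc
  apply hfc.2 hmc
  -- value of cell below c is > i hence ≥ j, and ≤ value below d = j
  have h1 : T c < T (cell μ _ hmc) := hT.2 c (cell μ _ hmc) rfl (by simp [cell])
  rw [hc] at h1
  have h2 : T (cell μ _ hmc) ≤ T (cell μ _ hmem) :=
    hT.1 (cell μ _ hmc) (cell μ _ hmem) (by simp [cell, hrow]) (by simpa [cell])
  rw [hval] at h2
  exact le_antisymm h2 ((i_lt_iff hij).1 h1)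

/-- A locked `j`-cell locks every `j`-cell to its right in the same row. -/
lemma lockedJ_right (hij : (j : ℕ) = (i : ℕ) + 1) (hT : IsSSYT μ T) {c d : μ.cells}
    (hrow : row c = row d) (hcol : col c ≤ col d) (hc : T c = j) (hd : T d = j)
    (hlc : ¬ FreeJ i j T c) : ¬ FreeJ i j T d := by
  rw [FreeJ, not_and] at hlc
  have hex := hlc hc
  push_neg at hex
  obtain ⟨hmem, hval⟩ := hex
  have hr0 : row c ≠ 0 := by
    intro h0
    have : cell μ (row c - 1, col c) hmem = c := cell_ext (by simp [cell, h0]) rfl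
    rw [this, hc] at hval
    exact (ne_ij hij) hval.symm
  have hmd : (row d - 1, col d) ∈ μ := μ.up_left_mem (Nat.sub_le _ _) le_rfl (cmem d)
  intro hfd
  apply hfd.2 hmd
  have h1 : T (cell μ _ hmd) < T d := hT.2 (cell μ _ hmd) d rfl (by simp [cell]; omega)
  rw [hd] at h1
  have h2 : T (cell μ _ hmem) ≤ T (cell μ _ hmd) :=
    hT.1 (cell μ _ hmem) (cell μ _ hmd) (by simp [cell, hrow]) (by simpa [cell])
  rw [hval] at h2
  exact le_antisymm ((lt_j_iff hij).1 h1) h2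

lemma rk_lt_acount (hij : (j : ℕ) = (i : ℕ) + 1) (hT : IsSSYT μ T) {c : μ.cells}
    (hfc : Fr i j T c) (hc : T c = i) : rk i j T c < acount i j T (row c) := by
  have hsub : (Finset.univ.filter fun d : μ.cells =>
      row d = row c ∧ Fr i j T d ∧ col d < col c) ⊆
      (Finset.univ.filter fun d : μ.cells => row d = row c ∧ FreeI i j T d).erase c := by
    intro d hd
    rw [mem_filter] at hd
    obtain ⟨-, hrow, hfd, hcol⟩ := hd
    rw [mem_erase, mem_filter]
    refine ⟨?_, mem_univ d, hrow, ?_⟩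
    · intro h; rw [h] at hcol; omega
    · rw [freeI_iff hij]
      refine ⟨hfd, ?_⟩
      rcases fr_val hfd with h | h
      · exact h
      · exact absurd (col_lt_col hij hT hc h hrow.symm) (by omega)
  have hcmem : c ∈ Finset.univ.filter fun d : μ.cells => row d = row c ∧ FreeI i j T d := by
    rw [mem_filter]
    exact ⟨mem_univ c, rfl, (freeI_iff hij).2 ⟨hfc, hc⟩⟩
  have h1 := Finset.card_le_card hsub
  rw [Finset.card_erase_of_mem hcmem] at h1
  have h2 := Finset.card_pos.2 ⟨c, hcmem⟩
  rw [rk, acount]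
  omega

lemma acount_le_rk (hij : (j : ℕ) = (i : ℕ) + 1) (hT : IsSSYT μ T) {c : μ.cells}
    (hc : T c = j) : acount i j T (row c) ≤ rk i j T c := by
  apply Finset.card_le_card
  intro d hd
  rw [mem_filter] at hd ⊢
  obtain ⟨-, hrow, hfd⟩ := hd
  exact ⟨mem_univ d, hrow, Or.inl hfd, col_lt_col hij hT hfd.1 hc hrow⟩

lemma val_i_iff (hij : (j : ℕ) = (i : ℕ) + 1) (hT : IsSSYT μ T) {c : μ.cells}
    (hfc : Fr i j T c) : T c = i ↔ rk i j T c < acount i j T (row c) := by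
  constructor
  · exact rk_lt_acount hij hT hfc
  · intro h
    rcases fr_val hfc with hv | hv
    · exact hv
    · exact absurd h (by have := acount_le_rk hij hT (i := i) hv; omega)

/-- below a free cell the value exceeds `j`. -/
lemma free_below_gt (hij : (j : ℕ) = (i : ℕ) + 1) (hT : IsSSYT μ T) {c : μ.cells}
    (hfc : Fr i j T c) (h : (row c + 1, col c) ∈ μ) : j < T (cell μ _ h) := by
  have h1 : T c < T (cell μ _ h) := hT.2 c (cell μ _ h) rfl (by simp [cell])
  rcases hfc with hf | hf
  · rw [hf.1] at h1
    have h2 := hf.2 h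
    have := (i_lt_iff hij).1 h1
    omega
  · rw [hf.1] at h1
    exact h1

/-- above a free cell (in row ≥ 1) the value is below `i`. -/
lemma free_above_lt (hij : (j : ℕ) = (i : ℕ) + 1) (hT : IsSSYT μ T) {c : μ.cells}
    (hfc : Fr i j T c) (h : (row c - 1, col c) ∈ μ) (hr : row c ≠ 0) :
    T (cell μ _ h) < i := by
  have h1 : T (cell μ _ h) < T c := hT.2 (cell μ _ h) c rfl (by simp [cell]; omega)
  rcases hfc with hf | hf
  · rw [hf.1] at h1
    exact h1
  · rw [hf.1] at h1
    have h2 := hf.2 h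
    have := (lt_j_iff hij).1 h1
    omega

lemma not_free_i (hij : (j : ℕ) = (i : ℕ) + 1) {c : μ.cells} (hnf : ¬ Fr i j T c)
    (hc : T c = i) : ∃ h : (row c + 1, col c) ∈ μ, T (cell μ _ h) = j := by
  have : ¬ FreeI i j T c := fun h => hnf (Or.inl h)
  rw [FreeI, not_and] at this
  have := this hc
  push_neg at this
  exact this

lemma not_free_j (hij : (j : ℕ) = (i : ℕ) + 1) {c : μ.cells} (hnf : ¬ FreeJ i j T c)
    (hc : T c = j) :
    row c ≠ 0 ∧ ∃ h : (row c - 1, col c) ∈ μ, T (cell μ _ h) = i := by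
  rw [FreeJ, not_and] at hnf
  have hex := hnf hc
  push_neg at hex
  obtain ⟨hmem, hval⟩ := hex
  have hr0 : row c ≠ 0 := by
    intro h0
    have : cell μ (row c - 1, col c) hmem = c := cell_ext (by simp [cell, h0]) rfl
    rw [this, hc] at hval
    exact (ne_ij hij) hval.symm
  exact ⟨hr0, hmem, hval⟩

/-- Freeness is preserved by the Bender–Knuth move. -/
lemma fr_bk_iff (hij : (j : ℕ) = (i : ℕ) + 1) (hT : IsSSYT μ T) (c : μ.cells) :
    Fr i j (bk i j T) c ↔ Fr i j T c := by
  constructor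
  · -- contrapositive: not free stays not free
    intro hf
    by_contra hnf
    have hval : bk i j T c = T c := bk_of_not_free hnf
    rcases fr_val hf with hv | hv <;> rw [hval] at hv
    · -- T c = i, locked: below holds j and below is locked too
      obtain ⟨hmem, hbel⟩ := not_free_i hij hnf hv
      have hbnf : ¬ Fr i j T (cell μ _ hmem) := by
        rintro (hf' | hf')
        · rw [hf'.1] at hbel; exact (ne_ij hij) hbel
        · have hup : (row (cell μ (row c + 1, col c) hmem) - 1,
              col (cell μ (row c + 1, col c) hmem)) ∈ μ := by
            simpa [cell] using cmem c
          have := hf'.2 hup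
          apply this
          have : cell μ _ hup = c := cell_ext (by simp [cell]) (by simp [cell])
          rw [this, hv]
      rcases hf with hf' | hf'
      · apply hf'.2 hmem
        rw [bk_of_not_free hbnf, hbel]
      · have := (hf'.1).symm.trans hval
        rw [hv] at this
        exact (ne_ij hij) this.symm
    · -- T c = j, locked: above holds i and is locked
      have hnfj : ¬ FreeJ i j T c := fun h => hnf (Or.inr h)
      obtain ⟨hr0, hmem, habv⟩ := not_free_j hij hnfj hv
      have hanf : ¬ Fr i j T (cell μ _ hmem) := by
        rintro (hf' | hf')
        · have hdn : (row (cell μ (row c - 1, col c) hmem) + 1,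
              col (cell μ (row c - 1, col c) hmem)) ∈ μ := by
            simp only [cell]
            have : row c - 1 + 1 = row c := by omega
            rw [this]
            exact cmem c
          apply hf'.2 hdn
          have : cell μ _ hdn = c := cell_ext (by simp; omega) (by simp)
          rw [this, hv]
        · rw [hf'.1] at habv; exact (ne_ij hij) habv.symm
      rcases hf with hf' | hf'
      · have := (hf'.1).symm.trans hval
        rw [hv] at this
        exact (ne_ij hij) this
      · apply hf'.2 hmem
        rw [bk_of_not_free hanf, habv]
  · intro hfc
    rcases bk_val hfc with hv | hv
    · left
      refine ⟨hv, ?_⟩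
      intro h
      have hgt := free_below_gt hij hT hfc h
      have hbnf : ¬ Fr i j T (cell μ _ h) := by
        intro hf'
        rcases fr_val hf' with h' | h' <;> rw [h'] at hgt
        · have := i_lt_j hij; omega
        · omega
      rw [bk_of_not_free hbnf]
      intro h'
      rw [h'] at hgt
      omega
    · right
      refine ⟨hv, ?_⟩
      intro h
      by_cases hr0 : row c = 0
      · have : cell μ (row c - 1, col c) h = c := cell_ext (by simp [cell, hr0]) rfl
        rw [this, hv]
        exact (ne_ij hij).symm
      · have hlt := free_above_lt hij hT hfc h hr0
        have hanf : ¬ Fr i j T (cell μ _ h) := by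
          intro hf'
          rcases fr_val hf' with h' | h' <;> rw [h'] at hlt
          · omega
          · have := i_lt_j hij; omega
        rw [bk_of_not_free hanf]
        intro h'
        rw [h'] at hlt
        omega

lemma rk_bk (hij : (j : ℕ) = (i : ℕ) + 1) (hT : IsSSYT μ T) (c : μ.cells) :
    rk i j (bk i j T) c = rk i j T c := by
  unfold rk
  congr 1
  apply Finset.filter_congr
  intro d _
  rw [fr_bk_iff hij hT d]

end Struct

section Count

/-- Pure counting lemma: in a finite set of naturals, exactly `b` elements
have fewer than `b` smaller elements, provided `b ≤ card`. -/
lemma rank_count (F : Finset ℕ) (b : ℕ) (hb : b ≤ F.card) :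
    (F.filter fun x => (F.filter (· < x)).card < b).card = b := by
  classical
  set rkF : ℕ → ℕ := fun x => (F.filter (· < x)).card with hrkF
  have hlt : ∀ x ∈ F, rkF x < F.card := by
    intro x hx
    have hsub : F.filter (· < x) ⊆ F.erase x := by
      intro y hy
      rw [Finset.mem_filter] at hy
      rw [Finset.mem_erase]
      exact ⟨Nat.ne_of_lt hy.2, hy.1⟩
    calc rkF x ≤ (F.erase x).card := Finset.card_le_card hsub
      _ < F.card := by
          rw [Finset.card_erase_of_mem hx]
          have := Finset.card_pos.2 ⟨x, hx⟩
          omega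
  have hmono : ∀ x ∈ F, ∀ y ∈ F, x < y → rkF x < rkF y := by
    intro x hx y hy hxy
    apply Finset.card_lt_card
    rw [Finset.ssubset_iff_of_subset]
    · exact ⟨x, Finset.mem_filter.2 ⟨hx, hxy⟩, by simp⟩
    · intro z hz
      rw [Finset.mem_filter] at hz ⊢
      exact ⟨hz.1, lt_trans hz.2 hxy⟩
  have hinj : Set.InjOn rkF F := by
    intro x hx y hy hxy
    rcases lt_trichotomy x y with h | h | h
    · exact absurd hxy (Nat.ne_of_lt (hmono x hx y hy h))
    · exact h
    · exact absurd hxy.symm (Nat.ne_of_lt (hmono y hy x hx h))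
  have himg : F.image rkF = Finset.range F.card := by
    apply Finset.eq_of_subset_of_card_le
    · intro z hz
      rw [Finset.mem_image] at hz
      obtain ⟨x, hx, rfl⟩ := hz
      exact Finset.mem_range.2 (hlt x hx)
    · rw [Finset.card_range, Finset.card_image_of_injOn hinj]
  have key : (F.filter fun x => rkF x < b).image rkF = Finset.range b := by
    ext z
    simp only [Finset.mem_image, Finset.mem_filter, Finset.mem_range]
    constructor
    · rintro ⟨x, ⟨-, hx⟩, rfl⟩
      exact hx
    · intro hz
      have hz' : z ∈ Finset.range F.card := Finset.mem_range.2 (lt_of_lt_of_le hz hb)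
      rw [← himg, Finset.mem_image] at hz'
      obtain ⟨x, hx, rfl⟩ := hz'
      exact ⟨x, ⟨hx, hz⟩, rfl⟩
  have hfin := Finset.card_image_of_injOn
    (hinj.mono (Finset.coe_subset.2 (Finset.filter_subset (fun x => rkF x < b) F)))
  rw [key, Finset.card_range] at hfin
  exact hfin.symm

variable {i j : Fin N} {T : μ.cells → Fin N}

open Classical in
noncomputable def rowFree (i j : Fin N) (T : μ.cells → Fin N) (r : ℕ) : Finset μ.cells :=
  Finset.univ.filter fun d => row d = r ∧ Fr i j T d

open Classical in
noncomputable def colset (i j : Fin N) (T : μ.cells → Fin N) (r : ℕ) : Finset ℕ :=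
  (rowFree i j T r).image col

lemma col_injOn (r : ℕ) : Set.InjOn col (rowFree i j T r : Set μ.cells) := by
  intro x hx y hy h
  rw [Finset.mem_coe, rowFree, mem_filter] at hx hy
  exact cell_ext (hx.2.1.trans hy.2.1.symm) h

lemma colset_card (r : ℕ) : (colset i j T r).card = (rowFree i j T r).card :=
  Finset.card_image_of_injOn (col_injOn r)

lemma rk_eq {r : ℕ} {d : μ.cells} (hd : d ∈ rowFree i j T r) :
    rk i j T d = ((colset i j T r).filter (· < col d)).card := by
  rw [rowFree, mem_filter] at hd
  have h1 : (Finset.univ.filter fun e : μ.cells =>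
      row e = row d ∧ Fr i j T e ∧ col e < col d)
      = (rowFree i j T r).filter (fun e => col e < col d) := by
    rw [rowFree, Finset.filter_filter]
    apply Finset.filter_congr
    intro e _
    rw [hd.2.1]
    tauto
  rw [rk, h1]
  rw [← Finset.card_image_of_injOn
    ((col_injOn r).mono (Finset.coe_subset.2 (Finset.filter_subset _ _)))]
  congr 1
  rw [← Finset.filter_image (p := fun x => x < col d)]
  rfl

lemma rowFree_card (hij : (j : ℕ) = (i : ℕ) + 1) (r : ℕ) :
    (rowFree i j T r).card = acount i j T r + bcount i j T r := by
  classical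
  have hU : rowFree i j T r
      = (Finset.univ.filter fun d : μ.cells => row d = r ∧ FreeI i j T d)
        ∪ (Finset.univ.filter fun d : μ.cells => row d = r ∧ FreeJ i j T d) := by
    ext d
    rw [rowFree, Finset.mem_filter, Finset.mem_union, Finset.mem_filter, Finset.mem_filter]
    simp only [Fr]
    tauto
  have hD : Disjoint
      (Finset.univ.filter fun d : μ.cells => row d = r ∧ FreeI i j T d)
      (Finset.univ.filter fun d : μ.cells => row d = r ∧ FreeJ i j T d) := by
    rw [Finset.disjoint_left]
    intro d hdA hdB
    rw [Finset.mem_filter] at hdA hdB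
    exact (ne_ij hij) ((hdA.2.2.1).symm.trans hdB.2.2.1)
  rw [hU, Finset.card_union_of_disjoint hD, acount, bcount]

lemma count_lt_b (hij : (j : ℕ) = (i : ℕ) + 1) (r : ℕ) :
    ((rowFree i j T r).filter fun d => rk i j T d < bcount i j T r).card
      = bcount i j T r := by
  classical
  have hb : bcount i j T r ≤ (colset i j T r).card := by
    rw [colset_card, rowFree_card hij]
    omega
  have h1 : (rowFree i j T r).filter (fun d => rk i j T d < bcount i j T r)
      = (rowFree i j T r).filter
        (fun d => ((colset i j T r).filter (· < col d)).card < bcount i j T r) := by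
    apply Finset.filter_congr
    intro d hd
    rw [rk_eq hd]
  rw [h1]
  rw [← Finset.card_image_of_injOn
    ((col_injOn r).mono (Finset.coe_subset.2 (Finset.filter_subset _ _)))]
  rw [← Finset.filter_image
    (p := fun x => ((colset i j T r).filter (· < x)).card < bcount i j T r)]
  exact rank_count (colset i j T r) (bcount i j T r) hb

lemma count_ge (hij : (j : ℕ) = (i : ℕ) + 1) (r : ℕ) :
    ((rowFree i j T r).filter fun d => ¬ rk i j T d < bcount i j T r).card
      = acount i j T r := by
  classical
  have h := Finset.card_filter_add_card_filter_not (s := rowFree i j T r)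
    (p := fun d => rk i j T d < bcount i j T r)
  have h' : ((rowFree i j T r).filter fun d => rk i j T d < bcount i j T r).card
      + ((rowFree i j T r).filter fun d => ¬ rk i j T d < bcount i j T r).card
      = (rowFree i j T r).card := h
  rw [count_lt_b hij, rowFree_card hij] at h'
  omega

lemma bcount_bk (hij : (j : ℕ) = (i : ℕ) + 1) (hT : IsSSYT μ T) (r : ℕ) :
    bcount i j (bk i j T) r = acount i j T r := by
  classical
  rw [← count_ge hij r, bcount]
  congr 1
  rw [rowFree, Finset.filter_filter]
  apply Finset.filter_congr
  intro d _
  constructor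
  · rintro ⟨hrow, hfj⟩
    have hfr : Fr i j T d := (fr_bk_iff hij hT d).1 (Or.inr hfj)
    refine ⟨⟨hrow, hfr⟩, ?_⟩
    rw [← hrow]
    exact (bk_eq_j_iff hij hfr).1 hfj.1
  · rintro ⟨⟨hrow, hfr⟩, hge⟩
    refine ⟨hrow, ?_⟩
    rw [freeJ_iff hij]
    refine ⟨(fr_bk_iff hij hT d).2 hfr, ?_⟩
    rw [bk_eq_j_iff hij hfr, hrow]
    exact hge

lemma acount_bk (hij : (j : ℕ) = (i : ℕ) + 1) (hT : IsSSYT μ T) (r : ℕ) :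
    acount i j (bk i j T) r = bcount i j T r := by
  classical
  rw [← count_lt_b hij r, acount]
  congr 1
  rw [rowFree, Finset.filter_filter]
  apply Finset.filter_congr
  intro d _
  constructor
  · rintro ⟨hrow, hfi⟩
    have hfr : Fr i j T d := (fr_bk_iff hij hT d).1 (Or.inl hfi)
    refine ⟨⟨hrow, hfr⟩, ?_⟩
    rw [← hrow]
    exact (bk_eq_i_iff hij hfr).1 hfi.1
  · rintro ⟨⟨hrow, hfr⟩, hlt⟩
    refine ⟨hrow, ?_⟩
    rw [freeI_iff hij]
    refine ⟨(fr_bk_iff hij hT d).2 hfr, ?_⟩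
    rw [bk_eq_i_iff hij hfr, hrow]
    exact hlt

lemma bk_bk (hij : (j : ℕ) = (i : ℕ) + 1) (hT : IsSSYT μ T) :
    bk i j (bk i j T) = T := by
  funext c
  by_cases hfc : Fr i j T c
  · have hfb : Fr i j (bk i j T) c := (fr_bk_iff hij hT c).2 hfc
    rw [bk, if_pos hfb, rk_bk hij hT, bcount_bk hij hT]
    rcases fr_val hfc with hv | hv
    · rw [if_pos (((val_i_iff hij hT hfc).1 hv)), hv]
    · rw [if_neg, hv]
      intro hlt
      have := (val_i_iff hij hT hfc).2 hlt
      rw [hv] at this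
      exact (ne_ij hij) this.symm
  · rw [bk_of_not_free (fun h => hfc ((fr_bk_iff hij hT c).1 h)),
      bk_of_not_free hfc]

end Count

section SSYT

variable {i j : Fin N} {T : μ.cells → Fin N}

lemma rk_mono {c d : μ.cells} (hrow : row c = row d) (hcol : col c ≤ col d) :
    rk i j T c ≤ rk i j T d := by
  apply Finset.card_le_card
  intro e he
  rw [mem_filter] at he ⊢
  exact ⟨he.1, he.2.1.trans hrow, he.2.2.1, lt_of_lt_of_le he.2.2.2 hcol⟩

lemma bk_le_j (hij : (j : ℕ) = (i : ℕ) + 1) {c : μ.cells} (h : Fr i j T c) :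
    bk i j T c ≤ j := by
  rcases bk_val h with hv | hv
  · exact hv.le.trans (i_lt_j hij).le
  · exact hv.le

lemma i_le_bk (hij : (j : ℕ) = (i : ℕ) + 1) {c : μ.cells} (h : Fr i j T c) :
    i ≤ bk i j T c := by
  rcases bk_val h with hv | hv
  · exact hv.ge
  · exact (i_lt_j hij).le.trans hv.ge

/-- Rows of `bk T` are weakly increasing. -/
lemma bk_row_le (hij : (j : ℕ) = (i : ℕ) + 1) (hT : IsSSYT μ T) (c d : μ.cells)
    (hrow : row c = row d) (hcol : col c ≤ col d) : bk i j T c ≤ bk i j T d := by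
  rcases eq_or_lt_of_le hcol with he | hlt
  · rw [cell_ext hrow he]
  by_cases hfc : Fr i j T c <;> by_cases hfd : Fr i j T d
  · -- both free
    rcases bk_val hfc with hv | hv
    · rw [hv]; exact i_le_bk hij hfd
    · rw [hv]
      have h1 : ¬ rk i j T c < bcount i j T (row c) := (bk_eq_j_iff hij hfc).1 hv
      have h2 : ¬ rk i j T d < bcount i j T (row d) := by
        rw [← hrow]
        have := rk_mono (i := i) (j := j) (T := T) hrow hcol
        omega
      rw [(bk_eq_j_iff hij hfd).2 h2]
  · -- c free, d not
    rw [bk_of_not_free hfd]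
    have hcd : T c ≤ T d := hT.1 c d hrow hcol
    rcases lt_trichotomy (T d) j with h | h | h
    · -- T d ≤ i hence T c = T d = i, d locked i, contradiction
      have hdi : T d ≤ i := (lt_j_iff hij).1 h
      have hci : i ≤ T c := by
        rcases fr_val hfc with h' | h'
        · exact h'.ge
        · exact (i_lt_j hij).le.trans h'.ge
      have hTc : T c = i := le_antisymm (hcd.trans hdi) hci
      have hTd : T d = i := le_antisymm hdi (hTc ▸ hcd)
      have hnfd : ¬ FreeI i j T d := fun h' => hfd (Or.inl h')
      have hnfc := lockedI_left hij hT hrow hcol hTc hTd hnfd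
      rcases hfc with h' | h'
      · exact absurd h' hnfc
      · rw [h'.1] at hTc
        exact absurd hTc.symm (ne_ij hij)
    · rw [h]; exact bk_le_j hij hfc
    · exact le_of_lt (lt_of_le_of_lt (bk_le_j hij hfc) h)
  · -- c not free, d free
    rw [bk_of_not_free hfc]
    have hcd : T c ≤ T d := hT.1 c d hrow hcol
    have hdj : T d ≤ j := by
      rcases fr_val hfd with h' | h'
      · exact h'.le.trans (i_lt_j hij).le
      · exact h'.le
    rcases lt_trichotomy (T c) i with h | h | h
    · exact le_of_lt (lt_of_lt_of_le h (i_le_bk hij hfd))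
    · rw [h]; exact i_le_bk hij hfd
    · -- T c ≥ j so T c = T d = j, c locked j, so d locked j: contradiction
      have hjc : j ≤ T c := (i_lt_iff hij).1 h
      have hTc : T c = j := le_antisymm (hcd.trans hdj) hjc
      have hTd : T d = j := le_antisymm hdj (hTc ▸ hcd)
      have hnfc : ¬ FreeJ i j T c := fun h' => hfc (Or.inr h')
      have hnfd := lockedJ_right hij hT hrow hcol hTc hTd hnfc
      rcases hfd with h' | h'
      · rw [h'.1] at hTd
        exact absurd hTd.symm (ne_ij hij).symm
      · exact absurd h' hnfd
  · rw [bk_of_not_free hfc, bk_of_not_free hfd]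
    exact hT.1 c d hrow hcol

/-- Adjacent-row column strictness for `bk T`. -/
lemma bk_col_adj (hij : (j : ℕ) = (i : ℕ) + 1) (hT : IsSSYT μ T) (c d : μ.cells)
    (hcol : col c = col d) (hrow : row d = row c + 1) : bk i j T c < bk i j T d := by
  have hcd : T c < T d := hT.2 c d hcol (by show row c < row d; omega)
  have hdc : d = cell μ (row c + 1, col c) (by rw [← hrow, hcol]; exact cmem d) :=
    cell_ext (by simp [hrow]) (by simp [hcol])
  by_cases hfc : Fr i j T c <;> by_cases hfd : Fr i j T d
  · -- both free: impossible
    exfalso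
    have hpair : T c = i ∧ T d = j := by
      rcases fr_val hfc with h' | h'
      · rcases fr_val hfd with h'' | h''
        · rw [h', h''] at hcd
          exact absurd hcd (lt_irrefl i)
        · exact ⟨h', h''⟩
      · rcases fr_val hfd with h'' | h''
        · rw [h', h''] at hcd
          exact absurd hcd (not_lt.2 (i_lt_j hij).le)
        · rw [h', h''] at hcd
          exact absurd hcd (lt_irrefl j)
    obtain ⟨h1, h2⟩ := hpair
    rcases hfc with h' | h'
    · apply h'.2 (by rw [← hrow, hcol]; exact cmem d)
      rw [← hdc]
      exact h2
    · rw [h'.1] at h1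
      exact (ne_ij hij) h1.symm
  · -- c free, d not free
    rw [bk_of_not_free hfd]
    have hic : i ≤ T c := by
      rcases fr_val hfc with h' | h'
      · exact h'.ge
      · exact (i_lt_j hij).le.trans h'.ge
    have hjd : j ≤ T d := (i_lt_iff hij).1 (lt_of_le_of_lt hic hcd)
    rcases eq_or_lt_of_le hjd with h | h
    · -- T d = j, so above d (= c) holds i, c is then locked: contradiction
      exfalso
      have hnfj : ¬ FreeJ i j T d := by
        intro hfj
        apply hfd (Or.inr hfj)
      obtain ⟨hr0, hmem, hval⟩ := not_free_j hij hnfj h.symm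
      have hcabv : cell μ (row d - 1, col d) hmem = c :=
        cell_ext (by simp [hrow]) (by simp [hcol])
      rw [hcabv] at hval
      rcases hfc with h' | h'
      · apply h'.2 (by rw [← hrow, hcol]; exact cmem d)
        rw [← hdc]
        exact h.symm
      · rw [h'.1] at hval
        exact (ne_ij hij) hval.symm
    · exact lt_of_le_of_lt (bk_le_j hij hfc) h
  · -- c not free, d free
    rw [bk_of_not_free hfc]
    have hdj : T d ≤ j := by
      rcases fr_val hfd with h' | h'
      · exact h'.le.trans (i_lt_j hij).le
      · exact h'.le
    have hci : T c ≤ i := (lt_j_iff hij).1 (lt_of_lt_of_le hcd hdj)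
    rcases eq_or_lt_of_le hci with h | h
    · -- T c = i, so below c (= d) holds j and d is locked: contradiction
      exfalso
      obtain ⟨hmem, hval⟩ := not_free_i hij hfc h
      rw [← hdc] at hval
      rcases hfd with h' | h'
      · rw [h'.1] at hval
        exact (ne_ij hij) hval
      · apply h'.2 (by
          rw [hrow, ← hcol]
          simpa using cmem c)
        have : cell μ (row d - 1, col d) (by rw [hrow, ← hcol]; simpa using cmem c) = c :=
          cell_ext (by simp [hrow]) (by simp [hcol])
        rw [this]
        exact h
    · exact lt_of_lt_of_le h (i_le_bk hij hfd)
  · rw [bk_of_not_free hfc, bk_of_not_free hfd]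
    exact hcd

/-- Column strictness from adjacent-row strictness. -/
lemma col_strict (S : μ.cells → Fin N)
    (h : ∀ c d : μ.cells, col c = col d → row d = row c + 1 → S c < S d) :
    ∀ c d : μ.cells, col c = col d → row c < row d → S c < S d := by
  have key : ∀ n, ∀ c d : μ.cells, row d = n → col c = col d → row c < row d → S c < S d := by
    intro n
    induction n with
    | zero => intro c d h1 _ h3; omega
    | succ m ih =>
      intro c d h1 h2 h3
      rcases Nat.lt_or_ge (row c) m with hlt | hge
      · have hm : (m, col d) ∈ μ := μ.up_left_mem (by show m ≤ row d; omega) le_rfl (cmem d)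
        have hre : row (cell μ (m, col d) hm) = m := rfl
        have hce : col (cell μ (m, col d) hm) = col d := rfl
        have h4 := ih c (cell μ (m, col d) hm) hre (h2.trans hce.symm) (by omega)
        have h5 := h (cell μ (m, col d) hm) d hce (by omega)
        exact lt_trans h4 h5
      · have : row c = m := by omega
        exact h c d h2 (by omega)
  intro c d hcol hrow
  exact key (row d) c d rfl hcol hrow

lemma isSSYT_bk (hij : (j : ℕ) = (i : ℕ) + 1) (hT : IsSSYT μ T) :
    IsSSYT μ (bk i j T) :=
  ⟨fun c d hrow hcol => bk_row_le hij hT c d hrow hcol,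
   fun c d hcol hrow => col_strict (bk i j T)
     (fun c d h1 h2 => bk_col_adj hij hT c d h1 h2) c d hcol hrow⟩

end SSYT

section Weight

variable {i j : Fin N} {T : μ.cells → Fin N}

/-- Locked `i`-cells biject with locked `j`-cells (vertical pairing). -/
lemma locked_card (hij : (j : ℕ) = (i : ℕ) + 1) (hT : IsSSYT μ T) :
    (Finset.univ.filter fun c : μ.cells => ¬ Fr i j T c ∧ T c = i).card
      = (Finset.univ.filter fun c : μ.cells => ¬ Fr i j T c ∧ T c = j).card := by
  classical
  rw [← Finset.card_image_of_injective
      (Finset.univ.filter fun c : μ.cells => ¬ Fr i j T c ∧ T c = i) Subtype.val_injective,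
    ← Finset.card_image_of_injective
      (Finset.univ.filter fun c : μ.cells => ¬ Fr i j T c ∧ T c = j) Subtype.val_injective]
  apply Finset.card_nbij' (fun p => (p.1 + 1, p.2)) (fun p => (p.1 - 1, p.2))
  · intro p hp
    simp only [Finset.mem_coe, Finset.mem_image, Finset.mem_filter, Finset.mem_univ, true_and] at hp ⊢
    obtain ⟨c, ⟨hnf, hv⟩, rfl⟩ := hp
    obtain ⟨hmem, hval⟩ := not_free_i hij hnf hv
    refine ⟨cell μ _ hmem, ⟨?_, hval⟩, rfl⟩
    rintro (hf | hf)
    · exact (ne_ij hij) (hf.1.symm.trans hval)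
    · have hup : (row (cell μ (row c + 1, col c) hmem) - 1,
          col (cell μ (row c + 1, col c) hmem)) ∈ μ := by
        simpa using cmem c
      apply hf.2 hup
      rw [show cell μ _ hup = c from cell_ext (by simp) (by simp), hv]
  · intro p hp
    simp only [Finset.mem_coe, Finset.mem_image, Finset.mem_filter, Finset.mem_univ, true_and] at hp ⊢
    obtain ⟨c, ⟨hnf, hv⟩, rfl⟩ := hp
    have hnfj : ¬ FreeJ i j T c := fun h => hnf (Or.inr h)
    obtain ⟨hr0, hmem, hval⟩ := not_free_j hij hnfj hv
    refine ⟨cell μ _ hmem, ⟨?_, hval⟩, rfl⟩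
    rintro (hf | hf)
    · have hdn : (row (cell μ (row c - 1, col c) hmem) + 1,
          col (cell μ (row c - 1, col c) hmem)) ∈ μ := by
        simp only [row_cell, col_cell]
        rw [show row c - 1 + 1 = row c from by omega]
        exact cmem c
      apply hf.2 hdn
      rw [show cell μ _ hdn = c from cell_ext (by simp; omega) (by simp), hv]
    · exact (ne_ij hij) (hf.1.symm.trans hval).symm
  · intro p hp
    exact Prod.ext (by simp) rfl
  · intro p hp
    simp only [Finset.mem_coe, Finset.mem_image, Finset.mem_filter, Finset.mem_univ, true_and] at hp
    obtain ⟨c, ⟨hnf, hv⟩, rfl⟩ := hp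
    have hnfj : ¬ FreeJ i j T c := fun h => hnf (Or.inr h)
    obtain ⟨hr0, -, -⟩ := not_free_j hij hnfj hv
    exact Prod.ext (by show row c - 1 + 1 = row c; omega) rfl

lemma card_fiber_eq (P Q : μ.cells → Prop) [DecidablePred P] [DecidablePred Q]
    (h : ∀ r : ℕ, (Finset.univ.filter fun c : μ.cells => row c = r ∧ P c).card
      = (Finset.univ.filter fun c : μ.cells => row c = r ∧ Q c).card) :
    (Finset.univ.filter fun c : μ.cells => P c).card
      = (Finset.univ.filter fun c : μ.cells => Q c).card := by
  classical
  rw [Finset.card_eq_sum_card_fiberwise (f := fun c : μ.cells => row c)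
      (t := Finset.univ.image fun c : μ.cells => row c)
      (fun x _ => Finset.mem_image_of_mem _ (Finset.mem_univ x)),
    Finset.card_eq_sum_card_fiberwise (f := fun c : μ.cells => row c)
      (t := Finset.univ.image fun c : μ.cells => row c)
      (fun x _ => Finset.mem_image_of_mem _ (Finset.mem_univ x))]
  apply Finset.sum_congr rfl
  intro r _
  have e1 : (Finset.univ.filter fun c : μ.cells => P c).filter (fun c => row c = r)
      = Finset.univ.filter fun c : μ.cells => row c = r ∧ P c := by
    rw [Finset.filter_filter]
    apply Finset.filter_congr
    intro c _
    tauto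
  have e2 : (Finset.univ.filter fun c : μ.cells => Q c).filter (fun c => row c = r)
      = Finset.univ.filter fun c : μ.cells => row c = r ∧ Q c := by
    rw [Finset.filter_filter]
    apply Finset.filter_congr
    intro c _
    tauto
  rw [e1, e2, h r]

lemma wt_split (i j : Fin N) (T : μ.cells → Fin N) (X : μ.cells → Fin N) (v : Fin N) :
    wt μ X v = (Finset.univ.filter fun c : μ.cells => Fr i j T c ∧ X c = v).card
      + (Finset.univ.filter fun c : μ.cells => ¬ Fr i j T c ∧ X c = v).card := by
  classical
  rw [wt]
  have hU : (Finset.univ.filter fun c : μ.cells => X c = v)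
      = (Finset.univ.filter fun c : μ.cells => Fr i j T c ∧ X c = v)
        ∪ (Finset.univ.filter fun c : μ.cells => ¬ Fr i j T c ∧ X c = v) := by
    ext c
    simp only [Finset.mem_filter, Finset.mem_union, Finset.mem_univ, true_and]
    tauto
  have hD : Disjoint
      (Finset.univ.filter fun c : μ.cells => Fr i j T c ∧ X c = v)
      (Finset.univ.filter fun c : μ.cells => ¬ Fr i j T c ∧ X c = v) := by
    rw [Finset.disjoint_left]
    intro c h1 h2
    rw [Finset.mem_filter] at h1 h2
    exact h2.2.1 h1.2.1
  rw [hU, Finset.card_union_of_disjoint hD]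

lemma wt_bk_i (hij : (j : ℕ) = (i : ℕ) + 1) (hT : IsSSYT μ T) :
    wt μ (bk i j T) i = wt μ T j := by
  classical
  rw [wt_split i j T (bk i j T) i, wt_split i j T T j]
  have hfree : (Finset.univ.filter fun c : μ.cells => Fr i j T c ∧ bk i j T c = i).card
      = (Finset.univ.filter fun c : μ.cells => Fr i j T c ∧ T c = j).card := by
    apply card_fiber_eq
    intro r
    have e1 : (Finset.univ.filter fun c : μ.cells =>
        row c = r ∧ Fr i j T c ∧ bk i j T c = i)
        = (rowFree i j T r).filter fun d => rk i j T d < bcount i j T r := by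
      rw [rowFree, Finset.filter_filter]
      apply Finset.filter_congr
      intro c _
      constructor
      · rintro ⟨hr, hf, hv⟩
        exact ⟨⟨hr, hf⟩, by rw [← hr]; exact (bk_eq_i_iff hij hf).1 hv⟩
      · rintro ⟨⟨hr, hf⟩, hlt⟩
        exact ⟨hr, hf, (bk_eq_i_iff hij hf).2 (by rw [hr]; exact hlt)⟩
    have e2 : (Finset.univ.filter fun c : μ.cells => row c = r ∧ (Fr i j T c ∧ T c = j))
        = (Finset.univ.filter fun c : μ.cells => row c = r ∧ FreeJ i j T c) := by
      apply Finset.filter_congr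
      intro c _
      rw [freeJ_iff hij]
    rw [e1, e2, count_lt_b hij r, bcount]
  have hlocked : (Finset.univ.filter fun c : μ.cells => ¬ Fr i j T c ∧ bk i j T c = i).card
      = (Finset.univ.filter fun c : μ.cells => ¬ Fr i j T c ∧ T c = j).card := by
    rw [show (Finset.univ.filter fun c : μ.cells => ¬ Fr i j T c ∧ bk i j T c = i)
        = (Finset.univ.filter fun c : μ.cells => ¬ Fr i j T c ∧ T c = i) from
      Finset.filter_congr fun c _ => by
        rw [and_congr_right_iff]
        intro h
        rw [bk_of_not_free h]]
    exact locked_card hij hT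
  omega

lemma wt_bk_j (hij : (j : ℕ) = (i : ℕ) + 1) (hT : IsSSYT μ T) :
    wt μ (bk i j T) j = wt μ T i := by
  classical
  rw [wt_split i j T (bk i j T) j, wt_split i j T T i]
  have hfree : (Finset.univ.filter fun c : μ.cells => Fr i j T c ∧ bk i j T c = j).card
      = (Finset.univ.filter fun c : μ.cells => Fr i j T c ∧ T c = i).card := by
    apply card_fiber_eq
    intro r
    have e1 : (Finset.univ.filter fun c : μ.cells =>
        row c = r ∧ (Fr i j T c ∧ bk i j T c = j))
        = (rowFree i j T r).filter fun d => ¬ rk i j T d < bcount i j T r := by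
      rw [rowFree, Finset.filter_filter]
      apply Finset.filter_congr
      intro c _
      constructor
      · rintro ⟨hr, hf, hv⟩
        exact ⟨⟨hr, hf⟩, by rw [← hr]; exact (bk_eq_j_iff hij hf).1 hv⟩
      · rintro ⟨⟨hr, hf⟩, hlt⟩
        exact ⟨hr, hf, (bk_eq_j_iff hij hf).2 (by rw [hr]; exact hlt)⟩
    have e2 : (Finset.univ.filter fun c : μ.cells => row c = r ∧ (Fr i j T c ∧ T c = i))
        = (Finset.univ.filter fun c : μ.cells => row c = r ∧ FreeI i j T c) := by
      apply Finset.filter_congr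
      intro c _
      rw [freeI_iff hij]
    rw [e1, e2, count_ge hij r, acount]
  have hlocked : (Finset.univ.filter fun c : μ.cells => ¬ Fr i j T c ∧ bk i j T c = j).card
      = (Finset.univ.filter fun c : μ.cells => ¬ Fr i j T c ∧ T c = i).card := by
    rw [show (Finset.univ.filter fun c : μ.cells => ¬ Fr i j T c ∧ bk i j T c = j)
        = (Finset.univ.filter fun c : μ.cells => ¬ Fr i j T c ∧ T c = j) from
      Finset.filter_congr fun c _ => by
        rw [and_congr_right_iff]
        intro h
        rw [bk_of_not_free h]]
    exact (locked_card hij hT).symm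
  omega

lemma wt_bk_other (hij : (j : ℕ) = (i : ℕ) + 1) (hT : IsSSYT μ T) {k : Fin N}
    (hki : k ≠ i) (hkj : k ≠ j) : wt μ (bk i j T) k = wt μ T k := by
  classical
  rw [wt, wt]
  congr 1
  apply Finset.filter_congr
  intro c _
  by_cases hfc : Fr i j T c
  · constructor
    · intro h
      rcases bk_val hfc with hv | hv <;> rw [h] at hv
      · exact absurd hv hki
      · exact absurd hv hkj
    · intro h
      rcases fr_val hfc with hv | hv <;> rw [h] at hv
      · exact absurd hv hki
      · exact absurd hv hkj
  · rw [bk_of_not_free hfc]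

end Weight

end BK

/-- **Bender–Knuth symmetry**: for `1 ≤ i < N` there is an involution on the set of
semistandard Young tableaux of shape `μ` with entries in `{1, …, N}` interchanging
the number of `i`'s and the number of `(i+1)`'s while fixing the number of every
other entry; consequently `s_μ(x₁, …, x_N)` is invariant under transposing the
variables `xᵢ` and `x_{i+1}`. -/
theorem bender_knuth (μ : YoungDiagram) (N : ℕ) (hN : 0 < N)
    (i : Fin N) (hi : (i : ℕ) + 1 < N) :
    (∃ f : {T : μ.cells → Fin N // IsSSYT μ T} → {T : μ.cells → Fin N // IsSSYT μ T},
      Function.Involutive f ∧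
      ∀ T : {T : μ.cells → Fin N // IsSSYT μ T},
        wt μ (f T).1 i = wt μ T.1 ⟨(i : ℕ) + 1, hi⟩ ∧
        wt μ (f T).1 ⟨(i : ℕ) + 1, hi⟩ = wt μ T.1 i ∧
        ∀ k : Fin N, k ≠ i → k ≠ ⟨(i : ℕ) + 1, hi⟩ → wt μ (f T).1 k = wt μ T.1 k) ∧
    MvPolynomial.rename (Equiv.swap i ⟨(i : ℕ) + 1, hi⟩) (schur μ N) = schur μ N := by
  classical
  set j : Fin N := ⟨(i : ℕ) + 1, hi⟩ with hjdef
  have hij : (j : ℕ) = (i : ℕ) + 1 := rfl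
  constructor
  · refine ⟨fun T => ⟨BK.bk i j T.1, BK.isSSYT_bk hij T.2⟩, ?_, ?_⟩
    · intro T
      exact Subtype.ext (BK.bk_bk hij T.2)
    · intro T
      exact ⟨BK.wt_bk_i hij T.2, BK.wt_bk_j hij T.2,
        fun k hki hkj => BK.wt_bk_other hij T.2 hki hkj⟩
  · set σ : Equiv.Perm (Fin N) := Equiv.swap i j with hσ
    rw [schur, map_sum]
    have hterm : ∀ T : μ.cells → Fin N,
        (rename σ) (∏ k : Fin N, (X k : MvPolynomial (Fin N) ℚ) ^ wt μ T k)
          = ∏ k : Fin N, (X k : MvPolynomial (Fin N) ℚ) ^ wt μ T (σ k) := by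
      intro T
      rw [map_prod]
      have h1 : ∀ k : Fin N,
          (rename σ) ((X k : MvPolynomial (Fin N) ℚ) ^ wt μ T k)
            = (X (σ k) : MvPolynomial (Fin N) ℚ) ^ wt μ T k := by
        intro k
        rw [map_pow, rename_X]
      rw [Finset.prod_congr rfl fun k _ => h1 k]
      rw [← Equiv.prod_comp σ
        (fun k => (X k : MvPolynomial (Fin N) ℚ) ^ wt μ T (σ k))]
      apply Finset.prod_congr rfl
      intro k _
      congr 2
      rw [hσ, Equiv.swap_apply_self]
    rw [Finset.sum_congr rfl fun T _ => hterm T]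
    apply Finset.sum_nbij' (i := fun T => BK.bk i j T) (j := fun T => BK.bk i j T)
    · intro T hT
      rw [Finset.mem_filter] at hT ⊢
      exact ⟨Finset.mem_univ _, BK.isSSYT_bk hij hT.2⟩
    · intro T hT
      rw [Finset.mem_filter] at hT ⊢
      exact ⟨Finset.mem_univ _, BK.isSSYT_bk hij hT.2⟩
    · intro T hT
      rw [Finset.mem_filter] at hT
      exact BK.bk_bk hij hT.2
    · intro T hT
      rw [Finset.mem_filter] at hT
      exact BK.bk_bk hij hT.2
    · intro T hT
      rw [Finset.mem_filter] at hT
      apply Finset.prod_congr rfl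
      intro k _
      congr 1
      by_cases hki : k = i
      · subst hki
        rw [hσ, Equiv.swap_apply_left]
        exact (BK.wt_bk_i hij hT.2).symm
      · by_cases hkj : k = j
        · subst hkj
          rw [hσ, Equiv.swap_apply_right]
          exact (BK.wt_bk_j hij hT.2).symm
        · rw [hσ, Equiv.swap_apply_of_ne_of_ne hki hkj]
          exact (BK.wt_bk_other hij hT.2 hki hkj).symm
end

section
/- Well-definedness of Schensted insertion: For every permutation σ ∈ 𝔖_n, the Schensted insertion procedure applied to σ terminates after n steps and produces a pair (T, U) where T and U are standard Young tableaux of the same shape λ with |λ| = n. -/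
/-! ### auxiliary -/

def Tab (L : List (List ℕ)) : Prop :=
  (∀ r ∈ L, r ≠ []) ∧
  (∀ i : ℕ, (L.getD (i + 1) []).length ≤ (L.getD i []).length) ∧
  (∀ r ∈ L, r.Pairwise (· < ·)) ∧
  (∀ i j : ℕ, j < (L.getD (i + 1) []).length → ent L i j < ent L (i + 1) j)

def incr : List ℕ → ℕ → List ℕ
  | [], _ => [1]
  | a :: t, 0 => (a + 1) :: t
  | a :: t, (k + 1) => a :: incr t k

lemma tab_nil : Tab [] := by
  refine ⟨by simp, by simp, by simp, ?_⟩
  intro i j h; simp at h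

lemma ent_cons_succ (r : List ℕ) (L : List (List ℕ)) (i j : ℕ) :
    ent (r :: L) (i + 1) j = ent L i j := rfl

lemma ent_cons_zero (r : List ℕ) (L : List (List ℕ)) (j : ℕ) :
    ent (r :: L) 0 j = r.getD j 0 := rfl

lemma tab_cons {r : List ℕ} {L : List (List ℕ)} :
    Tab (r :: L) ↔ r ≠ [] ∧ r.Pairwise (· < ·) ∧
      (L.getD 0 []).length ≤ r.length ∧
      (∀ j < (L.getD 0 []).length, r.getD j 0 < (L.getD 0 []).getD j 0) ∧ Tab L := by
  constructor
  · rintro ⟨h1, h2, h3, h4⟩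
    refine ⟨h1 r (by simp), h3 r (by simp), h2 0, fun j hj => h4 0 j hj, ?_, ?_, ?_, ?_⟩
    · exact fun s hs => h1 s (by simp [hs])
    · exact fun i => h2 (i + 1)
    · exact fun s hs => h3 s (by simp [hs])
    · exact fun i j hj => h4 (i + 1) j hj
  · rintro ⟨h1, h2, h3, h4, t1, t2, t3, t4⟩
    refine ⟨?_, ?_, ?_, ?_⟩
    · rintro s hs; rcases List.mem_cons.1 hs with rfl | hs
      · exact h1
      · exact t1 s hs
    · rintro (_ | i)
      · exact h3
      · exact t2 i
    · rintro s hs; rcases List.mem_cons.1 hs with rfl | hs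
      · exact h2
      · exact t3 s hs
    · rintro (_ | i) j hj
      · exact h4 j hj
      · exact t4 i j hj

lemma shape_getD (L : List (List ℕ)) (j : ℕ) :
    (shape L).getD j 0 = (L.getD j []).length := by
  induction L generalizing j with
  | nil => simp [shape]
  | cons r t ih =>
    cases j with
    | zero => simp [shape]
    | succ j => simpa [shape] using ih j

lemma set_perm : ∀ (r : List ℕ) (j : ℕ) (x : ℕ) (h : j < r.length),
    (r.set j x ++ [r[j]]).Perm (x :: r)
  | a :: t, 0, x, _ => by
      simpa using List.Perm.cons x (List.perm_append_singleton a t)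
  | a :: t, j + 1, x, h => by
      have h' : j < t.length := by simpa using h
      have h1 := set_perm t j x h'
      have e : (a :: t).set (j+1) x ++ [(a :: t)[j+1]] = a :: (t.set j x ++ [t[j]]) := by simp
      rw [e]
      exact (List.Perm.cons a h1).trans (List.Perm.swap x a t)

lemma insertTab_nil (x : ℕ) : insertTab [] x = ([[x]], 0) := rfl

lemma insertTab_cons_none {r : List ℕ} {x : ℕ} (rest : List (List ℕ))
    (h : r.findIdx? (fun y => x < y) = none) :
    insertTab (r :: rest) x = ((r ++ [x]) :: rest, 0) := by
  simp [insertTab, insertRow, h]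

lemma insertTab_cons_some {r : List ℕ} {x j : ℕ} (rest : List (List ℕ))
    (h : r.findIdx? (fun y => x < y) = some j) (hj : j < r.length) :
    insertTab (r :: rest) x =
      ((r.set j x) :: (insertTab rest r[j]).1, (insertTab rest r[j]).2 + 1) := by
  simp [insertTab, insertRow, h, List.getElem?_eq_getElem hj]

lemma insertTab_spec : ∀ (P : List (List ℕ)) (x : ℕ), Tab P → P.flatten.Nodup → x ∉ P.flatten →
    Tab (insertTab P x).1 ∧ (insertTab P x).1.flatten.Perm (x :: P.flatten) ∧
    (insertTab P x).2 ≤ P.length ∧ shape (insertTab P x).1 = incr (shape P) (insertTab P x).2 := by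
  intro P
  induction P with
  | nil =>
    intro x _ _ _
    rw [insertTab_nil]
    refine ⟨tab_cons.2 ⟨by simp, by simp, by simp, by simp, tab_nil⟩, by simp, by simp,
      by simp [shape, incr]⟩
  | cons r rest ih =>
    intro x hT hnd hx
    obtain ⟨hr_ne, hr_pw, hlen0, hcol0, hTrest⟩ := tab_cons.1 hT
    rw [List.flatten_cons, List.nodup_append] at hnd
    obtain ⟨hnd_r, hnd_rest, hdisj⟩ := hnd
    rw [List.flatten_cons, List.mem_append] at hx
    push_neg at hx
    obtain ⟨hxr, hxrest⟩ := hx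
    rcases hf : r.findIdx? (fun y => x < y) with _ | j
    · -- append case
      rw [insertTab_cons_none rest hf]
      have hall : ∀ y ∈ r, y < x := by
        intro y hy
        have := List.findIdx?_eq_none_iff.1 hf y hy
        simp only [decide_eq_false_iff_not, not_lt] at this
        exact lt_of_le_of_ne this (fun e => hxr (e ▸ hy))
      refine ⟨?_, ?_, by simp, ?_⟩
      · refine tab_cons.2 ⟨by simp, ?_, ?_, ?_, hTrest⟩
        · rw [List.pairwise_append]
          exact ⟨hr_pw, by simp, fun a ha b hb => by simp at hb; exact hb ▸ hall a ha⟩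
        · rw [List.length_append, List.length_singleton]; omega
        · intro q hq
          have hql : q < r.length := lt_of_lt_of_le hq hlen0
          rw [List.getD_eq_getElem _ _ (by simp; omega), List.getElem_append_left hql,
            ← List.getD_eq_getElem r 0 hql]
          exact hcol0 q hq
      · simp only [List.flatten_cons, List.append_assoc, List.singleton_append]
        exact List.perm_middle
      · simp [shape, incr]
    · -- bump case
      obtain ⟨hj, hxj, hbef⟩ := List.findIdx?_eq_some_iff_getElem.1 hf
      simp only [decide_eq_true_eq, decide_eq_false_iff_not, not_lt] at hxj hbef
      rw [insertTab_cons_some rest hf hj]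
      set y := r[j] with hy
      have hymem : y ∈ r := List.getElem_mem hj
      have hyrest : y ∉ rest.flatten := fun hm => hdisj y hymem y hm rfl
      obtain ⟨ihT, ihperm, ihle, ihshape⟩ := ih y hTrest hnd_rest hyrest
      have hbef' : ∀ q (h : q < j), r[q]'(h.trans hj) < x := by
        intro q hq
        refine lt_of_le_of_ne (hbef q hq) (fun e => hxr (e ▸ List.getElem_mem (hq.trans hj)))
      have hpw' : (r.set j x).Pairwise (· < ·) := by
        rw [List.pairwise_iff_getElem] at hr_pw ⊢
        intro a b ha hb hab
        simp only [List.length_set] at ha hb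
        rw [List.getElem_set, List.getElem_set]
        rcases eq_or_ne j a with rfl | hja <;> rcases eq_or_ne j b with rfl | hjb
        · omega
        · simp only [if_pos rfl, if_neg hjb]
          exact hxj.trans (hr_pw j b ha hb hab)
        · simp only [if_neg hja, if_pos rfl]
          exact hbef' a hab
        · simp only [if_neg hja, if_neg hjb]
          exact hr_pw a b ha hb hab
      set p := insertTab rest y with hp
      obtain ⟨hB, hA⟩ : (p.1.getD 0 []).length ≤ r.length ∧
          ∀ q < (p.1.getD 0 []).length, (r.set j x).getD q 0 < (p.1.getD 0 []).getD q 0 := by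
        match rest, hp with
        | [], hp =>
          rw [hp, insertTab_nil]
          refine ⟨by simp; omega, ?_⟩
          intro q hq
          simp only [List.getD_cons_zero, List.length_cons, List.length_nil] at hq ⊢
          interval_cases q
          rcases Nat.eq_zero_or_pos j with rfl | hjpos
          · rw [List.getD_eq_getElem _ _ (by rw [List.length_set]; omega), List.getElem_set,
              if_pos rfl]
            simpa using hxj
          · rw [List.getD_eq_getElem _ _ (by rw [List.length_set]; omega), List.getElem_set,
              if_neg (by omega)]
            have h2 : r[0] < r[j] := List.pairwise_iff_getElem.1 hr_pw 0 j (by omega) hj hjpos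
            simpa using h2
        | s :: t, hp =>
          have hs0 : ((s :: t).getD 0 []) = s := rfl
          rw [hs0] at hlen0 hcol0
          have hydisj : ∀ z ∈ s, z ≠ y := by
            intro z hz e
            exact hyrest (e ▸ (List.mem_flatten.2 ⟨s, by simp, hz⟩))
          rcases hf2 : s.findIdx? (fun z => y < z) with _ | j2
          · -- y appended to s
            rw [hp, insertTab_cons_none t hf2]
            have hally : ∀ z ∈ s, z < y := by
              intro z hz
              have := List.findIdx?_eq_none_iff.1 hf2 z hz
              simp only [decide_eq_false_iff_not, not_lt] at this
              exact lt_of_le_of_ne this (hydisj z hz)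
            have hlej : s.length ≤ j := by
              by_contra hc
              push_neg at hc
              have h1 := hcol0 j hc
              rw [List.getD_eq_getElem _ _ hj, List.getD_eq_getElem _ _ hc] at h1
              exact absurd h1 (not_lt.2 (hally _ (List.getElem_mem hc)).le)
            simp only [List.getD_cons_zero, List.length_append, List.length_singleton]
            refine ⟨by omega, ?_⟩
            intro q hq
            rcases lt_or_ge q s.length with hqs | hqs
            · have hqj : q ≠ j := by omega
              rw [List.getD_eq_getElem _ _ (by rw [List.length_set]; omega),
                List.getElem_set, if_neg (Ne.symm (by omega) : j ≠ q),
                List.getD_eq_getElem _ _ (by simp; omega), List.getElem_append_left hqs]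
              have := hcol0 q hqs
              rwa [List.getD_eq_getElem _ _ (by omega), List.getD_eq_getElem _ _ hqs] at this
            · have hqe : q = s.length := by omega
              subst hqe
              rw [List.getD_eq_getElem _ _ (by rw [List.length_set]; omega),
                List.getD_eq_getElem _ _ (by simp),
                List.getElem_concat_length rfl, List.getElem_set]
              rcases eq_or_ne j s.length with rfl | hne
              · rw [if_pos rfl]; exact hxj
              · rw [if_neg (Ne.symm (by omega) : j ≠ s.length)]
                exact List.pairwise_iff_getElem.1 hr_pw s.length j (by omega) hj (by omega)
          · -- y bumps s[j2]
            obtain ⟨hj2, hyj2, hbef2⟩ := List.findIdx?_eq_some_iff_getElem.1 hf2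
            simp only [decide_eq_true_eq, decide_eq_false_iff_not, not_lt] at hyj2 hbef2
            rw [hp, insertTab_cons_some t hf2 hj2]
            simp only [List.getD_cons_zero, List.length_set]
            refine ⟨hlen0, ?_⟩
            have hj2j : j2 ≤ j := by
              by_contra hc
              push_neg at hc
              have hjs : j < s.length := hc.trans hj2
              have h1 := hcol0 j hjs
              rw [List.getD_eq_getElem _ _ hj, List.getD_eq_getElem _ _ hjs] at h1
              exact absurd h1 (not_lt.2 (hbef2 j hc))
            intro q hq
            rw [List.getD_eq_getElem _ _ (by rw [List.length_set]; exact lt_of_lt_of_le hq hlen0),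
              List.getD_eq_getElem _ _ (by rwa [List.length_set]),
              List.getElem_set, List.getElem_set]
            rcases eq_or_ne j q with h1 | h1 <;> rcases eq_or_ne j2 q with h2 | h2
            · subst h1
              rw [if_pos rfl, if_pos h2]
              exact hxj
            · subst h1
              rw [if_pos rfl, if_neg h2]
              have h1' := hcol0 j hq
              rw [List.getD_eq_getElem _ _ hj, List.getD_eq_getElem _ _ hq] at h1'
              exact hxj.trans h1'
            · subst h2
              rw [if_neg h1, if_pos rfl]
              exact List.pairwise_iff_getElem.1 hr_pw j2 j (by omega) hj (by omega)
            · rw [if_neg h1, if_neg h2]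
              have h1' := hcol0 q hq
              rwa [List.getD_eq_getElem _ _ (by omega), List.getD_eq_getElem _ _ hq] at h1'

      refine ⟨?_, ?_, Nat.succ_le_succ ihle, ?_⟩
      · refine tab_cons.2 ⟨?_, hpw', by rwa [List.length_set], ?_, ihT⟩
        · intro e
          have h0 : r.length = 0 := by simpa using congrArg List.length e
          cases r
          · exact hr_ne rfl
          · simp at h0
        · exact hA
      · have step1 : ((r.set j x) :: p.1).flatten.Perm (r.set j x ++ (y :: rest.flatten)) := by
          rw [List.flatten_cons]
          exact List.Perm.append_left _ ihperm
        have step2 : r.set j x ++ (y :: rest.flatten) = (r.set j x ++ [y]) ++ rest.flatten := by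
          simp
        have step3 : ((r.set j x ++ [y]) ++ rest.flatten).Perm ((x :: r) ++ rest.flatten) :=
          List.Perm.append_right _ (set_perm r j x hj)
        rw [step2] at step1
        simpa using step1.trans step3
      · simp only [shape] at ihshape
        simp [shape, incr, ihshape, List.length_set]

lemma addBox_nil (i k : ℕ) : addBox [] i k = [[k]] := by simp [addBox]

lemma getD_concat_lt (l : List ℕ) (a : ℕ) {q : ℕ} (h : q < l.length) :
    (l ++ [a]).getD q 0 = l.getD q 0 := by
  rw [List.getD_eq_getElem _ _ (by simp; omega), List.getElem_append_left h,
    List.getD_eq_getElem _ _ h]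

lemma getD_concat_len (l : List ℕ) (a : ℕ) : (l ++ [a]).getD l.length 0 = a := by
  rw [List.getD_eq_getElem _ _ (by simp), List.getElem_concat_length rfl]

lemma addBox_cons_zero (r : List ℕ) (Q : List (List ℕ)) (k : ℕ) :
    addBox (r :: Q) 0 k = (r ++ [k]) :: Q := by simp [addBox]

lemma addBox_cons_succ (r : List ℕ) (Q : List (List ℕ)) (i k : ℕ) :
    addBox (r :: Q) (i + 1) k = r :: addBox Q i k := by
  simp only [addBox]
  by_cases h : i < Q.length
  · rw [dif_pos (by simpa using Nat.succ_lt_succ h), dif_pos h]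
    simp
  · rw [dif_neg (by simp only [List.length_cons]; omega), dif_neg h]
    simp

lemma addBox_getD_zero_pos (Q : List (List ℕ)) (i k : ℕ) (hi : 0 < i) (hle : i ≤ Q.length) :
    (addBox Q i k).getD 0 [] = Q.getD 0 [] := by
  cases Q with
  | nil => simp only [List.length_nil] at hle; omega
  | cons r t =>
    cases i with
    | zero => omega
    | succ i => rw [addBox_cons_succ]; rfl

lemma addBox_getD_zero (Q : List (List ℕ)) (k : ℕ) :
    (addBox Q 0 k).getD 0 [] = Q.getD 0 [] ++ [k] := by
  cases Q with
  | nil => simp [addBox_nil]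
  | cons r t => rw [addBox_cons_zero]; rfl

lemma addBox_spec : ∀ (Q : List (List ℕ)) (i k : ℕ), Tab Q → (∀ a ∈ Q.flatten, a < k) →
    i ≤ Q.length → (∀ j, (incr (shape Q) i).getD (j + 1) 0 ≤ (incr (shape Q) i).getD j 0) →
    Tab (addBox Q i k) ∧ (addBox Q i k).flatten.Perm (k :: Q.flatten) ∧
      shape (addBox Q i k) = incr (shape Q) i := by
  intro Q
  induction Q with
  | nil =>
    intro i k _ _ hi _
    obtain rfl : i = 0 := by simpa using hi
    rw [addBox_nil]
    exact ⟨tab_cons.2 ⟨by simp, by simp, by simp, by simp, tab_nil⟩, by simp, by simp [shape, incr]⟩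
  | cons r Q2 ih =>
    intro i k hT hallk hi hdec
    obtain ⟨hr_ne, hr_pw, hlen0, hcol0, hT2⟩ := tab_cons.1 hT
    have hallk_r : ∀ a ∈ r, a < k := fun a ha => hallk a (by simp [ha])
    have hallk_2 : ∀ a ∈ Q2.flatten, a < k := fun a ha => hallk a (by simp [ha])
    cases i with
    | zero =>
      rw [addBox_cons_zero]
      refine ⟨tab_cons.2 ⟨by simp, ?_,
        by rw [List.length_append, List.length_singleton]; omega, ?_, hT2⟩, ?_, ?_⟩
      · rw [List.pairwise_append]
        exact ⟨hr_pw, by simp, fun a ha b hb => by simp at hb; exact hb ▸ hallk_r a ha⟩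
      · intro q hq
        have hql : q < r.length := lt_of_lt_of_le hq hlen0
        rw [List.getD_eq_getElem _ _ (by simp; omega), List.getElem_append_left hql,
          ← List.getD_eq_getElem r 0 hql]
        exact hcol0 q hq
      · simp only [List.flatten_cons, List.append_assoc, List.singleton_append]
        exact List.perm_middle
      · simp [shape, incr]
    | succ i =>
      have hi2 : i ≤ Q2.length := by simpa using hi
      have hincr : incr (shape (r :: Q2)) (i + 1) = r.length :: incr (shape Q2) i := by
        simp [shape, incr]
      have hdec2 : ∀ j, (incr (shape Q2) i).getD (j + 1) 0 ≤ (incr (shape Q2) i).getD j 0 := by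
        intro j
        have := hdec (j + 1)
        rwa [hincr, List.getD_cons_succ, List.getD_cons_succ] at this
      obtain ⟨ihT, ihperm, ihshape⟩ := ih i k hT2 hallk_2 hi2 hdec2
      rw [addBox_cons_succ]
      have hlen' : ((addBox Q2 i k).getD 0 []).length ≤ r.length := by
        have := hdec 0
        rw [hincr, List.getD_cons_succ, List.getD_cons_zero] at this
        calc ((addBox Q2 i k).getD 0 []).length = (shape (addBox Q2 i k)).getD 0 0 :=
              (shape_getD _ _).symm
          _ = (incr (shape Q2) i).getD 0 0 := by rw [ihshape]
          _ ≤ r.length := this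
      refine ⟨tab_cons.2 ⟨hr_ne, hr_pw, hlen', ?_, ihT⟩, ?_, ?_⟩
      · intro q hq
        cases i with
        | zero =>
          rw [addBox_getD_zero] at hq ⊢
          rw [List.length_append, List.length_singleton] at hq
          rcases lt_or_ge q (Q2.getD 0 []).length with hqs | hqs
          · rw [getD_concat_lt _ _ hqs]
            exact hcol0 q hqs
          · have hqe : q = (Q2.getD 0 []).length := by omega
            subst hqe
            rw [getD_concat_len]
            have hqr : (Q2.getD 0 []).length < r.length := by
              rw [addBox_getD_zero, List.length_append, List.length_singleton] at hlen'
              omega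
            rw [List.getD_eq_getElem _ _ hqr]
            exact hallk_r _ (List.getElem_mem hqr)
        | succ i =>
          rw [addBox_getD_zero_pos _ _ _ (Nat.succ_pos i) hi2] at hq ⊢
          exact hcol0 q hq
      · simp only [List.flatten_cons]
        exact (List.Perm.append_left r ihperm).trans List.perm_middle
      · simp only [shape] at ihshape
        rw [hincr]
        simp [shape, ihshape]

lemma schenstedAux_spec : ∀ (xs : List ℕ) (P Q : List (List ℕ)) (m : ℕ),
    Tab P → Tab Q → shape P = shape Q → P.flatten.Nodup →
    (∀ a ∈ xs, a ∉ P.flatten) → xs.Nodup →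
    Q.flatten.Perm (List.range' 1 m) → P.flatten.length = m →
    Tab (schenstedAux (P, Q) (m + 1) xs).1 ∧ Tab (schenstedAux (P, Q) (m + 1) xs).2 ∧
    shape (schenstedAux (P, Q) (m + 1) xs).1 = shape (schenstedAux (P, Q) (m + 1) xs).2 ∧
    (schenstedAux (P, Q) (m + 1) xs).1.flatten.Perm (xs ++ P.flatten) ∧
    (schenstedAux (P, Q) (m + 1) xs).2.flatten.Perm (List.range' 1 (m + xs.length)) := by
  intro xs
  induction xs with
  | nil =>
    intro P Q m hTP hTQ hsh hnd _ _ hQperm hlen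
    exact ⟨hTP, hTQ, hsh, List.Perm.refl _, by simpa [schenstedAux] using hQperm⟩
  | cons x xs ih =>
    intro P Q m hTP hTQ hsh hnd hnotin hxsnd hQperm hlen
    have hx : x ∉ P.flatten := hnotin x (by simp)
    obtain ⟨iT, iperm, ile, ishape⟩ := insertTab_spec P x hTP hnd hx
    set p := insertTab P x with hp
    have hallk : ∀ a ∈ Q.flatten, a < m + 1 := by
      intro a ha
      have := hQperm.subset ha
      rw [List.mem_range'_1] at this
      omega
    have hiQ : p.2 ≤ Q.length := by
      have hPQ : P.length = Q.length := by
        have := congrArg List.length hsh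
        simpa [shape] using this
      omega
    have hdec : ∀ j, (incr (shape Q) p.2).getD (j + 1) 0 ≤ (incr (shape Q) p.2).getD j 0 := by
      intro j
      rw [← hsh, ← ishape, shape_getD, shape_getD]
      exact iT.2.1 j
    obtain ⟨qT, qperm, qshape⟩ := addBox_spec Q p.2 (m + 1) hTQ hallk hiQ hdec
    have hnd' : p.1.flatten.Nodup := iperm.nodup_iff.2 (List.nodup_cons.2 ⟨hx, hnd⟩)
    have hsh' : shape p.1 = shape (addBox Q p.2 (m + 1)) := by rw [ishape, qshape, hsh]
    have hQperm' : (addBox Q p.2 (m + 1)).flatten.Perm (List.range' 1 (m + 1)) := by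
      refine qperm.trans ?_
      have h1 : (List.range' 1 (m + 1)) = List.range' 1 m ++ [1 + 1 * m] := List.range'_concat
      rw [h1, show 1 + 1 * m = m + 1 from by omega]
      refine List.Perm.trans ?_ (List.perm_append_singleton (m + 1) (List.range' 1 m)).symm
      exact List.Perm.cons _ hQperm
    have hlen' : p.1.flatten.length = m + 1 := by
      rw [iperm.length_eq]
      simp [hlen]
    have hnotin' : ∀ a ∈ xs, a ∉ p.1.flatten := by
      intro a ha hmem
      rcases List.mem_cons.1 (iperm.subset hmem) with rfl | hmem'
      · exact (List.nodup_cons.1 hxsnd).1 ha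
      · exact hnotin a (List.mem_cons_of_mem _ ha) hmem'
    have step : schenstedAux (P, Q) (m + 1) (x :: xs) =
        schenstedAux (p.1, addBox Q p.2 (m + 1)) (m + 1 + 1) xs := by
      rw [hp]; simp [schenstedAux]
    rw [step]
    obtain ⟨c1, c2, c3, c4, c5⟩ := ih p.1 (addBox Q p.2 (m + 1)) (m + 1) iT qT hsh' hnd'
      hnotin' (List.nodup_cons.1 hxsnd).2 hQperm' hlen'
    refine ⟨c1, c2, c3, ?_, ?_⟩
    · refine c4.trans ?_
      have h2 : (xs ++ p.1.flatten).Perm (xs ++ (x :: P.flatten)) :=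
        List.Perm.append_left xs iperm
      refine h2.trans ?_
      simpa using (List.perm_middle : (xs ++ x :: P.flatten).Perm (x :: (xs ++ P.flatten)))
    · refine c5.trans ?_
      rw [show m + 1 + xs.length = m + (x :: xs).length from by simp; omega]

lemma tab_isSYT {L : List (List ℕ)} (h : Tab L)
    (hperm : L.flatten.Perm (List.range' 1 L.flatten.length)) : IsSYTList L :=
  ⟨h.1, h.2.1, fun r hr => List.isChain_iff_pairwise.2 (h.2.2.1 r hr), h.2.2.2, hperm⟩

lemma permWord_nodup {n : ℕ} (σ : Equiv.Perm (Fin n)) : (permWord σ).Nodup := by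
  rw [permWord, List.nodup_ofFn]
  intro a b hab
  simp only [Nat.add_right_cancel_iff] at hab
  exact σ.injective (Fin.val_injective hab)

lemma permWord_perm {n : ℕ} (σ : Equiv.Perm (Fin n)) :
    (permWord σ).Perm (List.range' 1 n) := by
  rw [List.perm_ext_iff_of_nodup (permWord_nodup σ) (List.nodup_range' (s := 1) (n := n))]
  intro a
  rw [permWord, List.mem_ofFn, List.mem_range'_1]
  constructor
  · rintro ⟨i, rfl⟩
    have : (σ i : ℕ) < n := (σ i).isLt
    show 1 ≤ (σ i : ℕ) + 1 ∧ (σ i : ℕ) + 1 < 1 + n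
    omega
  · rintro ⟨h1, h2⟩
    refine ⟨σ.symm ⟨a - 1, by omega⟩, ?_⟩
    show (σ (σ.symm ⟨a - 1, by omega⟩) : ℕ) + 1 = a
    rw [Equiv.apply_symm_apply]
    simp; omega


/-- **Well-definedness of Schensted insertion**: for every `σ ∈ 𝔖_n`, Schensted
insertion produces a pair `(T, U)` of standard Young tableaux of the same shape
`λ` with `|λ| = n`. -/
theorem schensted_well_defined (n : ℕ) (σ : Equiv.Perm (Fin n)) :
    IsSYTList (schensted (permWord σ)).1 ∧
    IsSYTList (schensted (permWord σ)).2 ∧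
    shape (schensted (permWord σ)).1 = shape (schensted (permWord σ)).2 ∧
    (shape (schensted (permWord σ)).1).sum = n := by
  have hw : (permWord σ).Nodup := permWord_nodup σ
  have hperm : (permWord σ).Perm (List.range' 1 n) := permWord_perm σ
  have hlenw : (permWord σ).length = n := by simp [permWord]
  obtain ⟨hT1, hT2, hsh, hp1, hp2⟩ := schenstedAux_spec (permWord σ) [] [] 0 tab_nil tab_nil
    rfl (by simp) (by simp) hw (by simp) (by simp)
  have hsch : schensted (permWord σ) = schenstedAux ([], []) (0 + 1) (permWord σ) := rfl
  rw [← hsch] at hT1 hT2 hsh hp1 hp2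
  have hp1' : (schensted (permWord σ)).1.flatten.Perm (List.range' 1 n) := by
    refine (hp1.trans ?_).trans hperm
    simp
  have hlen1 : (schensted (permWord σ)).1.flatten.length = n := by
    rw [hp1'.length_eq, List.length_range']
  have hp2' : (schensted (permWord σ)).2.flatten.Perm (List.range' 1 n) := by
    simpa [hlenw] using hp2
  have hlen2 : (schensted (permWord σ)).2.flatten.length = n := by
    rw [hp2'.length_eq, List.length_range']
  refine ⟨tab_isSYT hT1 (by rwa [hlen1]), tab_isSYT hT2 (by rwa [hlen2]), hsh, ?_⟩
  rw [shape, ← List.length_flatten, hlen1]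
end
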